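/- arXiv:math/9809074 — 16 statements merged into one kernel-verified Lean document; each statement's English description precedes it below -/
import Mathlib

section
/- Define sequences A, B by A_0 = 0, B_0 = 0, A_n = mex{A_i, B_i : 0 ≤ i < n}, B_n = s·A_n + t·n for positive integers s, t. Then the sets {A_n : n ≥ 1} and {B_n : n ≥ 1} are complementary with respect to the positive integers: their union is all of ℤ⁺ and their intersection is empty. -/
/-- The positive terms of the sequences `A` and `B`, where
`A n = mex {A i, B i : i < n}` and `B n = s * A n + t * n`, are complementary
with respect to the positive integers. -/
theorem stmt_0 (s t : ℕ) (hs : 0 < s) (ht : 0 < t) (A B : ℕ → ℕ)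
    (hA : ∀ n, A n = sInf {x : ℕ | ∀ i, i < n → x ≠ A i ∧ x ≠ B i})
    (hB : ∀ n, B n = s * A n + t * n) :
    ({m : ℕ | ∃ n, 1 ≤ n ∧ A n = m} ∪ {m : ℕ | ∃ n, 1 ≤ n ∧ B n = m} = {m : ℕ | 0 < m}) ∧
    ({m : ℕ | ∃ n, 1 ≤ n ∧ A n = m} ∩ {m : ℕ | ∃ n, 1 ≤ n ∧ B n = m} = ∅) := by
  have hSne : ∀ n, ({x : ℕ | ∀ i, i < n → x ≠ A i ∧ x ≠ B i}).Nonempty := by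
    intro n
    refine ⟨(Finset.range n).sup (fun i => max (A i) (B i)) + 1, fun i hi => ?_⟩
    have h1 : max (A i) (B i) ≤ (Finset.range n).sup (fun i => max (A i) (B i)) :=
      Finset.le_sup (f := fun i => max (A i) (B i)) (Finset.mem_range.mpr hi)
    have h2 := le_max_left (A i) (B i)
    have h3 := le_max_right (A i) (B i)
    omega
  have hmem : ∀ n, ∀ i, i < n → A n ≠ A i ∧ A n ≠ B i := by
    intro n
    have : A n ∈ {x : ℕ | ∀ i, i < n → x ≠ A i ∧ x ≠ B i} := by
      rw [hA n]; exact Nat.sInf_mem (hSne n)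
    exact this
  have hmono : ∀ i n, i ≤ n → A i ≤ A n := by
    intro i n h
    rw [hA i]
    exact Nat.sInf_le (fun j hj => hmem n j (lt_of_lt_of_le hj h))
  have hstrict : ∀ i n, i < n → A i < A n := by
    intro i n h
    have h1 := (hmem n i h).1
    have h2 := hmono i n h.le
    omega
  have hge : ∀ n, n ≤ A n := by
    intro n
    induction n with
    | zero => omega
    | succ k ih => have := hstrict k (k + 1) (by omega); omega
  have hA0 : A 0 = 0 := by
    rw [hA 0]
    exact le_antisymm (Nat.sInf_le (fun i hi => by omega)) (Nat.zero_le _)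
  have hB0 : B 0 = 0 := by rw [hB 0, hA0]; ring
  have hBA : ∀ n, 1 ≤ n → A n < B n := by
    intro n hn
    rw [hB n]
    have h1 := hge n
    nlinarith
  constructor
  · ext m
    simp only [Set.mem_union, Set.mem_setOf_eq]
    constructor
    · rintro (⟨n, hn, rfl⟩ | ⟨n, hn, rfl⟩)
      · have := hge n; omega
      · rw [hB n]; nlinarith
    · intro hm
      by_cases hc : A m = m
      · exact Or.inl ⟨m, hm, hc⟩
      · have hgem := hge m
        have hmn : A m > m := lt_of_le_of_ne hgem (Ne.symm hc)
        have hnm : m ∉ {x : ℕ | ∀ i, i < m → x ≠ A i ∧ x ≠ B i} := by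
          intro h
          have : A m ≤ m := by rw [hA m]; exact Nat.sInf_le h
          omega
        simp only [Set.mem_setOf_eq, not_forall] at hnm
        obtain ⟨i, hi, hor⟩ := hnm
        rcases not_and_or.mp hor with h | h
        · push_neg at h
          rcases Nat.eq_zero_or_pos i with rfl | hi1
          · rw [hA0] at h; omega
          · exact Or.inl ⟨i, hi1, h.symm⟩
        · push_neg at h
          rcases Nat.eq_zero_or_pos i with rfl | hi1
          · rw [hB0] at h; omega
          · exact Or.inr ⟨i, hi1, h.symm⟩
  · ext m
    simp only [Set.mem_inter_iff, Set.mem_setOf_eq, Set.mem_empty_iff_false, iff_false,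
      not_and, not_exists]
    rintro ⟨n, hn, rfl⟩ k hk hBk
    rcases lt_or_ge k n with h | h
    · exact (hmem n k h).2 hBk.symm
    · have h1 : A n ≤ A k := hmono n k h
      have h2 : A n < B k := by
        rw [hB k]
        nlinarith [hge k]
      omega
end

section
/- For every n ≥ 0, A_{n+1} − A_n ∈ {1, 2}, and consequently B_{n+1} − B_n ∈ {s + t, 2s + t}. -/
/-- For every `n`, `A (n+1) - A n ∈ {1, 2}`, and consequently
`B (n+1) - B n ∈ {s + t, 2 * s + t}`. -/
theorem stmt_3 (s t : ℕ) (hs : 0 < s) (ht : 0 < t) (A B : ℕ → ℕ)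
    (hA : ∀ n, A n = sInf {x : ℕ | ∀ i, i < n → x ≠ A i ∧ x ≠ B i})
    (hB : ∀ n, B n = s * A n + t * n) :
    ∀ n : ℕ, (A (n + 1) - A n = 1 ∨ A (n + 1) - A n = 2) ∧
      (B (n + 1) - B n = s + t ∨ B (n + 1) - B n = 2 * s + t) := by
  set S : ℕ → Set ℕ := fun n => {x : ℕ | ∀ i, i < n → x ≠ A i ∧ x ≠ B i} with hS
  have hne : ∀ n, (S n).Nonempty := by
    intro n
    refine ⟨(Finset.range n).sup (fun i => max (A i) (B i)) + 1, ?_⟩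
    intro i hi
    have h1 : max (A i) (B i) ≤ (Finset.range n).sup (fun i => max (A i) (B i)) :=
      Finset.le_sup (f := fun i => max (A i) (B i)) (Finset.mem_range.mpr hi)
    constructor <;> omega
  have hmem : ∀ n, A n ∈ S n := by
    intro n; rw [hA]; exact Nat.sInf_mem (hne n)
  have hmono1 : ∀ n, A n < A (n + 1) := by
    intro n
    have h1 : A (n + 1) ∈ S (n + 1) := hmem (n + 1)
    have h2 : A (n + 1) ∈ S n := fun i hi => h1 i (Nat.lt_succ_of_lt hi)
    have h3 : A n ≤ A (n + 1) := by rw [hA n]; exact Nat.sInf_le h2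
    have h4 : A (n + 1) ≠ A n := (h1 n (Nat.lt_succ_self n)).1
    omega
  have hmono : StrictMono A := strictMono_nat_of_lt_succ hmono1
  have hBstep : ∀ i j, i < j → B i + s + t ≤ B j := by
    intro i j hij
    have h1 : A i + 1 ≤ A j := hmono hij
    rw [hB i, hB j]
    nlinarith
  intro n
  have hAle : ∀ i, i ≤ n → A i ≤ A n := fun i hi => hmono.monotone hi
  have key : A (n + 1) ≤ A n + 2 := by
    have hor : A n + 1 ∈ S (n + 1) ∨ A n + 2 ∈ S (n + 1) := by
      by_contra hcon
      push_neg at hcon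
      obtain ⟨h1, h2⟩ := hcon
      simp only [hS, Set.mem_setOf_eq] at h1 h2
      push_neg at h1 h2
      obtain ⟨i, hi, hi2⟩ := h1
      obtain ⟨j, hj, hj2⟩ := h2
      have hAi : A i ≤ A n := hAle i (Nat.lt_succ_iff.mp hi)
      have hAj : A j ≤ A n := hAle j (Nat.lt_succ_iff.mp hj)
      have hBi : B i = A n + 1 := (hi2 (by omega)).symm
      have hBj : B j = A n + 2 := (hj2 (by omega)).symm
      rcases lt_trichotomy i j with h | h | h
      · have := hBstep i j h; omega
      · subst h; omega
      · have := hBstep j i h; omega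
    rw [hA (n + 1)]
    rcases hor with h | h
    · exact le_trans (Nat.sInf_le h) (by omega)
    · exact Nat.sInf_le h
  have h1 := hmono1 n
  have hstep : A (n + 1) - A n = 1 ∨ A (n + 1) - A n = 2 := by omega
  refine ⟨hstep, ?_⟩
  have hBd : B (n + 1) - B n = s * (A (n + 1) - A n) + t := by
    rw [hB n, hB (n + 1)]
    have : A n ≤ A (n + 1) := le_of_lt h1
    cases' Nat.exists_eq_add_of_le this with k hk
    rw [hk, Nat.add_sub_cancel_left]; ring_nf; omega
  rcases hstep with h | h <;> rw [hBd, h] <;> [left; right] <;> ring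
end

section
/- There exist indices n, m ≥ 0 with A_{n+1} − A_n = 1 and A_{m+1} − A_m = 2; i.e., both gap values 1 and 2 actually occur in the sequence A. -/
namespace Stmt4Aux

variable {s t : ℕ} {A B : ℕ → ℕ}

/-- `A n` satisfies the defining mex property. -/
lemma mem_S (hA : ∀ n, A n = sInf {x : ℕ | ∀ i, i < n → x ≠ A i ∧ x ≠ B i}) (n : ℕ) :
    ∀ i, i < n → A n ≠ A i ∧ A n ≠ B i := by
  have hne : {x : ℕ | ∀ i, i < n → x ≠ A i ∧ x ≠ B i}.Nonempty := by
    refine ⟨(Finset.range n).sup (fun i => max (A i) (B i)) + 1, fun i hi => ?_⟩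
    have h0 : max (A i) (B i) ≤ (Finset.range n).sup (fun i => max (A i) (B i)) :=
      Finset.le_sup (f := fun i => max (A i) (B i)) (Finset.mem_range.mpr hi)
    have h1 : A i ≤ max (A i) (B i) := le_max_left _ _
    have h2 : B i ≤ max (A i) (B i) := le_max_right _ _
    constructor <;> omega
  have h := Nat.sInf_mem hne
  rw [← hA n] at h
  exact h

lemma strictMonoA (hA : ∀ n, A n = sInf {x : ℕ | ∀ i, i < n → x ≠ A i ∧ x ≠ B i}) :
    StrictMono A := by
  apply strictMono_nat_of_lt_succ
  intro n
  have hmem := mem_S hA (n + 1)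
  have hle : A n ≤ A (n + 1) := by
    rw [hA n]
    exact Nat.sInf_le (fun i hi => hmem i (by omega))
  have hne : A (n + 1) ≠ A n := (hmem n (by omega)).1
  omega

lemma A_zero (hA : ∀ n, A n = sInf {x : ℕ | ∀ i, i < n → x ≠ A i ∧ x ≠ B i}) :
    A 0 = 0 := by
  rw [hA 0]
  apply Nat.sInf_eq_zero.mpr
  left
  intro i hi
  exact absurd hi (by omega)

lemma A_one (hA : ∀ n, A n = sInf {x : ℕ | ∀ i, i < n → x ≠ A i ∧ x ≠ B i})
    (hB : ∀ n, B n = s * A n + t * n) : A 1 = 1 := by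
  have h0 := A_zero hA
  have hB0 : B 0 = 0 := by rw [hB 0, h0]; ring
  have hle : A 1 ≤ 1 := by
    rw [hA 1]
    apply Nat.sInf_le
    intro i hi
    have : i = 0 := by omega
    subst this
    rw [h0, hB0]
    exact ⟨one_ne_zero, one_ne_zero⟩
  have := strictMonoA hA (show (0:ℕ) < 1 by omega)
  omega

/-- Every natural number appears as some `A i` or `B i`. -/
lemma compl (hA : ∀ n, A n = sInf {x : ℕ | ∀ i, i < n → x ≠ A i ∧ x ≠ B i}) (x : ℕ) :
    ∃ i, x = A i ∨ x = B i := by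
  by_contra h
  push_neg at h
  have hx : A (x + 1) ≤ x := by
    rw [hA (x + 1)]
    exact Nat.sInf_le (fun i _ => ⟨fun hc => (h i).1 hc, fun hc => (h i).2 hc⟩)
  have := (strictMonoA hA).le_apply (x := x + 1)
  omega

/-- Distinct positive-index B values differ by at least 2. -/
lemma B_gap (hA : ∀ n, A n = sInf {x : ℕ | ∀ i, i < n → x ≠ A i ∧ x ≠ B i})
    (hB : ∀ n, B n = s * A n + t * n) (hs : 0 < s) (ht : 0 < t)
    {j k : ℕ} (hjk : j < k) : B j + 2 ≤ B k := by
  have h1 : A j + 1 ≤ A k := strictMonoA hA hjk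
  have h2 : j + 1 ≤ k := hjk
  have hm1 : s * (A j + 1) ≤ s * A k := Nat.mul_le_mul_left s h1
  have hm2 : t * (j + 1) ≤ t * k := Nat.mul_le_mul_left t h2
  have e1 : s * (A j + 1) = s * A j + s := by ring
  have e2 : t * (j + 1) = t * j + t := by ring
  rw [hB j, hB k]
  omega

/-- Consecutive A gaps are at most 2. -/
lemma gap_le_two (hA : ∀ n, A n = sInf {x : ℕ | ∀ i, i < n → x ≠ A i ∧ x ≠ B i})
    (hB : ∀ n, B n = s * A n + t * n) (hs : 0 < s) (ht : 0 < t) (n : ℕ) :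
    A (n + 1) ≤ A n + 2 := by
  by_contra h
  push_neg at h
  have hmono := strictMonoA hA
  have hnotA : ∀ y, A n < y → y < A (n + 1) → ∀ i, y ≠ A i := by
    intro y hy1 hy2 i
    rcases le_or_gt i n with hi | hi
    · have := hmono.monotone hi
      omega
    · have := hmono.monotone (show n + 1 ≤ i by omega)
      omega
  have hB0 : B 0 = 0 := by rw [hB 0, A_zero hA]; ring
  have hy1 : ∃ j, A n + 1 = B j := by
    rcases compl hA (A n + 1) with ⟨i, hi | hi⟩
    · exact absurd hi (hnotA _ (by omega) (by omega) i)
    · exact ⟨i, hi⟩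
  have hy2 : ∃ j, A n + 2 = B j := by
    rcases compl hA (A n + 2) with ⟨i, hi | hi⟩
    · exact absurd hi (hnotA _ (by omega) (by omega) i)
    · exact ⟨i, hi⟩
  obtain ⟨j, hj⟩ := hy1
  obtain ⟨k, hk⟩ := hy2
  have hjk : j ≠ k := by intro hc; subst hc; omega
  rcases Nat.lt_or_ge j k with h' | h'
  · have := B_gap hA hB hs ht h'
    omega
  · have h'' : k < j := by omega
    have := B_gap hA hB hs ht h''
    omega

end Stmt4Aux

/-- Both gap values 1 and 2 actually occur in the sequence `A`. -/
theorem stmt_4 (s t : ℕ) (hs : 0 < s) (ht : 0 < t) (A B : ℕ → ℕ)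
    (hA : ∀ n, A n = sInf {x : ℕ | ∀ i, i < n → x ≠ A i ∧ x ≠ B i})
    (hB : ∀ n, B n = s * A n + t * n) :
    (∃ n : ℕ, A (n + 1) - A n = 1) ∧ (∃ m : ℕ, A (m + 1) - A m = 2) := by
  have h0 := Stmt4Aux.A_zero hA
  have h1 := Stmt4Aux.A_one hA hB
  have hmono := Stmt4Aux.strictMonoA hA
  constructor
  · refine ⟨0, ?_⟩
    norm_num [h0, h1]
  · -- `s + t = B 1` is never an A value
    have hB1 : B 1 = s + t := by rw [hB 1, h1]; ring
    have hst : 2 ≤ s + t := by omega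
    have hAne : ∀ k, A k ≠ s + t := by
      intro k
      rcases Nat.lt_or_ge k 2 with hk | hk
      · match k, hk with
        | 0, _ => omega
        | 1, _ => omega
      · have := (Stmt4Aux.mem_S hA k 1 (by omega)).2
        omega
    have hex : ∃ n, s + t < A n := by
      refine ⟨s + t, ?_⟩
      have := hmono.le_apply (x := s + t)
      have := hAne (s + t)
      omega
    have hN0 : Nat.find hex ≠ 0 := by
      intro hc
      have := Nat.find_spec hex
      rw [hc] at this
      omega
    set M := Nat.find hex - 1 with hMdef
    have hM1 : Nat.find hex = M + 1 := by omega
    have hsp : s + t < A (M + 1) := by rw [← hM1]; exact Nat.find_spec hex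
    have hmin : ¬ (s + t < A M) := Nat.find_min hex (by omega)
    have hAM : A M < s + t := by
      have := hAne M
      omega
    have hle := Stmt4Aux.gap_le_two hA hB hs ht M
    exact ⟨M, by omega⟩
end

section
/- If m < n then the move from (A_n, B_n) to (A_m, B_m), removing k = A_n − A_m from the first heap and l = B_n − B_m from the second, violates the game constraint: l ≥ s·k + t. Hence no legal type-II move (one with 0 < k ≤ l < s·k + t) leads from one P-position (A_n, B_n) to another (A_m, B_m). -/
/-- If `m < n` then, for `k = A n - A m` and `l = B n - B m`,
we have `l ≥ s * k + t`; hence the move from `(A n, B n)` to `(A m, B m)` is not a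
legal type-II move (which would require `l < s * k + t`). -/
theorem stmt_5 (s t : ℕ) (hs : 0 < s) (ht : 0 < t) (A B : ℕ → ℕ)
    (hA : ∀ n, A n = sInf {x : ℕ | ∀ i, i < n → x ≠ A i ∧ x ≠ B i})
    (hB : ∀ n, B n = s * A n + t * n) :
    ∀ m n : ℕ, m < n →
      s * (A n - A m) + t ≤ B n - B m ∧
      ¬ (0 < A n - A m ∧ A n - A m ≤ B n - B m ∧ B n - B m < s * (A n - A m) + t) := by
  intro m n hmn
  -- the candidate set for each n is nonempty
  have hne : ∀ n, {x : ℕ | ∀ i, i < n → x ≠ A i ∧ x ≠ B i}.Nonempty := by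
    intro n
    refine ⟨(Finset.range n).sup (fun i => max (A i) (B i)) + 1, ?_⟩
    intro i hi
    have h := Finset.le_sup (f := fun i => max (A i) (B i)) (Finset.mem_range.mpr hi)
    have hA' := (le_max_left (A i) (B i)).trans h
    have hB' := (le_max_right (A i) (B i)).trans h
    constructor <;> omega
  -- A is monotone
  have hmono : A m ≤ A n := by
    rw [hA m, hA n]
    have hmem := Nat.sInf_mem (hne n)
    apply Nat.sInf_le
    intro i hi
    exact hmem i (lt_trans hi hmn)
  have h1 : s * A n = s * (A n - A m) + s * A m := by
    rw [← Nat.mul_add, Nat.sub_add_cancel hmono]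
  have h2 : t * n ≥ t + t * m := by
    have : t * n = t * (n - m) + t * m := by
      rw [← Nat.mul_add, Nat.sub_add_cancel (le_of_lt hmn)]
    have h3 : t * 1 ≤ t * (n - m) := Nat.mul_le_mul_left t (by omega)
    omega
  rw [hB n, hB m]
  omega
end

section
/- Suppose x = A_n and s·A_n + t ≤ y < B_n. Let m = ⌊(y − s·A_n)/t⌋. Then: (a) m < n; (b) y > B_m; and (c) A_n − A_m ≤ y − B_m < s·(A_n − A_m) + t. In particular the move from (x, y) to (A_m, B_m) is a legal type-II move. -/
/-- If `x = A n` and `s * A n + t ≤ y < B n`, then for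
`m = ⌊(y - s * A n) / t⌋` we have `m < n`, `y > B m`, and
`A n - A m ≤ y - B m < s * (A n - A m) + t`; so `(x, y) → (A m, B m)` is a legal
type-II move. -/
theorem stmt_6 (s t : ℕ) (hs : 0 < s) (ht : 0 < t) (A B : ℕ → ℕ)
    (hA : ∀ n, A n = sInf {x : ℕ | ∀ i, i < n → x ≠ A i ∧ x ≠ B i})
    (hB : ∀ n, B n = s * A n + t * n) :
    ∀ n x y : ℕ, x = A n → s * A n + t ≤ y → y < B n →
      (y - s * A n) / t < n ∧
      B ((y - s * A n) / t) < y ∧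
      A n - A ((y - s * A n) / t) ≤ y - B ((y - s * A n) / t) ∧
      y - B ((y - s * A n) / t) < s * (A n - A ((y - s * A n) / t)) + t := by
  have hAmem : ∀ n, ∀ i, i < n → A n ≠ A i ∧ A n ≠ B i := by
    intro n
    have hne : {x : ℕ | ∀ i, i < n → x ≠ A i ∧ x ≠ B i}.Nonempty := by
      refine ⟨(Finset.range n).sup (fun i => max (A i) (B i)) + 1, ?_⟩
      intro i hi
      have h : max (A i) (B i) ≤ (Finset.range n).sup (fun i => max (A i) (B i)) :=
        Finset.le_sup (f := fun i => max (A i) (B i)) (Finset.mem_range.2 hi)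
      have h1 := le_max_left (A i) (B i)
      have h2 := le_max_right (A i) (B i)
      constructor <;> omega
    have hmem := Nat.sInf_mem hne
    rw [← hA n] at hmem
    exact hmem
  have hmono : ∀ m n, m < n → A m < A n := by
    intro m n hmn
    have h1 : A m ≤ A n := by
      rw [hA m]
      apply Nat.sInf_le
      intro i hi
      exact hAmem n i (lt_of_lt_of_le hi hmn.le)
    have h2 := (hAmem n m hmn).1
    omega
  intro n x y hx h1 h2
  set m := (y - s * A n) / t with hm
  have hP : s * A n ≤ y := le_trans (Nat.le_add_right _ _) h1
  have hsub1 : (y - s * A n) + s * A n = y := Nat.sub_add_cancel hP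
  have hdm : t * m + (y - s * A n) % t = y - s * A n := by
    rw [hm]; exact Nat.div_add_mod _ _
  have hmod := Nat.mod_lt (y - s * A n) ht
  have hmod0 : 0 ≤ (y - s * A n) % t := Nat.zero_le _
  have hBn := hB n
  have hdn : y - s * A n < t * n := by linarith
  have hmn : m < n := by
    rw [hm, Nat.div_lt_iff_lt_mul ht]
    linarith [Nat.mul_comm t n]
  have hAm := hmono m n hmn
  have hBm := hB m
  have hF : A n - A m + A m = A n := Nat.sub_add_cancel hAm.le
  have key : s * (A n - A m) + s * A m = s * A n := by
    rw [← Nat.mul_add, hF]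
  have hRF : A n - A m ≤ s * (A n - A m) := Nat.le_mul_of_pos_left _ hs
  have hBmy : B m < y := by linarith
  have hsub2 : (y - B m) + B m = y := Nat.sub_add_cancel hBmy.le
  refine ⟨hmn, hBmy, ?_, ?_⟩
  · linarith
  · linarith
end

section
/- The set of positions (A_n, B_n), n ≥ 0, is exactly the set of P-positions of the game: from any position (x, y) not of the form (A_n, B_n) (up to swapping coordinates), there is a legal move to some (A_m, B_m); and no legal move leads from (A_n, B_n) to (A_m, B_m). -/
section HeapAux
variable {s t : ℕ} {A B : ℕ → ℕ}

lemma heap_nonempty (n : ℕ) :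
    ({x : ℕ | ∀ i, i < n → x ≠ A i ∧ x ≠ B i}).Nonempty := by
  refine ⟨(Finset.range n).sup (fun i => max (A i) (B i)) + 1, fun i hi => ?_⟩
  have h := Finset.le_sup (f := fun i => max (A i) (B i)) (Finset.mem_range.2 hi)
  constructor <;> intro h' <;> simp [h'] at h <;> omega

lemma heap_mem (hA : ∀ n, A n = sInf {x : ℕ | ∀ i, i < n → x ≠ A i ∧ x ≠ B i})
    (n i : ℕ) (hi : i < n) : A n ≠ A i ∧ A n ≠ B i := by
  have := Nat.sInf_mem (heap_nonempty (A := A) (B := B) n)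
  rw [← hA n] at this
  exact this i hi

lemma heap_min (hA : ∀ n, A n = sInf {x : ℕ | ∀ i, i < n → x ≠ A i ∧ x ≠ B i})
    (n y : ℕ) (hy : y < A n) : ∃ i, i < n ∧ (y = A i ∨ y = B i) := by
  rw [hA n] at hy
  have := Nat.notMem_of_lt_sInf hy
  simp only [Set.mem_setOf_eq, not_forall] at this
  obtain ⟨i, hi, h⟩ := this
  refine ⟨i, hi, ?_⟩
  tauto

lemma heap_A_mono (hA : ∀ n, A n = sInf {x : ℕ | ∀ i, i < n → x ≠ A i ∧ x ≠ B i}) :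
    StrictMono A := by
  apply strictMono_nat_of_lt_succ
  intro n
  rcases lt_trichotomy (A (n+1)) (A n) with h | h | h
  · obtain ⟨i, hi, h'⟩ := heap_min hA n _ h
    have := heap_mem hA (n+1) i (by omega)
    tauto
  · exact absurd h (heap_mem hA (n+1) n (by omega)).1
  · exact h

lemma heap_A_zero (hA : ∀ n, A n = sInf {x : ℕ | ∀ i, i < n → x ≠ A i ∧ x ≠ B i}) :
    A 0 = 0 := by
  rw [hA 0]
  simp [Nat.sInf_eq_zero]

lemma heap_AB (hs : 0 < s) (hB : ∀ n, B n = s * A n + t * n) (n : ℕ) :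
    A n + t * n ≤ B n := by
  rw [hB n]
  have : A n ≤ s * A n := Nat.le_mul_of_pos_left _ hs
  omega

lemma heap_B_mono (hs : 0 < s) (ht : 0 < t)
    (hA : ∀ n, A n = sInf {x : ℕ | ∀ i, i < n → x ≠ A i ∧ x ≠ B i})
    (hB : ∀ n, B n = s * A n + t * n) : StrictMono B := by
  intro n m h
  rw [hB n, hB m]
  have h1 : A n < A m := heap_A_mono hA h
  have h2 : s * A n < s * A m := (Nat.mul_lt_mul_left hs).2 h1
  have h3 : t * n < t * m := (Nat.mul_lt_mul_left ht).2 h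
  omega

lemma heap_surj (hA : ∀ n, A n = sInf {x : ℕ | ∀ i, i < n → x ≠ A i ∧ x ≠ B i})
    (x : ℕ) : ∃ n, x = A n ∨ x = B n := by
  have hx : x < A (x + 1) :=
    lt_of_lt_of_le (Nat.lt_succ_self x) ((heap_A_mono hA).le_apply)
  obtain ⟨i, _, h⟩ := heap_min hA (x + 1) x hx
  exact ⟨i, h⟩

lemma heap_eq (hs : 0 < s) (ht : 0 < t)
    (hA : ∀ n, A n = sInf {x : ℕ | ∀ i, i < n → x ≠ A i ∧ x ≠ B i})
    (hB : ∀ n, B n = s * A n + t * n) {m n : ℕ} (h : A m = B n) : m = 0 ∧ n = 0 := by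
  rcases Nat.lt_or_ge n m with hlt | hge
  · exact absurd h (heap_mem hA m n hlt).2
  · -- m ≤ n
    have hn0 : n = 0 := by
      by_contra hn
      have h1 : A n + t * n ≤ B n := heap_AB hs hB n
      have h2 : t ≤ t * n := Nat.le_mul_of_pos_right _ (by omega)
      have h3 : A m ≤ A n := (heap_A_mono hA).monotone hge
      omega
    subst hn0
    have hB0 : B 0 = 0 := by rw [hB 0, heap_A_zero hA]; ring
    have hA0 : A m = A 0 := by rw [heap_A_zero hA]; omega
    exact ⟨(heap_A_mono hA).injective hA0, rfl⟩

end HeapAux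

/-- A legal move in the heap game with parameters `s`, `t`: either remove a positive
number of tokens from a single heap (type I), or remove `k` from one heap and `l` from
the other with `0 < k ≤ l < s * k + t` (type II). -/
def HeapMove (s t : ℕ) (p q : ℕ × ℕ) : Prop :=
  (q.2 = p.2 ∧ q.1 < p.1) ∨ (q.1 = p.1 ∧ q.2 < p.2) ∨
  (∃ k l : ℕ, 0 < k ∧ k ≤ l ∧ l < s * k + t ∧
    ((k ≤ p.1 ∧ l ≤ p.2 ∧ q.1 = p.1 - k ∧ q.2 = p.2 - l) ∨
     (l ≤ p.1 ∧ k ≤ p.2 ∧ q.1 = p.1 - l ∧ q.2 = p.2 - k)))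


section HeapMain
variable {s t : ℕ} {A B : ℕ → ℕ}

lemma heap_part2 (hs : 0 < s) (ht : 0 < t)
    (hA : ∀ n, A n = sInf {x : ℕ | ∀ i, i < n → x ≠ A i ∧ x ≠ B i})
    (hB : ∀ n, B n = s * A n + t * n) :
    ∀ n : ℕ, ∀ x' y' : ℕ, HeapMove s t (A n, B n) (x', y') →
      ¬ ∃ m, (x', y') = (A m, B m) ∨ (x', y') = (B m, A m) := by
  intro n x' y' hmv ⟨m, hm⟩
  have Ainj := (heap_A_mono hA).injective
  have Binj := (heap_B_mono hs ht hA hB).injective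
  have hA0 := heap_A_zero hA
  have hB0 : B 0 = 0 := by rw [hB 0, hA0]; ring
  simp only [HeapMove] at hmv
  have hm' : (x' = A m ∧ y' = B m) ∨ (x' = B m ∧ y' = A m) := by
    rcases hm with h | h <;> [left; right] <;>
      exact ⟨congrArg Prod.fst h, congrArg Prod.snd h⟩
  clear hm
  rcases hmv with ⟨h2, h1⟩ | ⟨h1, h2⟩ | ⟨k, l, hk, hkl, hl, hc⟩
  · 
    rcases hm' with ⟨hx, hy⟩ | ⟨hx, hy⟩
    · have : m = n := Binj (by rw [← hy, h2])
      subst this; omega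
    · obtain ⟨hm0, hn0⟩ := heap_eq hs ht hA hB (show A m = B n by rw [← hy, h2])
      subst hm0; subst hn0; omega
  · 
    rcases hm' with ⟨hx, hy⟩ | ⟨hx, hy⟩
    · have : m = n := Ainj (by rw [← hx, h1])
      subst this; omega
    · obtain ⟨hn0, hm0⟩ := heap_eq hs ht hA hB (show A n = B m by rw [← h1, hx])
      subst hm0; subst hn0; omega
  · -- type II move
    have hn : 0 < n := by
      rcases Nat.eq_zero_or_pos n with rfl | hn
      · rcases hc with ⟨h1, _, _, _⟩ | ⟨h1, _, _, _⟩ <;> omega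
      · exact hn
    have htn : t * m + t ≤ t * n → True := fun _ => trivial
    rcases hc with ⟨hk1, hl1, hq1, hq2⟩ | ⟨hl1, hk1, hq1, hq2⟩ <;>
      rcases hm' with ⟨hx, hy⟩ | ⟨hx, hy⟩
    · -- (A n - k, B n - l) = (A m, B m)
      have e3 : A m + k = A n := by omega
      have e4 : B m + l = B n := by omega
      have hmn : m < n := (heap_A_mono hA).lt_iff_lt.1 (by omega)
      have e1 := hB n; have e2 := hB m
      have e5 : s * A n = s * A m + s * k := by rw [← e3]; ring
      have h5 : t * m + t ≤ t * n := by
        calc t * m + t = t * (m + 1) := by ring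
        _ ≤ t * n := Nat.mul_le_mul_left t (by omega)
      linarith
    · -- (A n - k, B n - l) = (B m, A m)
      have e3 : B m + k = A n := by omega
      have e4 : A m + l = B n := by omega
      have hAmBm : A m + t * m ≤ B m := heap_AB hs hB m
      have hmn : m < n := (heap_A_mono hA).lt_iff_lt.1 (by omega)
      have e1 := hB n
      have e5 : s * A n = s * B m + s * k := by rw [← e3]; ring
      have sB : B m ≤ s * B m := Nat.le_mul_of_pos_left _ hs
      have tn : t ≤ t * n := Nat.le_mul_of_pos_right _ hn
      have k1 : A m + l = s * B m + s * k + t * n := by rw [e4, e1, e5]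
      have k2 : A m ≤ s * B m := le_trans (by omega : A m ≤ B m) sB
      linarith [k1, k2, tn, hl]
    · -- (A n - l, B n - k) = (A m, B B m) fixed
      have e3 : A m + l = A n := by omega
      have e4 : B m + k = B n := by omega
      have hmn : m < n := (heap_A_mono hA).lt_iff_lt.1 (by omega)
      have e1 := hB n; have e2 := hB m
      have e5 : s * A n = s * A m + s * l := by rw [← e3]; ring
      have h5 : t * m + t ≤ t * n := by
        calc t * m + t = t * (m + 1) := by ring
        _ ≤ t * n := Nat.mul_le_mul_left t (by omega)
      have sl : l ≤ s * l := Nat.le_mul_of_pos_left _ hs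
      linarith
    · -- (A n - l, B n - k) = (B m, A m)
      have e3 : B m + l = A n := by omega
      have e4 : A m + k = B n := by omega
      have hAmBm : A m + t * m ≤ B m := heap_AB hs hB m
      have hAnBn : A n + t * n ≤ B n := heap_AB hs hB n
      have tn : t ≤ t * n := Nat.le_mul_of_pos_right _ hn
      omega

end HeapMain

section HeapPart1
variable {s t : ℕ} {A B : ℕ → ℕ}

lemma heapMove_swap {x y x' y' : ℕ} (h : HeapMove s t (x, y) (x', y')) :
    HeapMove s t (y, x) (y', x') := by
  unfold HeapMove at h ⊢
  rcases h with ⟨h1, h2⟩ | ⟨h1, h2⟩ | ⟨k, l, hk, hkl, hl, hc⟩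
  · exact Or.inr (Or.inl ⟨h1, h2⟩)
  · exact Or.inl ⟨h1, h2⟩
  · exact Or.inr (Or.inr ⟨k, l, hk, hkl, hl, by tauto⟩)

lemma heap_part1 (hs : 0 < s) (ht : 0 < t)
    (hA : ∀ n, A n = sInf {x : ℕ | ∀ i, i < n → x ≠ A i ∧ x ≠ B i})
    (hB : ∀ n, B n = s * A n + t * n)
    (x y : ℕ) (hxy : x ≤ y)
    (hP : ¬ ∃ n, (x, y) = (A n, B n) ∨ (x, y) = (B n, A n)) :
    ∃ x' y' : ℕ, HeapMove s t (x, y) (x', y') ∧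
      ∃ m, (x', y') = (A m, B m) ∨ (x', y') = (B m, A m) := by
  obtain ⟨m, hm⟩ := heap_surj hA x
  obtain ⟨s', rfl⟩ : ∃ s', s = s' + 1 := ⟨s - 1, by omega⟩
  rcases hm with hmA | hmB
  · -- x = A m
    rcases lt_trichotomy y (B m) with hy | hy | hy
    · -- y < B m : type II move
      set f : ℕ → ℕ := fun n => s' * A n + t * n with hf_def
      have hf : ∀ n, A n + f n = B n := by
        intro n; rw [hB n]; simp only [hf_def]; ring
      have fmono : Monotone f := by
        intro a b hab
        exact Nat.add_le_add
          (Nat.mul_le_mul_left _ ((heap_A_mono hA).monotone hab))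
          (Nat.mul_le_mul_left _ hab)
      have hd : y - x < f m := by have := hf m; omega
      have hex : ∃ n, y - x < f n := ⟨m, hd⟩
      have hfind : 0 < Nat.find hex := by
        rcases Nat.eq_zero_or_pos (Nat.find hex) with h0 | h
        · have := Nat.find_spec hex
          rw [h0] at this
          have : y - x < f 0 := this
          have hf0 : f 0 = 0 := by simp [hf_def, heap_A_zero hA]
          omega
        · exact h
      set p := Nat.find hex - 1 with hp_def
      have h1 : ¬ (y - x < f p) := Nat.find_min hex (by omega)
      have h2 : y - x < f (p + 1) := by
        have : p + 1 = Nat.find hex := by omega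
        rw [this]; exact Nat.find_spec hex
      have hpm : p < m := by
        by_contra hc
        exact h1 (lt_of_lt_of_le hd (fmono (by omega)))
      have hAp : A p < x := hmA ▸ heap_A_mono hA hpm
      have hA1 : A (p + 1) ≤ x := hmA ▸ (heap_A_mono hA).monotone (by omega)
      have hBp : B p < y := by have := hf p; omega
      refine ⟨A p, B p, ?_, p, Or.inl rfl⟩
      refine Or.inr (Or.inr ⟨x - A p, y - B p, by omega, ?_, ?_, Or.inl ⟨by omega, by omega, by omega, by omega⟩⟩)
      · -- k ≤ l
        have := hf p; omega
      · -- l < s * k + t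
        have key : y < (s' + 1) * x + t * p + t := by
          have hmul : s' * A (p + 1) ≤ s' * x := Nat.mul_le_mul_left _ hA1
          have hfp1 : f (p + 1) = s' * A (p + 1) + t * (p + 1) := rfl
          have htp : t * (p + 1) = t * p + t := by ring
          have h2' : y < x + f (p + 1) := by omega
          have h2'' : y < x + (s' * A (p + 1) + t * (p + 1)) := hfp1 ▸ h2'
          have e : (s' + 1) * x = s' * x + x := by ring
          linarith [h2'', hmul, htp, e]
        have hdist : (s' + 1) * x = (s' + 1) * (x - A p) + (s' + 1) * A p := by
          rw [← Nat.mul_add, Nat.sub_add_cancel hAp.le]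
        have hBpe : B p = (s' + 1) * A p + t * p := hB p
        rw [Nat.sub_lt_iff_lt_add hBp.le]
        linarith [key, hdist, hBpe]
    · exact absurd ⟨m, Or.inl (by rw [hmA, hy])⟩ hP
    · -- y > B m : type I move on second heap
      exact ⟨x, B m, Or.inr (Or.inl ⟨rfl, hy⟩), m, Or.inl (by rw [hmA])⟩
  · -- x = B m
    have hAm : A m ≤ x := by
      have := heap_AB (t := t) (by omega) hB m; omega
    have hAmy : A m < y := by
      rcases lt_or_eq_of_le (le_trans hAm hxy) with h | h
      · exact h
      · exfalso
        have hx : x = A m := by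
          have := heap_AB (t := t) (by omega) hB m; omega
        exact hP ⟨m, Or.inr (by rw [hmB, ← h])⟩
    exact ⟨x, A m, Or.inr (Or.inl ⟨rfl, hAmy⟩), m, Or.inr (by rw [hmB])⟩

end HeapPart1

/-- the positions `(A n, B n)` (up to swapping coordinates) are exactly
the P-positions: from any position not of this form there is a legal move to such a
position, and no legal move leads from one such position to another. -/
theorem stmt_7 (s t : ℕ) (hs : 0 < s) (ht : 0 < t) (A B : ℕ → ℕ)
    (hA : ∀ n, A n = sInf {x : ℕ | ∀ i, i < n → x ≠ A i ∧ x ≠ B i})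
    (hB : ∀ n, B n = s * A n + t * n) :
    (∀ x y : ℕ, (¬ ∃ n, (x, y) = (A n, B n) ∨ (x, y) = (B n, A n)) →
      ∃ x' y' : ℕ, HeapMove s t (x, y) (x', y') ∧
        ∃ m, (x', y') = (A m, B m) ∨ (x', y') = (B m, A m)) ∧
    (∀ n : ℕ, ∀ x' y' : ℕ, HeapMove s t (A n, B n) (x', y') →
      ¬ ∃ m, (x', y') = (A m, B m) ∨ (x', y') = (B m, A m)) := by
  constructor
  · intro x y hP
    rcases le_or_gt x y with hxy | hxy
    · exact heap_part1 hs ht hA hB x y hxy hP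
    · have hP' : ¬ ∃ n, (y, x) = (A n, B n) ∨ (y, x) = (B n, A n) := by
        rintro ⟨n, h | h⟩
        · exact hP ⟨n, Or.inr (by rw [Prod.ext_iff] at h ⊢; exact ⟨h.2, h.1⟩)⟩
        · exact hP ⟨n, Or.inl (by rw [Prod.ext_iff] at h ⊢; exact ⟨h.2, h.1⟩)⟩
      obtain ⟨x', y', hmv, m, hm⟩ := heap_part1 hs ht hA hB y x hxy.le hP'
      refine ⟨y', x', heapMove_swap hmv, m, ?_⟩
      rcases hm with h | h
      · exact Or.inr (by rw [Prod.ext_iff] at h ⊢; exact ⟨h.2, h.1⟩)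
      · exact Or.inl (by rw [Prod.ext_iff] at h ⊢; exact ⟨h.2, h.1⟩)
  · exact heap_part2 hs ht hA hB
end

section
/- For a nondecreasing finite integer sequence M = a_1, ..., a_r, define d_lower(M) = max over 1 ≤ i < k ≤ r of (a_k − a_{k−i} − 1)/i and d_upper(M) = min over 1 ≤ i < k ≤ r of (a_k − a_{k−i} + 1)/i. If there exist reals α, γ with a_k = ⌊kα + γ⌋ for all 1 ≤ k ≤ r, then d_lower(M) < d_upper(M). -/
/-- If the nondecreasing integer sequence `a 1, …, a r` is spectral,
i.e. `a k = ⌊k * α + γ⌋` for all `1 ≤ k ≤ r`, then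
`d_lower (M) < d_upper (M)`: every quotient `(a k - a (k - i) - 1) / i` with
`1 ≤ i < k ≤ r` is strictly less than every quotient `(a k' - a (k' - i') + 1) / i'`
with `1 ≤ i' < k' ≤ r`. -/
theorem stmt_9 (r : ℕ) (a : ℕ → ℤ)
    (hmono : ∀ k, 1 ≤ k → k < r → a k ≤ a (k + 1))
    (α γ : ℝ) (hspec : ∀ k, 1 ≤ k → k ≤ r → a k = ⌊(k : ℝ) * α + γ⌋) :
    ∀ i k i' k' : ℕ, 1 ≤ i → i < k → k ≤ r → 1 ≤ i' → i' < k' → k' ≤ r →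
      ((a k : ℝ) - a (k - i) - 1) / i < ((a k' : ℝ) - a (k' - i') + 1) / i' := by
  intro i k i' k' hi hik hkr hi' hik' hk'r
  have h1 : ((a k : ℝ) - a (k - i) - 1) / i < α := by
    rw [div_lt_iff₀ (by exact_mod_cast Nat.lt_of_lt_of_le Nat.zero_lt_one hi : (0:ℝ) < i)]
    have hk := hspec k (by omega) hkr
    have hki := hspec (k - i) (by omega) (by omega)
    have hc : ((k - i : ℕ) : ℝ) = (k : ℝ) - i := by
      rw [Nat.cast_sub hik.le]
    have hA : (a k : ℝ) ≤ (k : ℝ) * α + γ := by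
      rw [hk]; push_cast; exact Int.floor_le _
    have hB : ((k : ℝ) - i) * α + γ - 1 < (a (k - i) : ℝ) := by
      rw [hki]; push_cast [hc]; exact Int.sub_one_lt_floor _
    nlinarith [hA, hB]
  have h2 : α < ((a k' : ℝ) - a (k' - i') + 1) / i' := by
    rw [lt_div_iff₀ (by exact_mod_cast Nat.lt_of_lt_of_le Nat.zero_lt_one hi' : (0:ℝ) < i')]
    have hk := hspec k' (by omega) hk'r
    have hki := hspec (k' - i') (by omega) (by omega)
    have hc : ((k' - i' : ℕ) : ℝ) = (k' : ℝ) - i' := by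
      rw [Nat.cast_sub hik'.le]
    have hA : (k' : ℝ) * α + γ - 1 < (a k' : ℝ) := by
      rw [hk]; push_cast; exact Int.sub_one_lt_floor _
    have hB : (a (k' - i') : ℝ) ≤ ((k' : ℝ) - i') * α + γ := by
      rw [hki]; push_cast [hc]; exact Int.floor_le _
    nlinarith [hA, hB]
  exact h1.trans h2
end

section
/- If s ≥ 2 and t ≥ 1, then there exist no real numbers β, δ such that B_n = ⌊nβ + δ⌋ for all n ≥ 0, where B_n = s·A_n + t·n and A_n = mex{A_i, B_i : i < n}. -/
/-- For `s ≥ 2`, `t ≥ 1`, there are no reals `β`, `δ` with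
`B n = ⌊n * β + δ⌋` for all `n ≥ 0`. -/
theorem stmt_10 (s t : ℕ) (hs : 2 ≤ s) (ht : 1 ≤ t) (A B : ℕ → ℕ)
    (hA : ∀ n, A n = sInf {x : ℕ | ∀ i, i < n → x ≠ A i ∧ x ≠ B i})
    (hB : ∀ n, B n = s * A n + t * n) :
    ¬ ∃ β δ : ℝ, ∀ n : ℕ, (B n : ℤ) = ⌊(n : ℝ) * β + δ⌋ := by
  rintro ⟨β, δ, hβ⟩
  set K := s + t with hK
  have hK3 : 3 ≤ K := by omega
  -- A n is an element of the defining set (mex is not equal to earlier values)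
  have hle : ∀ n x, (∀ i, i < n → x ≠ A i ∧ x ≠ B i) → A n ≤ x := by
    intro n x hx
    rw [hA n]
    exact Nat.sInf_le hx
  have hmem : ∀ n, ∀ i, i < n → A n ≠ A i ∧ A n ≠ B i := by
    intro n
    have hne : {x : ℕ | ∀ i, i < n → x ≠ A i ∧ x ≠ B i}.Nonempty := by
      refine ⟨(Finset.range n).sup (fun i => max (A i) (B i)) + 1, ?_⟩
      intro i hi
      have h1 : max (A i) (B i) ≤ (Finset.range n).sup (fun i => max (A i) (B i)) :=
        Finset.le_sup (f := fun i => max (A i) (B i)) (Finset.mem_range.2 hi)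
      have h2 : A i ≤ max (A i) (B i) := le_max_left _ _
      have h3 : B i ≤ max (A i) (B i) := le_max_right _ _
      omega
    have := Nat.sInf_mem hne
    rw [← hA n] at this
    exact this
  -- A n = n for n < K
  have hlin : ∀ n, n < K → A n = n := by
    intro n
    induction n using Nat.strong_induction_on with
    | _ n IH =>
      intro hnK
      have hub : A n ≤ n := by
        apply hle
        intro i hi
        have hAi : A i = i := IH i hi (lt_trans hi hnK)
        constructor
        · omega
        · rw [hB i, hAi]
          rcases Nat.eq_zero_or_pos i with h0 | h1
          · subst h0; omega
          · have hs' : s * 1 ≤ s * i := Nat.mul_le_mul_left s h1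
            have ht' : t * 1 ≤ t * i := Nat.mul_le_mul_left t h1
            omega
      rcases lt_or_eq_of_le hub with hlt | heq
      · exfalso
        have hAA : A (A n) = A n := IH (A n) hlt (lt_trans hlt hnK)
        have := (hmem n (A n) hlt).1
        exact this hAA.symm
      · exact heq
  have hAK : A K = K + 1 := by
    have hub : A K ≤ K + 1 := by
      apply hle
      intro i hi
      have hAi : A i = i := hlin i hi
      constructor
      · omega
      · rw [hB i, hAi]
        rcases Nat.lt_or_ge i 2 with h2 | h2
        · interval_cases i <;> omega
        · have hs' : s * 2 ≤ s * i := Nat.mul_le_mul_left s h2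
          have ht' : t * 2 ≤ t * i := Nat.mul_le_mul_left t h2
          omega
    have hlb : K + 1 ≤ A K := by
      by_contra h
      push_neg at h
      rcases Nat.lt_or_ge (A K) K with hlt | hge
      · have hAA : A (A K) = A K := hlin (A K) hlt
        exact (hmem K (A K) hlt).1 hAA.symm
      · have hAKK : A K = K := by omega
        have h1 : A 1 = 1 := hlin 1 (by omega)
        have hB1 : B 1 = K := by rw [hB 1, h1]; omega
        have := (hmem K 1 (by omega)).2
        rw [hB1, hAKK] at this
        exact this rfl
    omega
  -- compute B values
  have hB0 : B 0 = 0 := by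
    have hA0 : A 0 = 0 := hlin 0 (by omega)
    rw [hB 0, hA0]; omega
  have hB1 : B 1 = K := by
    have h1 : A 1 = 1 := hlin 1 (by omega)
    rw [hB 1, h1]; omega
  have hBK1 : B (K - 1) = (s + t) * (K - 1) := by
    have h1 : A (K - 1) = K - 1 := hlin (K - 1) (by omega)
    rw [hB (K - 1), h1]; ring
  have hBK : B K = s * (K + 1) + t * K := by rw [hB K, hAK]
  -- floor difference bounds
  have key : ∀ m : ℕ, ((B (m + 1) : ℝ) - (B m : ℝ)) < β + 1 ∧
      β - 1 < ((B (m + 1) : ℝ) - (B m : ℝ)) := by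
    intro m
    have e1 : (B (m + 1) : ℝ) = (⌊((m + 1 : ℕ) : ℝ) * β + δ⌋ : ℤ) := by
      exact_mod_cast congrArg (fun z : ℤ => (z : ℝ)) (hβ (m + 1))
    have e0 : (B m : ℝ) = (⌊((m : ℕ) : ℝ) * β + δ⌋ : ℤ) := by
      exact_mod_cast congrArg (fun z : ℤ => (z : ℝ)) (hβ m)
    have hx : ((m + 1 : ℕ) : ℝ) * β + δ = ((m : ℕ) : ℝ) * β + δ + β := by
      push_cast; ring
    constructor
    · rw [e1, e0, hx]
      have h1 : ((⌊((m : ℕ) : ℝ) * β + δ + β⌋ : ℤ) : ℝ) ≤ ((m : ℕ) : ℝ) * β + δ + β :=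
        Int.floor_le _
      have h2 : ((m : ℕ) : ℝ) * β + δ < (⌊((m : ℕ) : ℝ) * β + δ⌋ : ℤ) + 1 :=
        Int.lt_floor_add_one _
      linarith
    · rw [e1, e0, hx]
      have h1 : ((m : ℕ) : ℝ) * β + δ + β < (⌊((m : ℕ) : ℝ) * β + δ + β⌋ : ℤ) + 1 :=
        Int.lt_floor_add_one _
      have h2 : ((⌊((m : ℕ) : ℝ) * β + δ⌋ : ℤ) : ℝ) ≤ ((m : ℕ) : ℝ) * β + δ :=
        Int.floor_le _
      linarith
  have d1 := (key 0).2
  have d2 := (key (K - 1)).1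
  have hKm : K - 1 + 1 = K := by omega
  rw [hKm] at d2
  -- numeric values of the differences
  have v1 : (B 1 : ℝ) - (B 0 : ℝ) = (K : ℝ) := by
    rw [hB0, hB1]; push_cast; ring
  have v2 : (B K : ℝ) - (B (K - 1) : ℝ) = (2 * s + t : ℕ) := by
    have : B K = B (K - 1) + (2 * s + t) := by
      rw [hBK, hBK1]
      have : (s + t) * (K - 1) + (s + t) = (s + t) * K := by
        have : K - 1 + 1 = K := by omega
        nlinarith [this]
      nlinarith [Nat.sub_add_cancel (show 1 ≤ K by omega)]
    rw [this]; push_cast; ring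
  rw [v1] at d1
  rw [v2] at d2
  have hcast1 : (K : ℝ) = (s : ℝ) + t := by push_cast [hK]; ring
  have hcast2 : ((2 * s + t : ℕ) : ℝ) = 2 * (s : ℝ) + t := by push_cast; ring
  rw [hcast1] at d1
  rw [hcast2] at d2
  have hs2 : (2 : ℝ) ≤ (s : ℝ) := by exact_mod_cast hs
  linarith
end

section
/- If s ≥ 2 and t ≥ 1, then there exist no real numbers α, γ such that A_n = ⌊nα + γ⌋ for all n ≥ 0, where A_n = mex{A_i, B_i : i < n} and B_n = s·A_n + t·n. -/
/-!
Every natural number is exactly one of the values `A i` or `B j` with `j ≥ 1`, so counting the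
numbers below `A n` traps `A n` between `B (A n - n)` and `B (A n - n + 1)`. If `A n = ⌊n α + γ⌋`,
comparing growth rates forces `(α - 1) (s α + t) = α`. Then `s α` is a root of a monic integer
quadratic lying strictly between `s` and `s + 1`, so `α` is irrational, and `1 < α < 2`.

Consecutive values of `A` differ by at most 2, and at a jump of 2 the skipped value `A n + 1`
must be `B j = s A j + t j` with `j = A n + 1 - n`. If moreover `n ≡ 1 (mod s)` and `s ∣ A n`,
then `s ∣ j`, hence `s ∣ A n + 1`, which is absurd. Since `α` is irrational, the fractional parts
of `(α + γ) / s + k α` are dense, and a suitable `k` gives `n = s k + 1` with exactly these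
properties.
-/

open Finset Polynomial

theorem Irrational.exists_nat_int_add_mul_sub_mem_Ioo {α : ℝ} (hα : Irrational α) (x₀ : ℝ)
    {a b : ℝ} (hab : a < b) : ∃ (k : ℕ) (m : ℤ), x₀ + k * α - m ∈ Set.Ioo a b := by
  have hdense : DenseRange (fun k : ℕ ↦ k • (α : UnitAddCircle)) :=
    denseRange_zsmul_iff_nsmul.mp (AddCircle.denseRange_zsmul_coe_iff.mpr (by simpa using hα))
  obtain ⟨k, y, hy, hky⟩ := hdense.exists_mem_open
    (QuotientAddGroup.isOpenMap_coe (Set.Ioo (a - x₀) (b - x₀)) isOpen_Ioo)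
    ((Set.nonempty_Ioo.mpr (by linarith)).image _)
  obtain ⟨m, hm⟩ := (AddCircle.coe_eq_zero_iff (p := (1 : ℝ))).mp
    (show ((k * α - y : ℝ) : UnitAddCircle) = 0 by simp [hky])
  refine ⟨k, m, ?_⟩
  simp only [zsmul_eq_mul, mul_one] at hm
  rw [hm]
  constructor <;> linarith [hy.1, hy.2]

theorem Irrational.exists_modEq_one_dvd_floor_add_two_le {α : ℝ} (hα : Irrational α)
    (h₁ : 1 < α) (h₂ : α < 2) (γ : ℝ) {s : ℕ} (hs : 0 < s) :
    ∃ n : ℕ, n ≡ 1 [MOD s] ∧ (s : ℤ) ∣ ⌊(n : ℝ) * α + γ⌋ ∧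
      ⌊(n : ℝ) * α + γ⌋ + 2 ≤ ⌊((n + 1 : ℕ) : ℝ) * α + γ⌋ := by
  have hs' : (0 : ℝ) < s := by exact_mod_cast hs
  obtain ⟨k, m, hlo, hhi⟩ := hα.exists_nat_int_add_mul_sub_mem_Ioo ((α + γ) / s)
    (div_lt_div_of_pos_right (by linarith) hs' : (2 - α) / s < 1 / s)
  rw [div_lt_iff₀ hs'] at hlo
  rw [lt_div_iff₀ hs'] at hhi
  -- with `r := (α + γ) / s + k * α - m`, `s * r ∈ (2 - α, 1)` yields both floor claims
  have hn : ((s * k + 1 : ℕ) : ℝ) * α + γ = s * m + ((α + γ) / s + k * α - m) * s := by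
    push_cast; field_simp; ring
  have hfloor : ⌊((s * k + 1 : ℕ) : ℝ) * α + γ⌋ = s * m := by
    rw [Int.floor_eq_iff, hn]; push_cast; constructor <;> linarith
  refine ⟨s * k + 1, ?_, ⟨m, hfloor⟩, ?_⟩
  · exact ((Nat.modEq_iff_dvd' (by omega)).mpr ⟨k, by omega⟩).symm
  · rw [hfloor, Int.le_floor, Nat.cast_succ, add_mul, one_mul, add_right_comm, hn]
    push_cast
    linarith

theorem irrational_of_sq_eq_of_mem_Ioo {x : ℝ} {a b m : ℤ} (hx : x ^ 2 = a * x + b)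
    (hm : x ∈ Set.Ioo (m : ℝ) (m + 1)) : Irrational x := by
  rintro ⟨q, rfl⟩
  have hq : q ^ 2 = a * q + b := by exact_mod_cast hx
  have hmonic : (X ^ 2 - C a * X - C b : ℤ[X]).Monic := by monicity!
  obtain ⟨z, rfl, -⟩ := exists_integer_of_is_root_of_monic hmonic (r := q) (by simp [hq])
  have h₁ : (m : ℝ) < z := by simpa using hm.1
  have h₂ : (z : ℝ) < m + 1 := by simpa using hm.2
  norm_cast at h₁ h₂
  omega

theorem one_lt_and_mul_lt_add_one_of_sub_one_mul_eq {s t α : ℝ} (hs : 0 < s) (ht : 0 < t)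
    (hα : 0 < α) (h : (α - 1) * (s * α + t) = α) : 1 < α ∧ s * α < s + 1 := by
  constructor <;> by_contra! h' <;> nlinarith [mul_pos hs hα]

theorem eq_zero_of_forall_abs_natCast_mul_le {c K : ℝ} (h : ∀ n : ℕ, |n * c| ≤ K) : c = 0 := by
  by_contra hc
  obtain ⟨n, hn⟩ := exists_nat_gt (K / |c|)
  have := h n
  rw [abs_mul, Nat.abs_cast, div_lt_iff₀ (abs_pos.mpr hc)] at *
  linarith

section Mex

variable {s t : ℕ} {A B : ℕ → ℕ}
  (hA : ∀ n, A n = sInf {x : ℕ | ∀ i, i < n → x ≠ A i ∧ x ≠ B i})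
include hA

theorem A_ne_of_lt {n i : ℕ} (hi : i < n) : A n ≠ A i ∧ A n ≠ B i := by
  have hne : {x : ℕ | ∀ i, i < n → x ≠ A i ∧ x ≠ B i}.Nonempty := by
    refine ⟨∑ i ∈ range n, (A i + B i) + 1, fun i hi ↦ ?_⟩
    have := single_le_sum (f := fun i ↦ A i + B i) (fun _ _ ↦ Nat.zero_le _)
      (mem_range.mpr hi)
    constructor <;> omega
  exact hA n ▸ Nat.sInf_mem hne i hi

theorem exists_lt_eq_of_lt_A {n y : ℕ} (hy : y < A n) : ∃ i < n, y = A i ∨ y = B i := by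
  have := Nat.notMem_of_lt_sInf (hA n ▸ hy)
  simpa only [Set.mem_ofPred_eq, not_forall, not_and_or, not_not, exists_prop] using this

theorem A_zero : A 0 = 0 :=
  Nat.eq_zero_of_le_zero (hA 0 ▸ Nat.sInf_le fun _ hi ↦ absurd hi (Nat.not_lt_zero _))

theorem A_strictMono : StrictMono A := by
  refine strictMono_nat_of_lt_succ fun n ↦
    lt_of_le_of_ne ?_ (A_ne_of_lt hA n.lt_succ_self).1.symm
  rw [hA n]
  exact Nat.sInf_le fun i hi ↦ A_ne_of_lt hA (hi.trans n.lt_succ_self)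

theorem le_A (n : ℕ) : n ≤ A n := (A_strictMono hA).le_apply

theorem exists_B_eq_of_A_lt_of_lt_A_succ {n y : ℕ} (h₁ : A n < y) (h₂ : y < A (n + 1)) :
    ∃ j, B j = y := by
  obtain ⟨i, hi, rfl | rfl⟩ := exists_lt_eq_of_lt_A hA h₂
  · exact absurd ((A_strictMono hA).monotone (Nat.le_of_lt_succ hi)) h₁.not_ge
  · exact ⟨i, rfl⟩

variable (hB : ∀ n, B n = s * A n + t * n)
include hB

theorem B_zero : B 0 = 0 := by simp [hB, A_zero hA]

variable (hs : 2 ≤ s)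
include hs

theorem B_add_two_le_of_lt {i j : ℕ} (hij : i < j) : B i + 2 ≤ B j := by
  have := A_strictMono hA hij
  rw [hB, hB]
  nlinarith

theorem B_strictMono : StrictMono B := fun _ _ hij ↦
  (Nat.lt_add_of_pos_right two_pos).trans_le (B_add_two_le_of_lt hA hB hs hij)

theorem A_ne_B {i j : ℕ} (hj : 1 ≤ j) : A i ≠ B j := by
  rcases lt_or_ge j i with h | h
  · exact (A_ne_of_lt hA h).2
  · have : A i ≤ A j := (A_strictMono hA).monotone h
    have : 1 ≤ A j := (le_A hA j).trans' hj
    rw [hB]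
    nlinarith

/-- The values `A 0, …, A (n-1)` and `B 1, …, B k` are distinct and all below `A n`. -/
theorem add_le_A_of_B_lt {n k : ℕ} (hk : B k < A n) : n + k ≤ A n := by
  have hsub : (range n).image A ∪ (Icc 1 k).image B ⊆ range (A n) := by
    intro y hy
    simp only [mem_union, mem_image, mem_range, mem_Icc] at hy ⊢
    rcases hy with ⟨i, hi, rfl⟩ | ⟨i, hi, rfl⟩
    · exact A_strictMono hA hi
    · exact ((B_strictMono hA hB hs).monotone hi.2).trans_lt hk
  have hdisj : Disjoint ((range n).image A) ((Icc 1 k).image B) := by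
    simp only [disjoint_left, mem_image, mem_range, mem_Icc, not_exists, not_and]
    rintro _ ⟨i, -, rfl⟩ j hj
    exact (A_ne_B hA hB hs hj.1).symm
  have := card_le_card hsub
  rwa [card_union_of_disjoint hdisj, card_image_of_injective _ (A_strictMono hA).injective,
    card_image_of_injective _ (B_strictMono hA hB hs).injective, card_range, card_range,
    Nat.card_Icc, Nat.add_sub_cancel] at this

/-- Every number below `A n` is one of `A 0, …, A (n-1)` or `B 1, …, B (k-1)`. -/
theorem A_lt_add_of_A_lt_B {n k : ℕ} (hk : A n < B k) : A n < n + k := by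
  have hsub : range (A n) ⊆ (range n).image A ∪ (Ico 1 k).image B := by
    intro y hy
    obtain ⟨i, hi, rfl | rfl⟩ := exists_lt_eq_of_lt_A hA (mem_range.mp hy)
    · exact mem_union_left _ (mem_image_of_mem A (mem_range.mpr hi))
    · rcases Nat.eq_zero_or_pos i with rfl | hi0
      · rw [B_zero hA hB, ← A_zero hA]
        exact mem_union_left _ (mem_image_of_mem A (mem_range.mpr hi))
      · refine mem_union_right _ (mem_image_of_mem B (mem_Ico.mpr ⟨hi0, ?_⟩))
        exact (B_strictMono hA hB hs).lt_iff_lt.mp ((mem_range.mp hy).trans hk)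
  have hk0 : k ≠ 0 := by rintro rfl; simp [B_zero hA hB] at hk
  have := (card_le_card hsub).trans (card_union_le _ _)
  have := (card_image_le (s := range n) (f := A)).trans_eq (card_range n)
  have := (card_image_le (s := Ico 1 k) (f := B)).trans_eq (Nat.card_Ico 1 k)
  simp only [card_range] at *
  omega

theorem B_A_sub_le (n : ℕ) : B (A n - n) ≤ A n := by
  by_contra! h
  have := A_lt_add_of_A_lt_B hA hB hs h
  have := le_A hA n
  omega

theorem A_le_B_A_sub_add_one (n : ℕ) : A n ≤ B (A n - n + 1) := by
  by_contra! h
  have := add_le_A_of_B_lt hA hB hs h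
  have := le_A hA n
  omega

theorem A_succ_le_add_two (n : ℕ) : A (n + 1) ≤ A n + 2 := by
  by_contra! h
  obtain ⟨i, hi⟩ :=
    exists_B_eq_of_A_lt_of_lt_A_succ hA (n := n) (y := A n + 1) (by omega) (by omega)
  obtain ⟨j, hj⟩ :=
    exists_B_eq_of_A_lt_of_lt_A_succ hA (n := n) (y := A n + 2) (by omega) (by omega)
  have := B_add_two_le_of_lt hA hB hs
    ((B_strictMono hA hB hs).lt_iff_lt.mp (by omega : B i < B j))
  omega

theorem exists_B_eq_of_A_succ_eq_add_two {n : ℕ} (h : A (n + 1) = A n + 2) :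
    ∃ j, j + n = A n + 1 ∧ B j = A n + 1 := by
  obtain ⟨j, hj⟩ :=
    exists_B_eq_of_A_lt_of_lt_A_succ hA (n := n) (y := A n + 1) (by omega) (by omega)
  have := add_le_A_of_B_lt hA hB hs (n := n + 1) (k := j) (by omega)
  have := A_lt_add_of_A_lt_B hA hB hs (n := n) (k := j) (by omega)
  exact ⟨j, by omega, hj⟩

theorem not_dvd_A_of_A_succ_eq_add_two {n : ℕ} (hn : n ≡ 1 [MOD s]) (h : A (n + 1) = A n + 2) :
    ¬ s ∣ A n := by
  intro hdvd
  obtain ⟨j, hjn, hj⟩ := exists_B_eq_of_A_succ_eq_add_two hA hB hs h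
  have hjn' : (j + n : ZMod s) = A n + 1 := by
    exact_mod_cast congrArg (Nat.cast : ℕ → ZMod s) hjn
  have hj' : (s * A j + t * j : ZMod s) = A n + 1 := by
    exact_mod_cast congrArg (Nat.cast : ℕ → ZMod s) ((hB j).symm.trans hj)
  have hn' : (n : ZMod s) = 1 := by simpa using (ZMod.natCast_eq_natCast_iff _ _ _).mpr hn
  have hA' : (A n : ZMod s) = 0 := (ZMod.natCast_eq_zero_iff _ _).mpr hdvd
  have hs' : (s : ZMod s) = 0 := ZMod.natCast_self s
  have : (1 : ZMod s) = 0 := by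
    linear_combination (-1 : ZMod s) * hj' + (A j : ZMod s) * hs' + (t : ZMod s) * hjn'
      - (t : ZMod s) * hn' + ((t : ZMod s) - 1) * hA'
  have := (ZMod.natCast_eq_zero_iff 1 s).mp (by exact_mod_cast this)
  have := Nat.le_of_dvd one_pos this
  omega

end Mex

section FloorSequence

variable {s t : ℕ} {A B : ℕ → ℕ} {α γ : ℝ} (hfl : ∀ n : ℕ, (A n : ℤ) = ⌊(n : ℝ) * α + γ⌋)
include hfl

theorem A_le_and_lt_A_add_one (n : ℕ) : (A n : ℝ) ≤ n * α + γ ∧ n * α + γ < A n + 1 := by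
  simpa using Int.floor_eq_iff.mp (hfl n).symm

variable (hA : ∀ n, A n = sInf {x : ℕ | ∀ i, i < n → x ≠ A i ∧ x ≠ B i})
  (hB : ∀ n, B n = s * A n + t * n) (hs : 2 ≤ s)
include hA hB hs

theorem pos_and_sub_one_mul_eq_of_floor : 0 < α ∧ (α - 1) * (s * α + t) = α := by
  have hγ : 0 ≤ γ ∧ γ < 1 := by simpa [A_zero hA] using A_le_and_lt_A_add_one hfl 0
  have hα : 0 < α := by
    have := A_le_and_lt_A_add_one hfl 1
    have : (1 : ℝ) ≤ A 1 := by exact_mod_cast le_A hA 1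
    simp only [Nat.cast_one, one_mul] at *
    linarith
  set β : ℝ := s * α + t
  have hβ : 0 ≤ β := by positivity
  refine ⟨hα, sub_eq_zero.mp (eq_zero_of_forall_abs_natCast_mul_le (K := 2 * β + s + 1)
    fun n ↦ ?_)⟩
  set c := A n - n
  have hc : (c : ℝ) = A n - n := Nat.cast_sub (le_A hA n)
  have hlow : ((s * A c + t * c : ℕ) : ℝ) ≤ A n := by
    exact_mod_cast (hB c).symm.trans_le (B_A_sub_le hA hB hs n)
  have hupp : (A n : ℝ) ≤ ((s * A (c + 1) + t * (c + 1) : ℕ) : ℝ) := by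
    exact_mod_cast (A_le_B_A_sub_add_one hA hB hs n).trans_eq (hB (c + 1))
  push_cast at hlow hupp
  obtain ⟨hn₁, hn₂⟩ := A_le_and_lt_A_add_one hfl n
  have hc₁ := (A_le_and_lt_A_add_one hfl (c + 1)).1
  have hc₂ := (A_le_and_lt_A_add_one hfl c).2
  push_cast at hc₁
  have hs₀ : (0 : ℝ) ≤ s := by positivity
  have hsc₁ := mul_le_mul_of_nonneg_left hc₁ hs₀
  have hsc₂ := mul_le_mul_of_nonneg_left hc₂.le hs₀
  have hsγ := mul_le_mul_of_nonneg_left hγ.2.le hs₀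
  have hsγ' := mul_nonneg hs₀ hγ.1
  -- `n * ((α - 1) * β - α) = (c * β - n * α) - (c - n * (α - 1)) * β`, both terms bounded
  have he : |(c : ℝ) - n * (α - 1)| ≤ 1 := abs_le.mpr ⟨by linarith, by linarith⟩
  have hcβ : |(c : ℝ) * β - n * α| ≤ β + s + 1 := abs_le.mpr ⟨by linarith, by linarith⟩
  calc |n * ((α - 1) * β - α)| = |((c : ℝ) * β - n * α) - ((c : ℝ) - n * (α - 1)) * β| := by
        ring_nf
    _ ≤ |(c : ℝ) * β - n * α| + |(c : ℝ) - n * (α - 1)| * β := by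
        rw [← abs_of_nonneg hβ, ← abs_mul, abs_of_nonneg hβ]; exact abs_sub _ _
    _ ≤ (β + s + 1) + 1 * β := by gcongr
    _ = 2 * β + s + 1 := by ring

end FloorSequence

/-- For `s ≥ 2`, `t ≥ 1`, there are no reals `α`, `γ` with
`A n = ⌊n * α + γ⌋` for all `n ≥ 0`. -/
theorem stmt_11 (s t : ℕ) (hs : 2 ≤ s) (ht : 1 ≤ t) (A B : ℕ → ℕ)
    (hA : ∀ n, A n = sInf {x : ℕ | ∀ i, i < n → x ≠ A i ∧ x ≠ B i})
    (hB : ∀ n, B n = s * A n + t * n) :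
    ¬ ∃ α γ : ℝ, ∀ n : ℕ, (A n : ℤ) = ⌊(n : ℝ) * α + γ⌋ := by
  rintro ⟨α, γ, hfl⟩
  obtain ⟨hα, hquad⟩ := pos_and_sub_one_mul_eq_of_floor hfl hA hB hs
  have hs' : (2 : ℝ) ≤ s := by exact_mod_cast hs
  obtain ⟨h₁, h₂⟩ := one_lt_and_mul_lt_add_one_of_sub_one_mul_eq (by linarith)
    (by exact_mod_cast ht) hα hquad
  have hirr : Irrational α := by
    refine (irrational_of_sq_eq_of_mem_Ioo (a := s + 1 - t) (b := s * t) (m := s) ?_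
      ⟨?_, ?_⟩).of_natCast_mul s
    · push_cast; linear_combination (s : ℝ) * hquad
    · push_cast; nlinarith
    · push_cast; exact h₂
  obtain ⟨n, hn, hdvd, hjump⟩ :=
    hirr.exists_modEq_one_dvd_floor_add_two_le h₁ (by nlinarith) γ (by omega : 0 < s)
  rw [← hfl] at hdvd
  rw [← hfl, ← hfl] at hjump
  have hgap : A (n + 1) = A n + 2 := by
    have := A_succ_le_add_two hA hB hs n
    omega
  exact not_dvd_A_of_A_succ_eq_add_two hA hB hs hn hgap (Int.natCast_dvd_natCast.mp hdvd)
end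

section
/- Let b_1 ≥ b_2 ≥ 1, and let u_0 = 1, u_1 = b_1 + 1 and u_n = b_1·u_{n−1} + b_2·u_{n−2} for n ≥ 2 (equivalently, the recurrence holds for n ≥ 1 with u_{-1} = 1/b_2). Then every positive integer m has a unique representation m = Σ d_i·u_i with digits d_i ∈ {0, ..., b_1} satisfying: d_i = b_1 implies d_{i−1} < b_2 for all i ≥ 1. -/
/-- In the numeration system with bases `u 0 = 1`, `u 1 = b₁ + 1`,
`u n = b₁ * u (n-1) + b₂ * u (n-2)` (where `b₁ ≥ b₂ ≥ 1`), every positive integer `m`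
has a unique representation `m = Σ dᵢ * uᵢ` with digits `dᵢ ∈ {0, …, b₁}` satisfying
`dᵢ = b₁ → d_{i-1} < b₂` for `i ≥ 1`. -/
theorem stmt_12 (b₁ b₂ : ℕ) (hb : b₂ ≤ b₁) (hb₂ : 1 ≤ b₂) (u : ℕ → ℕ)
    (hu0 : u 0 = 1) (hu1 : u 1 = b₁ + 1)
    (hur : ∀ n, u (n + 2) = b₁ * u (n + 1) + b₂ * u n) :
    ∀ m : ℕ, 0 < m →
      ∃! d : ℕ →₀ ℕ,
        (∀ i, d i ≤ b₁) ∧ (∀ i, d (i + 1) = b₁ → d i < b₂) ∧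
        m = d.sum fun i c => c * u i := by
  have hb1 : 1 ≤ b₁ := le_trans hb₂ hb
  -- positivity of u
  have hupos : ∀ n, 0 < u n := by
    intro n
    induction n using Nat.strong_induction_on with
    | _ n ih =>
      match n with
      | 0 => simp [hu0]
      | 1 => rw [hu1]; omega
      | k + 2 =>
        rw [hur k]
        have h1 := ih k (by omega)
        have h2 : 0 < b₂ * u k := Nat.mul_pos hb₂ h1
        omega
  -- b₂ * u n ≤ u (n+1)
  have hbu : ∀ n, b₂ * u n ≤ u (n + 1) := by
    intro n
    match n with
    | 0 => rw [hu0, hu1]; omega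
    | k + 1 =>
      rw [hur k]
      have h1 := Nat.mul_le_mul_right (u (k + 1)) hb
      have h2 : 0 < b₂ * u k := Nat.mul_pos hb₂ (hupos k)
      omega
  -- growth: u is monotone (not strictly needed beyond unboundedness)
  have humono : ∀ n, u n < u (n + 1) := by
    intro n
    match n with
    | 0 => rw [hu0, hu1]; omega
    | k + 1 =>
      rw [hur k]
      have h1 : u (k + 1) ≤ b₁ * u (k + 1) := Nat.le_mul_of_pos_left _ hb1
      have h2 : 0 < b₂ * u k := Nat.mul_pos hb₂ (hupos k)
      omega
  have hub : ∀ n, n + 1 ≤ u n := by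
    intro n
    induction n with
    | zero => simp [hu0]
    | succ k ih => have := humono k; omega
  -- bound lemma: admissible digit sums over `range n` are < u n
  have bound : ∀ n (d : ℕ → ℕ), (∀ i, d i ≤ b₁) → (∀ i, d (i + 1) = b₁ → d i < b₂) →
      ∑ i ∈ Finset.range n, d i * u i < u n := by
    intro n
    induction n using Nat.strong_induction_on with
    | _ n ih =>
      intro d hd1 hd2
      match n with
      | 0 => simpa using hupos 0
      | 1 =>
        rw [Finset.sum_range_one, hu0, hu1]
        have := hd1 0
        omega
      | k + 2 =>
        rw [Finset.sum_range_succ, hur k]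
        rcases lt_or_eq_of_le (hd1 (k + 1)) with h | h
        · have h1 := ih (k + 1) (by omega) d hd1 hd2
          have h2 : (d (k + 1) + 1) * u (k + 1) ≤ b₁ * u (k + 1) :=
            Nat.mul_le_mul_right _ (by omega)
          rw [Nat.succ_mul] at h2
          have h3 : 0 < b₂ * u k := Nat.mul_pos hb₂ (hupos k)
          omega
        · have hk := hd2 k h
          rw [Finset.sum_range_succ]
          have h1 := ih k (by omega) d hd1 hd2
          have h2 : (d k + 1) * u k ≤ b₂ * u k := Nat.mul_le_mul_right _ (by omega)
          rw [Nat.succ_mul] at h2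
          rw [h]
          omega
  -- a single term is at most the full sum
  have term_le : ∀ (f : ℕ →₀ ℕ) (i : ℕ), f i * u i ≤ f.sum fun j c => c * u j := by
    intro f i
    by_cases h : f i = 0
    · simp [h]
    · rw [Finsupp.sum]
      exact Finset.single_le_sum (f := fun j => f j * u j) (fun j _ => Nat.zero_le _)
        (Finsupp.mem_support_iff.2 h)
  -- existence
  have ex : ∀ n, ∀ m, m < u (n + 1) →
      ∃ d : ℕ →₀ ℕ, (∀ i, d i ≤ b₁) ∧ (∀ i, d (i + 1) = b₁ → d i < b₂) ∧
        (∀ i, n < i → d i = 0) ∧ (d.sum fun i c => c * u i) = m := by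
    intro n
    induction n with
    | zero =>
      intro m hm
      rw [hu1] at hm
      refine ⟨Finsupp.single 0 m, ?_, ?_, ?_, ?_⟩
      · intro i
        rw [Finsupp.single_apply]
        split <;> omega
      · intro i hi
        rw [Finsupp.single_apply] at hi
        simp at hi
        omega
      · intro i hi
        rw [Finsupp.single_apply]
        split <;> omega
      · rw [Finsupp.sum_single_index (by simp)]
        rw [hu0]; ring
    | succ k ih =>
      intro m hm
      by_cases hsm : m < u (k + 1)
      · obtain ⟨d, h1, h2, h3, h4⟩ := ih m hsm
        exact ⟨d, h1, h2, fun i hi => h3 i (by omega), h4⟩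
      · push_neg at hsm
        have hupos' := hupos (k + 1)
        have hm' : m < b₁ * u (k + 1) + b₂ * u k := by
          have : u (k + 1 + 1) = b₁ * u (k + 1) + b₂ * u k := hur k
          omega
        set q := m / u (k + 1) with hqdef
        set r := m % u (k + 1) with hrdef
        have hdm : u (k + 1) * q + r = m := Nat.div_add_mod m (u (k + 1))
        have hqb : q ≤ b₁ := by
          have hlt : m < (b₁ + 1) * u (k + 1) := by
            rw [Nat.succ_mul]
            have := hbu k
            omega
          have := (Nat.div_lt_iff_lt_mul hupos').2 hlt
          omega
        have hr : r < u (k + 1) := Nat.mod_lt _ hupos'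
        obtain ⟨e, h1, h2, h3, h4⟩ := ih r hr
        have he : e (k + 1) = 0 := h3 (k + 1) (by omega)
        refine ⟨e + Finsupp.single (k + 1) q, ?_, ?_, ?_, ?_⟩
        · intro i
          rw [Finsupp.add_apply, Finsupp.single_apply]
          split
          · next hik => subst hik; rw [he]; omega
          · have := h1 i; omega
        · intro i hi
          rw [Finsupp.add_apply, Finsupp.single_apply] at hi
          rw [Finsupp.add_apply, Finsupp.single_apply]
          split at hi
          · -- i + 1 = k + 1, i.e. i = k : top digit q = b₁
            next hik =>
            have hik' : i = k := by omega
            rw [hik'] at hi ⊢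
            rw [he] at hi
            have hq : q = b₁ := by omega
            have hrlt : r < b₂ * u k := by
              rw [hq] at hdm
              have hcm : u (k + 1) * b₁ = b₁ * u (k + 1) := Nat.mul_comm _ _
              omega
            have htl := term_le e k
            rw [h4] at htl
            split
            · omega
            · by_contra hcon
              push_neg at hcon
              have : b₂ * u k ≤ e k * u k := Nat.mul_le_mul_right _ hcon
              omega
          · -- digit i+1 comes from e
            next hik =>
            have hei : e (i + 1) = b₁ := by omega
            have : i ≠ k + 1 := by
              intro hc
              rw [hc] at hei
              rw [h3 (k + 2) (by omega)] at hei
              omega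
            split
            · omega
            · have := h2 i hei; omega
        · intro i hi
          rw [Finsupp.add_apply, Finsupp.single_apply]
          rw [h3 i (by omega)]
          split <;> omega
        · rw [Finsupp.sum_add_index' (by intro a; simp) (by intro a x y; ring)]
          rw [Finsupp.sum_single_index (by simp), h4]
          have hcm : u (k + 1) * q = q * u (k + 1) := Nat.mul_comm _ _
          omega
  -- strict comparison lemma for uniqueness
  have lt_lemma : ∀ d e : ℕ →₀ ℕ, (∀ i, e i ≤ b₁) → (∀ i, e (i + 1) = b₁ → e i < b₂) →
      ∀ j, e j < d j → (∀ i, j < i → d i = e i) →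
      (e.sum fun i c => c * u i) < d.sum fun i c => c * u i := by
    intro d e he1 he2 j hj htail
    set N := (d.support ∪ e.support).sup id + j + 1 with hN
    have hsubd : d.support ⊆ Finset.range N := by
      intro i hi
      rw [Finset.mem_range]
      have : id i ≤ (d.support ∪ e.support).sup id :=
        Finset.le_sup (Finset.mem_union_left _ hi)
      simp only [id] at this
      omega
    have hsube : e.support ⊆ Finset.range N := by
      intro i hi
      rw [Finset.mem_range]
      have : id i ≤ (d.support ∪ e.support).sup id :=
        Finset.le_sup (Finset.mem_union_right _ hi)
      simp only [id] at this
      omega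
    have hjN : j + 1 ≤ N := by omega
    rw [Finsupp.sum_of_support_subset d hsubd _ (by intros; simp),
        Finsupp.sum_of_support_subset e hsube _ (by intros; simp)]
    have hsplit : ∀ f : ℕ →₀ ℕ, ∑ i ∈ Finset.range N, f i * u i =
        (∑ i ∈ Finset.range (j + 1), f i * u i) + ∑ i ∈ Finset.Ico (j + 1) N, f i * u i := by
      intro f
      rw [Finset.range_eq_Ico, ← Finset.sum_Ico_consecutive _ (Nat.zero_le _) hjN, Finset.range_eq_Ico]
    rw [hsplit d, hsplit e]
    have htails : ∑ i ∈ Finset.Ico (j + 1) N, d i * u i =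
        ∑ i ∈ Finset.Ico (j + 1) N, e i * u i := by
      apply Finset.sum_congr rfl
      intro i hi
      rw [Finset.mem_Ico] at hi
      rw [htail i (by omega)]
    rw [htails]
    have hA := bound j e he1 he2
    have hB : (e j + 1) * u j ≤ d j * u j := Nat.mul_le_mul_right _ (by omega)
    rw [Nat.succ_mul] at hB
    rw [Finset.sum_range_succ, Finset.sum_range_succ]
    have : (0:ℕ) ≤ ∑ i ∈ Finset.range j, d i * u i := Nat.zero_le _
    omega
  -- main statement
  intro m hm
  obtain ⟨d, h1, h2, h3, h4⟩ := ex m m (by have := hub (m + 1); have := humono m; omega)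
  refine ⟨d, ⟨h1, h2, h4.symm⟩, ?_⟩
  rintro e ⟨k1, k2, k3⟩
  by_contra hne
  have hex : ∃ i, e i ≠ d i := by
    by_contra h
    push_neg at h
    exact hne (Finsupp.ext h)
  obtain ⟨i0, hi0⟩ := hex
  have hmem : ∀ i, e i ≠ d i → i ∈ (e.support ∪ d.support).filter (fun i => e i ≠ d i) := by
    intro i hi
    rw [Finset.mem_filter]
    refine ⟨?_, hi⟩
    rcases Nat.eq_zero_or_pos (e i) with h | h
    · rw [Finset.mem_union]; right; rw [Finsupp.mem_support_iff]; omega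
    · rw [Finset.mem_union]; left; rw [Finsupp.mem_support_iff]; omega
  have htne : ((e.support ∪ d.support).filter (fun i => e i ≠ d i)).Nonempty :=
    ⟨i0, hmem i0 hi0⟩
  set j := ((e.support ∪ d.support).filter (fun i => e i ≠ d i)).max' htne with hjdef
  have hjmem := ((e.support ∪ d.support).filter (fun i => e i ≠ d i)).max'_mem htne
  rw [Finset.mem_filter] at hjmem
  have hmax : ∀ i, j < i → e i = d i := by
    intro i hi
    by_contra hc
    have h2i : i ≤ j := Finset.le_max' _ i (hmem i hc)
    omega
  have hjne : e j ≠ d j := hjmem.2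
  have hsum : (e.sum fun i c => c * u i) = d.sum fun i c => c * u i :=
    k3.symm.trans h4.symm
  rcases Nat.lt_or_ge (e j) (d j) with h | h
  · have := lt_lemma d e k1 k2 j h (fun i hi => (hmax i hi).symm)
    omega
  · have h' : d j < e j := by omega
    have := lt_lemma e d h1 h2 j h' hmax
    omega
end

section
/- In the numeration system with u_0 = 1, u_1 = s + t, u_n = (s+t−1)u_{n−1} + s·u_{n−2}, suppose R(m) has tail digits d_{2k} r q r q ... r q (k pairs 'r q' preceded by digit d_{2k}), where r = s+t−1, q = s−1, d_{2k} ≤ q, and d_{2k} = q implies d_{2k+1} < r. Then R(m+1) is obtained by replacing this tail with (d_{2k}+1) followed by 2k zeros; in particular m+1 is evil (its representation ends in an even number of zeros). -/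
lemma key_sum (s t : ℕ) (hs : 0 < s) (u : ℕ → ℕ)
    (hu0 : u 0 = 1)
    (hur : ∀ n, u (n + 2) = (s + t - 1) * u (n + 1) + s * u n)
    (d : ℕ → ℕ) :
    ∀ k, (∀ j, j < k → d (2 * j) = s - 1 ∧ d (2 * j + 1) = s + t - 1) →
      1 + ∑ i ∈ Finset.range (2 * k), d i * u i = u (2 * k) := by
  intro k
  induction k with
  | zero => intro _; simp [hu0]
  | succ k ih =>
    intro htail
    have ih' := ih (fun j hj => htail j (by omega))
    have h1 : d (2 * k) = s - 1 := (htail k (by omega)).1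
    have h2 : d (2 * k + 1) = s + t - 1 := (htail k (by omega)).2
    have h3 : 2 * (k + 1) = (2 * k + 1) + 1 := by omega
    rw [h3, Finset.sum_range_succ, Finset.sum_range_succ]
    have h4 := hur (2 * k)
    have hs1 : s - 1 + 1 = s := by omega
    have e1 : s * u (2 * k) = (s - 1) * u (2 * k) + u (2 * k) := by
      conv_lhs => rw [← hs1]
      ring
    rw [h1, h2]
    linarith [h4]

/-- In the numeration system with `u 0 = 1`, `u 1 = s + t`,
`u n = (s+t-1) u (n-1) + s u (n-2)` (digits `dᵢ ≤ r := s+t-1`, with `d_{i+1} = r → dᵢ ≤ q := s-1`),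
if the representation `d` of `m` has tail `d_{2k} r q r q … r q` (i.e. `d (2j) = q`,
`d (2j+1) = r` for `j < k`, `d (2k) ≤ q`, and `d (2k) = q → d (2k+1) < r`), then the
representation `d'` of `m + 1` is obtained by replacing this tail with `d (2k) + 1`
followed by `2k` zeros; in particular `m + 1` is evil (its representation ends in an
even number of zeros). -/
theorem stmt_13 (s t : ℕ) (hs : 0 < s) (ht : 0 < t) (u : ℕ → ℕ)
    (hu0 : u 0 = 1) (hu1 : u 1 = s + t)
    (hur : ∀ n, u (n + 2) = (s + t - 1) * u (n + 1) + s * u n)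
    (m : ℕ) (d : ℕ →₀ ℕ)
    (hdig : ∀ i, d i ≤ s + t - 1) (hcond : ∀ i, d (i + 1) = s + t - 1 → d i ≤ s - 1)
    (hval : m = d.sum fun i c => c * u i)
    (k : ℕ)
    (htail : ∀ j, j < k → d (2 * j) = s - 1 ∧ d (2 * j + 1) = s + t - 1)
    (hd2k : d (2 * k) ≤ s - 1)
    (hd2k' : d (2 * k) = s - 1 → d (2 * k + 1) < s + t - 1) :
    ∃ d' : ℕ →₀ ℕ,
      (∀ i, d' i ≤ s + t - 1) ∧ (∀ i, d' (i + 1) = s + t - 1 → d' i ≤ s - 1) ∧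
      m + 1 = (d'.sum fun i c => c * u i) ∧
      d' (2 * k) = d (2 * k) + 1 ∧
      (∀ i, i < 2 * k → d' i = 0) ∧
      (∀ i, 2 * k < i → d' i = d i) ∧
      d' (2 * k) ≠ 0 := by
  classical
  set d' : ℕ →₀ ℕ := d.filter (fun i => 2 * k < i) + Finsupp.single (2 * k) (d (2 * k) + 1) with hd'def
  have hd'lt : ∀ i, i < 2 * k → d' i = 0 := by
    intro i hi
    simp [hd'def, Finsupp.filter_apply, Finsupp.single_apply]
    constructor
    · intro h; omega
    · omega
  have hd'eq : d' (2 * k) = d (2 * k) + 1 := by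
    simp [hd'def, Finsupp.filter_apply, Finsupp.single_apply]
  have hd'gt : ∀ i, 2 * k < i → d' i = d i := by
    intro i hi
    simp [hd'def, Finsupp.filter_apply, Finsupp.single_apply, hi]
    omega
  set N := 2 * k + 2 + d.support.sup id with hN
  have hsupd : ∀ i ∈ d.support, i < N := by
    intro i hi
    have := Finset.le_sup (f := id) hi
    simp at this
    omega
  have hdN : ∀ i, N ≤ i → d i = 0 := by
    intro i hi
    by_contra h
    have := hsupd i (Finsupp.mem_support_iff.2 h)
    omega
  have hm : m = ∑ i ∈ Finset.range N, d i * u i := by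
    rw [hval]
    exact Finsupp.sum_of_support_subset d
      (fun i hi => Finset.mem_range.2 (hsupd i hi)) _ (fun i _ => zero_mul (u i))
  have hd'N : ∀ i, N ≤ i → d' i = 0 := by
    intro i hi
    rw [hd'gt i (by omega)]
    exact hdN i hi
  have hm' : d'.sum (fun i c => c * u i) = ∑ i ∈ Finset.range N, d' i * u i := by
    refine Finsupp.sum_of_support_subset d' ?_ _ (fun i _ => zero_mul (u i))
    intro i hi
    rw [Finset.mem_range]
    by_contra h
    exact Finsupp.mem_support_iff.1 hi (hd'N i (by omega))
  have hkey := key_sum s t hs u hu0 hur (fun i => d i) k htail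
  have hNk : 2 * k + 1 ≤ N := by omega
  have hsplit1 : ∑ i ∈ Finset.range N, d i * u i
      = ∑ i ∈ Finset.range (2 * k + 1), d i * u i + ∑ i ∈ Finset.Ico (2 * k + 1) N, d i * u i := by
    rw [Finset.sum_range_add_sum_Ico _ hNk]
  have hsplit2 : ∑ i ∈ Finset.range N, d' i * u i
      = ∑ i ∈ Finset.range (2 * k + 1), d' i * u i + ∑ i ∈ Finset.Ico (2 * k + 1) N, d' i * u i := by
    rw [Finset.sum_range_add_sum_Ico _ hNk]
  have hIco : ∑ i ∈ Finset.Ico (2 * k + 1) N, d' i * u i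
      = ∑ i ∈ Finset.Ico (2 * k + 1) N, d i * u i := by
    refine Finset.sum_congr rfl ?_
    intro i hi
    rw [hd'gt i (by simp [Finset.mem_Ico] at hi; omega)]
  have hlow' : ∑ i ∈ Finset.range (2 * k + 1), d' i * u i = (d (2 * k) + 1) * u (2 * k) := by
    rw [Finset.sum_eq_single_of_mem (2 * k) (Finset.mem_range.2 (by omega))]
    · rw [hd'eq]
    · intro i hi hne
      rw [hd'lt i (by simp at hi; omega), zero_mul]
  have hlow : ∑ i ∈ Finset.range (2 * k + 1), d i * u i + 1 = (d (2 * k) + 1) * u (2 * k) := by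
    rw [Finset.sum_range_succ, add_mul, one_mul]
    linarith [hkey]
  refine ⟨d', ?_, ?_, ?_, hd'eq, hd'lt, hd'gt, by omega⟩
  · intro i
    rcases lt_trichotomy i (2 * k) with h | h | h
    · rw [hd'lt i h]; omega
    · rw [h, hd'eq]; have := hd2k; omega
    · rw [hd'gt i h]; exact hdig i
  · intro i hi
    rcases lt_trichotomy i (2 * k) with h | h | h
    · rw [hd'lt i h]; omega
    · rw [h] at hi ⊢
      rw [hd'gt (2 * k + 1) (by omega)] at hi
      rw [hd'eq]
      have : d (2 * k) ≠ s - 1 := fun he => absurd hi (by have := hd2k' he; omega)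
      omega
    · rw [hd'gt (i + 1) (by omega)] at hi
      rw [hd'gt i h]
      exact hcond i hi
  · rw [hm', hm, hsplit1, hsplit2, hIco, hlow']
    omega
end

section
/- In the numeration system with u_0 = 1, u_1 = s+t, u_n = (s+t−1)u_{n−1} + s·u_{n−2}, suppose R(m) has tail digits d_{2k+1} r q r q ... r q r (ending in r, with r, q alternating, preceded by d_{2k+1} ≤ q where d_{2k+1} = q implies d_{2k+2} < r). Then R(m+1) = (d_{2k+1}+1)·u_{2k+1} + Σ_{i ≥ 2k+2} d_i u_i; in particular m+1 is old (its representation ends in an odd number of zeros). -/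
/-!
The digit string `r q r q … q r` occupying positions `0, …, 2k` is the largest admissible string
of that length, and by the recurrence its value is exactly `u (2k+1) - 1`. Adding `1` therefore
clears positions `0, …, 2k` and carries into position `2k+1`. The new digit `d (2k+1) + 1 ≤ s`
is at most `r` since `t > 0`, and it is at most `q` whenever `d (2k+2) = r`, because then
`d (2k+1) < q`.
-/

open Finset

theorem sum_range_alternating_add_one {s t : ℕ} {u : ℕ → ℕ} (hs : 0 < s) (hu0 : u 0 = 1)
    (hu1 : u 1 = s + t)
    (hur : ∀ n, u (n + 2) = (s + t - 1) * u (n + 1) + s * u n) (g : ℕ → ℕ) (k : ℕ)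
    (hr : ∀ j, j ≤ k → g (2 * j) = s + t - 1) (hq : ∀ j, j < k → g (2 * j + 1) = s - 1) :
    ∑ i ∈ range (2 * k + 1), g i * u i + 1 = u (2 * k + 1) := by
  induction k with
  | zero =>
    simp only [mul_zero, zero_add, sum_range_one, hr 0 le_rfl, hu0, hu1]
    omega
  | succ k ih =>
    have hsum := ih (fun j hj => hr j (by omega)) (fun j hj => hq j (by omega))
    have hodd : g (2 * k + 1) = s - 1 := hq k k.lt_succ_self
    have heven : g (2 * k + 2) = s + t - 1 := hr (k + 1) le_rfl
    obtain ⟨s, rfl⟩ : ∃ s', s = s' + 1 := ⟨s - 1, by omega⟩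
    rw [show 2 * (k + 1) + 1 = 2 * k + 1 + 1 + 1 by ring, sum_range_succ, sum_range_succ, hodd,
      heven, hur (2 * k + 1), ← hsum]
    simp only [add_tsub_cancel_right]
    ring

namespace Finsupp

noncomputable def carryInto (d : ℕ →₀ ℕ) (p : ℕ) : ℕ →₀ ℕ :=
  single p (d p + 1) + d.filter (p < ·)

variable {d : ℕ →₀ ℕ} {p i : ℕ}

theorem carryInto_apply_of_lt (hi : i < p) : d.carryInto p i = 0 := by
  simp [carryInto, hi.ne', hi.not_gt]

@[simp]
theorem carryInto_apply_self : d.carryInto p p = d p + 1 := by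
  simp [carryInto]

theorem carryInto_apply_of_gt (hi : p < i) : d.carryInto p i = d i := by
  simp [carryInto, hi.ne, hi]

theorem carryInto_le {r : ℕ} (hdig : ∀ i, d i ≤ r) (hp : d p + 1 ≤ r) :
    ∀ i, d.carryInto p i ≤ r := by
  intro i
  rcases lt_trichotomy i p with hi | rfl | hi
  · simp [carryInto_apply_of_lt hi]
  · simpa using hp
  · simpa [carryInto_apply_of_gt hi] using hdig i

theorem carryInto_le_of_succ_eq {r q : ℕ} (hcond : ∀ i, d (i + 1) = r → d i ≤ q)
    (hp : d (p + 1) = r → d p + 1 ≤ q) :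
    ∀ i, d.carryInto p (i + 1) = r → d.carryInto p i ≤ q := by
  intro i hi
  rcases lt_trichotomy i p with hlt | rfl | hgt
  · simp [carryInto_apply_of_lt hlt]
  · rw [carryInto_apply_of_gt (Nat.lt_succ_self i)] at hi
    simpa using hp hi
  · rw [carryInto_apply_of_gt (by omega)] at hi
    simpa [carryInto_apply_of_gt hgt] using hcond i hi

theorem sum_filter_not_lt (u : ℕ → ℕ) (d : ℕ →₀ ℕ) (p : ℕ) :
    ((d.filter (¬ p < ·)).sum fun i c => c * u i) = ∑ i ∈ range (p + 1), d i * u i := by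
  rw [sum_of_support_subset _ (s := range (p + 1)) _ _ (fun _ _ => zero_mul _)]
  · refine Finset.sum_congr rfl fun i hi => ?_
    rw [filter_apply_pos _ _ (by simpa [Nat.lt_succ_iff] using hi)]
  · intro i hi
    simpa [Nat.lt_succ_iff] using (mem_filter.mp hi).2

theorem sum_carryInto_add (u : ℕ → ℕ) (d : ℕ →₀ ℕ) (p : ℕ) :
    ((d.carryInto p).sum fun i c => c * u i) + ∑ i ∈ range p, d i * u i =
      (d.sum fun i c => c * u i) + u p := by
  rw [← sum_filter_add_sum_filter_not (p := (p < ·)) d, sum_filter_not_lt, Finset.sum_range_succ,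
    carryInto, sum_add_index' (fun _ => zero_mul _) (fun _ _ _ => add_mul _ _ _),
    sum_single_index (zero_mul _)]
  ring

end Finsupp

/-- In the numeration system with `u 0 = 1`, `u 1 = s + t`,
`u n = (s+t-1) u (n-1) + s u (n-2)` (digits `dᵢ ≤ r := s+t-1`, with `d_{i+1} = r → dᵢ ≤ q := s-1`),
if the representation `d` of `m` has tail `d_{2k+1} r q r q … r q r` (i.e. `d (2j) = r`
for `j ≤ k`, `d (2j+1) = q` for `j < k`, `d (2k+1) ≤ q`, and `d (2k+1) = q → d (2k+2) < r`),
then the representation `d'` of `m + 1` is `(d (2k+1) + 1) u_{2k+1} + Σ_{i ≥ 2k+2} dᵢ uᵢ`;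
in particular `m + 1` is old (its representation ends in an odd number of zeros). -/
theorem stmt_14 (s t : ℕ) (hs : 0 < s) (ht : 0 < t) (u : ℕ → ℕ)
    (hu0 : u 0 = 1) (hu1 : u 1 = s + t)
    (hur : ∀ n, u (n + 2) = (s + t - 1) * u (n + 1) + s * u n)
    (m : ℕ) (d : ℕ →₀ ℕ)
    (hdig : ∀ i, d i ≤ s + t - 1) (hcond : ∀ i, d (i + 1) = s + t - 1 → d i ≤ s - 1)
    (hval : m = d.sum fun i c => c * u i)
    (k : ℕ)
    (htailr : ∀ j, j ≤ k → d (2 * j) = s + t - 1)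
    (htailq : ∀ j, j < k → d (2 * j + 1) = s - 1)
    (hd : d (2 * k + 1) ≤ s - 1)
    (hd' : d (2 * k + 1) = s - 1 → d (2 * k + 2) < s + t - 1) :
    ∃ d' : ℕ →₀ ℕ,
      (∀ i, d' i ≤ s + t - 1) ∧ (∀ i, d' (i + 1) = s + t - 1 → d' i ≤ s - 1) ∧
      m + 1 = (d'.sum fun i c => c * u i) ∧
      d' (2 * k + 1) = d (2 * k + 1) + 1 ∧
      (∀ i, i < 2 * k + 1 → d' i = 0) ∧
      (∀ i, 2 * k + 1 < i → d' i = d i) ∧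
      d' (2 * k + 1) ≠ 0 := by
  have hblock := sum_range_alternating_add_one hs hu0 hu1 hur d k htailr htailq
  have hcarry := Finsupp.sum_carryInto_add u d (2 * k + 1)
  have hle : d (2 * k + 1) + 1 ≤ s + t - 1 := by omega
  have hnext : d (2 * k + 1 + 1) = s + t - 1 → d (2 * k + 1) + 1 ≤ s - 1 := fun h => by
    have : d (2 * k + 1) ≠ s - 1 := fun heq => (hd' heq).ne h
    omega
  exact ⟨d.carryInto (2 * k + 1), Finsupp.carryInto_le hdig hle,
    Finsupp.carryInto_le_of_succ_eq hcond hnext, by omega, Finsupp.carryInto_apply_self,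
    fun i => Finsupp.carryInto_apply_of_lt, fun i => Finsupp.carryInto_apply_of_gt, by simp⟩
end

section
/- Let 0 = V_0 < V_1 < V_2 < ... enumerate all evil numbers (those whose representation over the numeration system U ends in an even number of zeros), and define W_k by R(W_k) = LR(V_k) (left shift of the representation). Then W_k − s·V_k = t·k for all k ≥ 0. -/
/-!
Let `wₙ` be the number of evil numbers in `[1, uₙ]`. Prepending a digit `c` at position `n` to a
positive tail `y < uₙ` does not move its trailing zeros, so the evil numbers in `[1, c uₙ + y]`
are `c` shifted copies of those in `[1, uₙ]` followed by those in `[1, y]`. Hence there are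
`∑ dᵢ wᵢ` evil numbers in `[1, ∑ dᵢ uᵢ]`; applied to `u (n + 2) - 1` the same splitting shows that
`w` satisfies the recurrence of `u`, whence `u (n + 1) = s uₙ + t wₙ`. As `[1, V k]` contains
exactly `k` evil numbers, summing this identity against the digits of `V k` gives
`W k = s V k + t k`.
-/

/-- Digit conditions for the numeration system with digits `dᵢ ∈ {0, …, r}`,
`r = s + t - 1`, such that `d_{i+1} = r → dᵢ ≤ q = s - 1`. -/
def ValidRep (s t : ℕ) (d : ℕ →₀ ℕ) : Prop :=
  (∀ i, d i ≤ s + t - 1) ∧ ∀ i, d (i + 1) = s + t - 1 → d i ≤ s - 1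

/-- Value of a digit string with respect to the bases `u`. -/
def RepVal (u : ℕ → ℕ) (d : ℕ →₀ ℕ) : ℕ :=
  d.sum fun i c => c * u i

/-- `m` is evil if its (unique) representation over the numeration system with bases `u`
ends in an even number of zeros (with `0` counted as evil). -/
def Evil (s t : ℕ) (u : ℕ → ℕ) (m : ℕ) : Prop :=
  m = 0 ∨ ∃ d : ℕ →₀ ℕ, ValidRep s t d ∧ RepVal u d = m ∧
    ∃ j, Even j ∧ d j ≠ 0 ∧ ∀ i, i < j → d i = 0

open Finset

theorem eq_and_eq_of_mul_add_eq {U a b y z : ℕ} (hy : y < U) (hz : z < U)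
    (h : a * U + y = b * U + z) : a = b ∧ y = z := by
  have hU : 0 < U := by omega
  obtain ⟨h1, h2⟩ := (Nat.div_mod_unique hU).2 ⟨(by rw [← h]; ring : y + U * a = b * U + z), hy⟩
  obtain ⟨h3, h4⟩ := (Nat.div_mod_unique hU).2 ⟨(by ring : z + U * b = b * U + z), hz⟩
  exact ⟨h1.symm.trans h3, h2.symm.trans h4⟩

theorem count_eq_of_forall_lt_iff {p q : ℕ → Prop} [DecidablePred p] [DecidablePred q] {n : ℕ}
    (h : ∀ k < n, p k ↔ q k) : Nat.count p n = Nat.count q n := by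
  simp only [Nat.count_eq_card_filter_range]
  exact congrArg card (filter_congr fun k hk => h k (mem_range.1 hk))

theorem count_apply_of_strictMono {p : ℕ → Prop} [DecidablePred p] {V : ℕ → ℕ}
    (hV : StrictMono V) (hrange : ∀ m, p m ↔ ∃ k, V k = m) (k : ℕ) : Nat.count p (V k) = k := by
  have : {x ∈ range (V k) | p x} = (range k).image V := by
    ext x
    simp only [mem_filter, mem_range, mem_image, hrange]
    constructor
    · rintro ⟨hx, j, rfl⟩
      exact ⟨j, hV.lt_iff_lt.1 hx, rfl⟩
    · rintro ⟨j, hj, rfl⟩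
      exact ⟨hV hj, j, rfl⟩
  rw [Nat.count_eq_card_filter_range, this, card_image_of_injective _ hV.injective, card_range]

theorem sum_mul_eq_sum_range {d : ℕ →₀ ℕ} {N : ℕ} (h : ∀ i, N ≤ i → d i = 0) (g : ℕ → ℕ) :
    (d.sum fun i c => c * g i) = ∑ i ∈ range N, d i * g i :=
  Finsupp.sum_of_support_subset d
    (fun i hi => mem_range.2 (not_le.1 fun hN => Finsupp.mem_support_iff.1 hi (h i hN))) _
    fun _ _ => zero_mul _

section Digits

variable {s t : ℕ} {u : ℕ → ℕ}

theorem le_repVal (d : ℕ →₀ ℕ) (i : ℕ) : d i * u i ≤ RepVal u d := by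
  by_cases h : d i = 0
  · simp [h]
  · exact single_le_sum (f := fun j => d j * u j) (fun _ _ => Nat.zero_le _)
      (Finsupp.mem_support_iff.2 h)

theorem repVal_add_single (d : ℕ →₀ ℕ) (n c : ℕ) :
    RepVal u (d + Finsupp.single n c) = RepVal u d + c * u n := by
  rw [RepVal, Finsupp.sum_add_index' (fun _ => zero_mul _) (fun _ _ _ => add_mul _ _ _),
    Finsupp.sum_single_index (zero_mul _)]
  rfl

def lowVal (u : ℕ → ℕ) (d : ℕ →₀ ℕ) (n : ℕ) : ℕ :=
  ∑ i ∈ range n, d i * u i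

theorem lowVal_succ (d : ℕ →₀ ℕ) (n : ℕ) : lowVal u d (n + 1) = d n * u n + lowVal u d n := by
  rw [lowVal, sum_range_succ, add_comm]
  rfl

theorem ValidRep.mono {d e : ℕ →₀ ℕ} (hd : ValidRep s t d) (hle : e ≤ d) : ValidRep s t e :=
  ⟨fun i => (hle i).trans (hd.1 i),
    fun i hi => (hle i).trans (hd.2 i (le_antisymm (hd.1 _) (hi ▸ hle _)))⟩

theorem ValidRep.add_single {d : ℕ →₀ ℕ} {n c : ℕ} (hd : ValidRep s t d)
    (hsupp : ∀ i, n ≤ i → d i = 0) (hc : c ≤ s + t - 1) (htop : c = s + t - 1 → d (n - 1) ≤ s - 1) :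
    ValidRep s t (d + Finsupp.single n c) := by
  have happly : ∀ i, (d + Finsupp.single n c) i = if i = n then c else d i := by
    intro i
    split_ifs with h
    · simp [h, hsupp n le_rfl]
    · simp [Ne.symm h]
  refine ⟨fun i => ?_, fun i hi => ?_⟩
  · rw [happly]
    split_ifs
    exacts [hc, hd.1 i]
  · rw [happly] at hi ⊢
    split_ifs at hi ⊢ with hin hsucc hsucc
    · omega
    · have := hsupp (i + 1) (by omega)
      omega
    · subst hsucc
      exact htop hi
    · exact hd.2 i hi

def TrailingZerosEven (d : ℕ →₀ ℕ) : Prop :=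
  ∃ j, Even j ∧ d j ≠ 0 ∧ ∀ i, i < j → d i = 0

theorem TrailingZerosEven.of_eqOn {d e : ℕ →₀ ℕ} {n : ℕ} (h : TrailingZerosEven d)
    (heq : ∀ i < n, d i = e i) (hne : ∃ i < n, d i ≠ 0) : TrailingZerosEven e := by
  obtain ⟨j, hj, hdj, hlow⟩ := h
  obtain ⟨i, hin, hdi⟩ := hne
  have hji : j ≤ i := not_lt.1 fun h => hdi (hlow i h)
  exact ⟨j, hj, heq j (by omega) ▸ hdj, fun k hk => heq k (by omega) ▸ hlow k hk⟩

end Digits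

structure IsNumeration (s t : ℕ) (u : ℕ → ℕ) : Prop where
  s_pos : 0 < s
  t_pos : 0 < t
  apply_zero : u 0 = 1
  apply_one : u 1 = s + t
  apply_add_two : ∀ n, u (n + 2) = (s + t - 1) * u (n + 1) + s * u n

open Classical in
/-- The number of evil numbers in `[1, m]`. -/
noncomputable def evilCount (s t : ℕ) (u : ℕ → ℕ) (m : ℕ) : ℕ :=
  Nat.count (fun x => Evil s t u (x + 1)) m

namespace IsNumeration

variable {s t : ℕ} {u : ℕ → ℕ} (hU : IsNumeration s t u)
include hU

theorem one_le_digitMax : 1 ≤ s + t - 1 := by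
  have := hU.s_pos
  have := hU.t_pos
  omega

theorem pos (n : ℕ) : 0 < u n := by
  induction n using Nat.twoStepInduction with
  | zero => simp [hU.apply_zero]
  | one => simp [hU.apply_one, hU.s_pos]
  | more n _ ih => rw [hU.apply_add_two]; have := hU.s_pos; positivity

theorem digitMax_mul_le (n : ℕ) : (s + t - 1) * u n ≤ u (n + 1) := by
  cases n with
  | zero => rw [hU.apply_zero, hU.apply_one]; omega
  | succ n => rw [hU.apply_add_two]; exact Nat.le_add_right _ _

theorem mul_add_lt {n c y : ℕ} (hc : c ≤ s + t - 1) (hy : y < u n)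
    (htop : c = s + t - 1 → y < s * u (n - 1)) : c * u n + y < u (n + 1) := by
  rcases hc.lt_or_eq with hc | rfl
  · calc c * u n + y < (c + 1) * u n := by rw [add_one_mul]; omega
      _ ≤ (s + t - 1) * u n := Nat.mul_le_mul_right _ hc
      _ ≤ u (n + 1) := hU.digitMax_mul_le n
  · cases n with
    | zero => rw [hU.apply_zero] at hy ⊢; rw [hU.apply_one]; have := hU.s_pos; omega
    | succ n =>
      have := htop rfl
      rw [Nat.add_sub_cancel] at this
      rw [hU.apply_add_two]
      omega

theorem strictMono : StrictMono u :=
  strictMono_nat_of_lt_succ fun n => by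
    simpa using hU.mul_add_lt hU.one_le_digitMax (hU.pos n)
      fun _ => Nat.mul_pos hU.s_pos (hU.pos _)

theorem apply_eq_zero_of_repVal_lt {d : ℕ →₀ ℕ} {n i : ℕ} (h : RepVal u d < u n) (hi : n ≤ i) :
    d i = 0 := by
  by_contra hne
  have : u i ≤ RepVal u d :=
    (Nat.le_mul_of_pos_left _ (Nat.pos_of_ne_zero hne)).trans (le_repVal d i)
  exact absurd (h.trans_le (hU.strictMono.monotone hi)) (not_lt.2 this)

theorem repVal_eq_lowVal {d : ℕ →₀ ℕ} {n : ℕ} (h : RepVal u d < u n) :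
    RepVal u d = lowVal u d n :=
  sum_mul_eq_sum_range (fun _ => hU.apply_eq_zero_of_repVal_lt h) u

theorem lowVal_eq_zero_iff {d : ℕ →₀ ℕ} {n : ℕ} : lowVal u d n = 0 ↔ ∀ i < n, d i = 0 := by
  simp [lowVal, sum_eq_zero_iff, (hU.pos _).ne']

theorem lowVal_lt_mul_of_eq_digitMax {d : ℕ →₀ ℕ} {n : ℕ} (hd : ValidRep s t d)
    (hlt : lowVal u d (n - 1) < u (n - 1)) (htop : d n = s + t - 1) :
    lowVal u d n < s * u (n - 1) := by
  cases n with
  | zero => simp [lowVal, hU.apply_zero, hU.s_pos]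
  | succ k =>
    simp only [Nat.add_sub_cancel] at hlt ⊢
    rw [lowVal_succ]
    calc d k * u k + lowVal u d k < (s - 1 + 1) * u k := by
          rw [add_one_mul]; have := Nat.mul_le_mul_right (u k) (hd.2 k htop); omega
      _ = s * u k := by rw [Nat.sub_add_cancel hU.s_pos]

theorem lowVal_lt {d : ℕ →₀ ℕ} (hd : ValidRep s t d) (n : ℕ) : lowVal u d n < u n := by
  induction n using Nat.strong_induction_on with
  | _ n ih =>
    cases n with
    | zero => simp [lowVal, hU.pos]
    | succ k =>
      rw [lowVal_succ]
      exact hU.mul_add_lt (hd.1 k) (ih k k.lt_succ_self)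
        (hU.lowVal_lt_mul_of_eq_digitMax hd (ih (k - 1) (by omega)))

theorem digit_eq_of_repVal_eq {d : ℕ →₀ ℕ} {n c y : ℕ} (hd : ValidRep s t d)
    (h : RepVal u d = c * u n + y) (hy : y < u n) (hlt : c * u n + y < u (n + 1)) :
    d n = c ∧ lowVal u d n = y := by
  have hval := hU.repVal_eq_lowVal (h ▸ hlt)
  rw [lowVal_succ, h] at hval
  exact eq_and_eq_of_mul_add_eq (hU.lowVal_lt hd n) hy hval.symm

theorem evil_mul_iff {n c : ℕ} (hc0 : 0 < c) (hc : c ≤ s + t - 1) :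
    Evil s t u (c * u n) ↔ Even n := by
  have hlt : c * u n + 0 < u (n + 1) :=
    hU.mul_add_lt hc (hU.pos n) fun _ => Nat.mul_pos hU.s_pos (hU.pos _)
  constructor
  · rintro (h0 | ⟨d, hd, hval, j, hj, hdj, hlow⟩)
    · exact absurd h0 (Nat.mul_pos hc0 (hU.pos n)).ne'
    obtain ⟨hdn, hlowVal⟩ := hU.digit_eq_of_repVal_eq hd hval (hU.pos n) hlt
    have hjn : n ≤ j := not_lt.1 fun h => hdj ((hU.lowVal_eq_zero_iff.1 hlowVal) j h)
    have hnj : j ≤ n := not_lt.1 fun h => hc0.ne' (hdn ▸ hlow n h)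
    exact le_antisymm hnj hjn ▸ hj
  · intro hn
    have hvalid : ValidRep s t (0 + Finsupp.single n c) :=
      ValidRep.add_single ⟨fun _ => Nat.zero_le _, fun _ _ => Nat.zero_le _⟩ (fun _ _ => rfl) hc
        fun _ => Nat.zero_le _
    refine Or.inr ⟨_, hvalid, by simp [RepVal], n, hn, by simp [hc0.ne'], ?_⟩
    intro i hi
    simp [hi.ne]

theorem evil_apply_iff (n : ℕ) : Evil s t u (u n) ↔ Even n := by
  simpa using hU.evil_mul_iff one_pos hU.one_le_digitMax (n := n)

/-- The trailing zeros of a positive `y < u n` all lie below position `n`, so a leading digit at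
position `n` does not move them. -/
theorem evil_mul_add_iff {n c y : ℕ} (hc : c ≤ s + t - 1) (hy0 : 0 < y) (hy : y < u n)
    (htop : c = s + t - 1 → y < s * u (n - 1)) : Evil s t u (c * u n + y) ↔ Evil s t u y := by
  constructor
  · rintro (h0 | ⟨e, he, hval, hz⟩)
    · omega
    obtain ⟨hen, hlow⟩ := hU.digit_eq_of_repVal_eq he hval hy (hU.mul_add_lt hc hy htop)
    have hsplit := repVal_add_single (u := u) (e.erase n) n (e n)
    rw [Finsupp.erase_add_single, hval, hen] at hsplit
    refine Or.inr ⟨e.erase n, he.mono fun i => ?_, by omega,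
      TrailingZerosEven.of_eqOn (n := n) hz (fun i hi => (Finsupp.erase_ne hi.ne).symm) ?_⟩
    · rw [Finsupp.erase_apply]
      split_ifs <;> simp
    · by_contra! h
      exact hy0.ne' (hlow ▸ hU.lowVal_eq_zero_iff.2 h)
  · rintro (h0 | ⟨d, hd, hval, hz⟩)
    · omega
    have hsupp : ∀ i, n ≤ i → d i = 0 := fun i => hU.apply_eq_zero_of_repVal_lt (hval ▸ hy)
    have hdigit : c = s + t - 1 → d (n - 1) ≤ s - 1 := fun hcr => by
      have := (le_repVal d (n - 1)).trans_lt (hval ▸ htop hcr)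
      have := lt_of_mul_lt_mul_right this
      omega
    refine Or.inr ⟨d + Finsupp.single n c, hd.add_single hsupp hc hdigit,
      by rw [repVal_add_single, hval, add_comm],
      TrailingZerosEven.of_eqOn (n := n) hz (fun i hi => by simp [hi.ne]) ?_⟩
    have hlow : lowVal u d n = y := (hU.repVal_eq_lowVal (hval ▸ hy)).symm.trans hval
    by_contra! h
    exact hy0.ne' (hlow ▸ hU.lowVal_eq_zero_iff.2 h)

omit hU in
open Classical in
theorem evilCount_succ (m : ℕ) :
    evilCount s t u (m + 1) = evilCount s t u m + if Evil s t u (m + 1) then 1 else 0 :=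
  Nat.count_succ _ m

omit hU in
open Classical in
theorem evilCount_add {a b : ℕ} (h : ∀ y, 0 < y → y ≤ b → (Evil s t u (a + y) ↔ Evil s t u y)) :
    evilCount s t u (a + b) = evilCount s t u a + evilCount s t u b := by
  rw [evilCount, Nat.count_add]
  congr 1
  exact count_eq_of_forall_lt_iff fun k hk => by rw [add_assoc]; exact h (k + 1) k.succ_pos hk

theorem evilCount_mul {n c : ℕ} (hc : c ≤ s + t - 1) :
    evilCount s t u (c * u n) = c * evilCount s t u (u n) := by
  induction c with
  | zero => simp [evilCount]
  | succ c ih =>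
    rw [add_one_mul, evilCount_add, ih (by omega), add_one_mul]
    intro y hy0 hy
    rcases hy.lt_or_eq with hy | rfl
    · exact hU.evil_mul_add_iff (by omega) hy0 hy fun h => absurd h (by omega)
    · rw [← add_one_mul, hU.evil_mul_iff (by omega) hc, hU.evil_apply_iff]

theorem evilCount_mul_add {n c y : ℕ} (hc : c ≤ s + t - 1) (hy : y < u n)
    (htop : c = s + t - 1 → y < s * u (n - 1)) :
    evilCount s t u (c * u n + y) = c * evilCount s t u (u n) + evilCount s t u y := by
  rw [evilCount_add, hU.evilCount_mul hc]
  intro z hz0 hz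
  exact hU.evil_mul_add_iff hc hz0 (hz.trans_lt hy) fun h => hz.trans_lt (htop h)

theorem evilCount_apply_zero : evilCount s t u (u 0) = 1 := by
  have := hU.evil_apply_iff 0
  rw [hU.apply_zero] at this ⊢
  simp [evilCount, Nat.count_one, this]

theorem evilCount_apply_one : evilCount s t u (u 1) = s + t - 1 := by
  have hr : u 1 = (s + t - 1) * u 0 + 1 := by
    rw [hU.apply_zero, hU.apply_one]
    have := hU.s_pos
    omega
  have := hU.evil_apply_iff 1
  rw [hr, evilCount_succ, hU.evilCount_mul le_rfl, hU.evilCount_apply_zero, ← hr,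
    if_neg (by simpa using this)]
  simp

theorem evilCount_apply_add_two (n : ℕ) :
    evilCount s t u (u (n + 2)) =
      (s + t - 1) * evilCount s t u (u (n + 1)) + s * evilCount s t u (u n) := by
  have hsu : 0 < s * u n := Nat.mul_pos hU.s_pos (hU.pos n)
  have hs : s ≤ s + t - 1 := by have := hU.t_pos; omega
  have hlow : s * u n - 1 < u (n + 1) :=
    (Nat.sub_lt hsu one_pos).trans_le ((Nat.mul_le_mul_right _ hs).trans (hU.digitMax_mul_le n))
  have hu : u (n + 2) = ((s + t - 1) * u (n + 1) + (s * u n - 1)) + 1 := by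
    rw [hU.apply_add_two]; omega
  have hsu' : s * u n = (s * u n - 1) + 1 := by omega
  have hevil : Evil s t u (u (n + 2)) ↔ Evil s t u (s * u n) := by
    rw [hU.evil_apply_iff, hU.evil_mul_iff hU.s_pos hs, Nat.even_add]
    simp
  rw [← hU.evilCount_mul hs, hu, evilCount_succ, ← hu, hevil,
    hU.evilCount_mul_add le_rfl hlow fun _ => Nat.sub_lt hsu one_pos, add_assoc, hsu',
    evilCount_succ, ← hsu']

theorem apply_succ_eq (n : ℕ) : u (n + 1) = s * u n + t * evilCount s t u (u n) := by
  induction n using Nat.twoStepInduction with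
  | zero => rw [hU.evilCount_apply_zero, hU.apply_zero, hU.apply_one]; ring
  | one =>
    rw [hU.evilCount_apply_one, hU.apply_add_two, hU.apply_one, hU.apply_zero]
    obtain ⟨r, hr⟩ : ∃ r, s + t = r + 1 := ⟨s + t - 1, by have := hU.s_pos; omega⟩
    rw [hr, Nat.add_sub_cancel]
    linear_combination r * hr.symm
  | more n ih0 ih1 =>
    have h2 := (hU.apply_add_two n).symm.trans ih1
    rw [hU.apply_add_two (n + 1), hU.evilCount_apply_add_two, hU.apply_add_two n]
    linear_combination (s + t - 1) * h2 + s * ih0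

theorem evilCount_lowVal {d : ℕ →₀ ℕ} (hd : ValidRep s t d) (n : ℕ) :
    evilCount s t u (lowVal u d n) = ∑ i ∈ range n, d i * evilCount s t u (u i) := by
  induction n with
  | zero => simp [lowVal, evilCount]
  | succ n ih =>
    have hlt := hU.lowVal_lt hd
    rw [lowVal_succ, hU.evilCount_mul_add (hd.1 n) (hlt n)
      (hU.lowVal_lt_mul_of_eq_digitMax hd (hlt (n - 1))), ih, sum_range_succ, add_comm]

end IsNumeration

theorem evilCount_apply_of_strictMono {s t : ℕ} {u V : ℕ → ℕ} (hV : StrictMono V)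
    (hrange : ∀ m, Evil s t u m ↔ ∃ k, V k = m) (k : ℕ) : evilCount s t u (V k) = k := by
  classical
  have h := Nat.count_succ' (Evil s t u) (V k)
  rw [Nat.count_succ, count_apply_of_strictMono hV hrange, if_pos ((hrange _).2 ⟨k, rfl⟩),
    if_pos (show Evil s t u 0 from Or.inl rfl)] at h
  exact (Nat.add_right_cancel h).symm

theorem stmt_15_general (s t : ℕ) (hs : 0 < s) (ht : 0 < t) (u : ℕ → ℕ)
    (hu0 : u 0 = 1) (hu1 : u 1 = s + t)
    (hur : ∀ n, u (n + 2) = (s + t - 1) * u (n + 1) + s * u n)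
    (V W : ℕ → ℕ) (hVmono : StrictMono V)
    (hVrange : ∀ m, Evil s t u m ↔ ∃ k, V k = m)
    (hW : ∀ k, ∃ d : ℕ →₀ ℕ, ValidRep s t d ∧ RepVal u d = V k ∧
      W k = d.sum fun i c => c * u (i + 1)) :
    ∀ k, W k = s * V k + t * k := by
  have hU : IsNumeration s t u := ⟨hs, ht, hu0, hu1, hur⟩
  intro k
  obtain ⟨d, hd, hval, hWk⟩ := hW k
  set N := V k + 1
  have hlt : RepVal u d < u N := hval ▸ (V k).lt_succ_self.trans_le (hU.strictMono.id_le N)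
  calc W k = ∑ i ∈ range N, d i * u (i + 1) :=
        hWk.trans (sum_mul_eq_sum_range (fun _ => hU.apply_eq_zero_of_repVal_lt hlt) _)
    _ = s * lowVal u d N + t * ∑ i ∈ range N, d i * evilCount s t u (u i) := by
        simp only [hU.apply_succ_eq, lowVal, mul_sum, ← sum_add_distrib]
        exact sum_congr rfl fun i _ => by ring
    _ = s * V k + t * k := by
        rw [← hU.evilCount_lowVal hd, ← hU.repVal_eq_lowVal hlt, hval,
          evilCount_apply_of_strictMono hVmono hVrange]

/-- if `0 = V 0 < V 1 < …` enumerates the evil numbers and `W k` is the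
number whose representation is the left shift of the representation of `V k`, then
`W k - s * V k = t * k`, i.e. `W k = s * V k + t * k`, for all `k`. -/
theorem stmt_15 (s t : ℕ) (hs : 0 < s) (ht : 0 < t) (u : ℕ → ℕ)
    (hu0 : u 0 = 1) (hu1 : u 1 = s + t)
    (hur : ∀ n, u (n + 2) = (s + t - 1) * u (n + 1) + s * u n)
    (V W : ℕ → ℕ) (hVmono : StrictMono V) (hV0 : V 0 = 0)
    (hVrange : ∀ m, Evil s t u m ↔ ∃ k, V k = m)
    (hW : ∀ k, ∃ d : ℕ →₀ ℕ, ValidRep s t d ∧ RepVal u d = V k ∧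
      W k = d.sum fun i c => c * u (i + 1)) :
    ∀ k, W k = s * V k + t * k :=
  stmt_15_general s t hs ht u hu0 hu1 hur V W hVmono hVrange hW
end

section
/- With V_n the n-th evil number and W_n defined by R(W_n) = LR(V_n), one has (V_n, W_n) = (A_n, B_n) for all n ≥ 0, where A_n = mex{A_i, B_i : i < n} and B_n = s·A_n + t·n. Equivalently: the P-positions of the heap game are exactly the pairs (m, m') where m is evil and R(m') is the left shift of R(m). -/
namespace S16

/-- function version of validity -/
def VF (s t : ℕ) (d : ℕ → ℕ) : Prop :=
  (∀ i, d i ≤ s + t - 1) ∧ ∀ i, d (i + 1) = s + t - 1 → d i ≤ s - 1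

/-- value of first N digits -/
def Val (u : ℕ → ℕ) (d : ℕ → ℕ) (N : ℕ) : ℕ := ∑ i ∈ Finset.range N, d i * u i

section
variable {s t : ℕ} (u : ℕ → ℕ)
variable (hs : 0 < s) (ht : 0 < t)
variable (hu0 : u 0 = 1) (hu1 : u 1 = s + t)
    (hur : ∀ n, u (n + 2) = (s + t - 1) * u (n + 1) + s * u n)

include hs ht hu0 hu1 hur

lemma upos : ∀ n, 0 < u n := by
  intro n
  induction n using Nat.strong_induction_on with
  | _ n ih =>
    match n with
    | 0 => omega
    | 1 => omega
    | (k + 2) =>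
      have h0 := ih k (by omega)
      have : 1 * 1 ≤ s * u k := Nat.mul_le_mul hs h0
      rw [hur k]; omega

lemma umono : ∀ n, u n < u (n + 1) := by
  intro n
  match n with
  | 0 => show u 0 < u 1; omega
  | (k + 1) =>
    have h1 := upos u hs ht hu0 hu1 hur (k + 1)
    have h0 := upos u hs ht hu0 hu1 hur k
    have e1 : 1 * u (k + 1) ≤ (s + t - 1) * u (k + 1) := by
      apply Nat.mul_le_mul_right; omega
    have e2 : 1 * 1 ≤ s * u k := Nat.mul_le_mul hs h0
    rw [hur k]; omega

lemma ulb : ∀ n, n + 1 ≤ u n := by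
  intro n
  induction n with
  | zero => omega
  | succ k ih => have := umono u hs ht hu0 hu1 hur k; omega

lemma su_le : ∀ n, s * u n ≤ u (n + 1) := by
  intro n
  match n with
  | 0 => rw [hu0, hu1]; omega
  | (k+1) =>
    rw [hur k]
    have : s * u (k + 1) ≤ (s + t - 1) * u (k + 1) := by
      apply Nat.mul_le_mul_right; omega
    omega

lemma u_succ_le : ∀ n, u (n + 1) ≤ (s + t) * u n := by
  intro n
  match n with
  | 0 => rw [hu0, hu1]; omega
  | (k+1) =>
    rw [hur k]
    have h := su_le u hs ht hu0 hu1 hur k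
    have e : (s + t) * u (k + 1) = (s + t - 1) * u (k+1) + u (k + 1) := by
      have e2 : (s + t - 1 + 1) * u (k + 1) = (s + t - 1) * u (k+1) + u (k + 1) :=
        Nat.succ_mul _ _
      have e3 : s + t - 1 + 1 = s + t := by omega
      rw [e3] at e2; exact e2
    omega

lemma val_lt (d : ℕ → ℕ) (hd : VF s t d) : ∀ n, Val u d n < u n := by
  intro n
  induction n using Nat.strong_induction_on with
  | _ n ih =>
    match n with
    | 0 => simp [Val]; omega
    | 1 =>
      have h0 := hd.1 0
      simp [Val, Finset.sum_range_one, hu0]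
      omega
    | (k + 2) =>
      have hup1 := upos u hs ht hu0 hu1 hur (k + 1)
      have hup0 := upos u hs ht hu0 hu1 hur k
      have hsum2 : Val u d (k + 2) = Val u d (k + 1) + d (k + 1) * u (k + 1) := by
        simp [Val, Finset.sum_range_succ]
      by_cases hc : d (k + 1) = s + t - 1
      · -- top digit is r, use the pair condition
        have hdk : d k ≤ s - 1 := hd.2 k hc
        have hsum1 : Val u d (k + 1) = Val u d k + d k * u k := by
          simp [Val, Finset.sum_range_succ]
        have ihk := ih k (by omega)
        have h1 : d k * u k ≤ (s - 1) * u k := Nat.mul_le_mul_right _ hdk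
        have h2 : (s - 1) * u k + u k = s * u k := by
          have e2 : (s - 1 + 1) * u k = (s - 1) * u k + u k := Nat.succ_mul _ _
          have e3 : s - 1 + 1 = s := by omega
          rw [e3] at e2; omega
        rw [hur k, hsum2, hsum1, hc]
        omega
      · -- top digit < r
        have hc2 : d (k + 1) + 1 ≤ s + t - 1 := by have := hd.1 (k + 1); omega
        have ihk1 := ih (k + 1) (by omega)
        have h1 : (d (k + 1) + 1) * u (k + 1) ≤ (s + t - 1) * u (k + 1) :=
          Nat.mul_le_mul_right _ hc2
        have h2 : (d (k + 1) + 1) * u (k + 1) = d (k + 1) * u (k + 1) + u (k + 1) :=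
          Nat.succ_mul _ _
        have h3 : 1 * 1 ≤ s * u k := Nat.mul_le_mul hs hup0
        rw [hur k, hsum2]
        omega

lemma val_inj (d e : ℕ → ℕ) (hd : VF s t d) (he : VF s t e) :
    ∀ N, Val u d N = Val u e N → ∀ i, i < N → d i = e i := by
  intro N
  induction N with
  | zero => intro _ i hi; omega
  | succ K ihN =>
    intro hV i hi
    have hsd : Val u d (K + 1) = Val u d K + d K * u K := by
      simp [Val, Finset.sum_range_succ]
    have hse : Val u e (K + 1) = Val u e K + e K * u K := by
      simp [Val, Finset.sum_range_succ]
    have hbd := val_lt u hs ht hu0 hu1 hur d hd K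
    have hbe := val_lt u hs ht hu0 hu1 hur e he K
    have htop : d K = e K := by
      rcases Nat.lt_trichotomy (d K) (e K) with h | h | h
      · exfalso
        have : (d K + 1) * u K ≤ e K * u K := Nat.mul_le_mul_right _ h
        have h2 : (d K + 1) * u K = d K * u K + u K := Nat.succ_mul _ _
        omega
      · exact h
      · exfalso
        have : (e K + 1) * u K ≤ d K * u K := Nat.mul_le_mul_right _ h
        have h2 : (e K + 1) * u K = e K * u K + u K := Nat.succ_mul _ _
        omega
    rcases Nat.lt_or_ge i K with hik | hik
    · refine ihN ?_ i hik
      rw [htop] at hsd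
      omega
    · have : i = K := by omega
      rw [this]; exact htop

omit hs ht hu0 hu1 hur in
lemma val_ext (d : ℕ → ℕ) {N N' : ℕ} (hNN : N ≤ N')
    (hz : ∀ i, N ≤ i → d i = 0) : Val u d N' = Val u d N := by
  unfold Val
  rw [Finset.sum_subset (Finset.range_subset_range.2 hNN)]
  intro x hx hx2
  simp only [Finset.mem_range] at hx hx2
  rw [hz x (by omega)]
  ring

lemma umon_le : ∀ {a b : ℕ}, a ≤ b → u a ≤ u b := by
  intro a b hab
  induction b with
  | zero => have : a = 0 := by omega
            rw [this]
  | succ k ih =>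
    rcases Nat.lt_or_ge a (k + 1) with h | h
    · have h1 := ih (by omega)
      have h2 := umono u hs ht hu0 hu1 hur k
      omega
    · have : a = k + 1 := by omega
      rw [this]

lemma rep_exists : ∀ m, ∃ d : ℕ → ℕ, VF s t d ∧ (∀ i, d i ≠ 0 → u i ≤ m) ∧
    Val u d (m + 1) = m := by
  intro m
  induction m using Nat.strong_induction_on with
  | _ m ih =>
    rcases Nat.eq_zero_or_pos m with hm | hm
    · subst hm
      refine ⟨fun _ => 0, ⟨fun i => Nat.zero_le _, fun i _ => Nat.zero_le _⟩,
        fun i h => absurd rfl h, ?_⟩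
      simp [Val]
    · have hex : ∃ k, m < u k := ⟨m, by have := ulb u hs ht hu0 hu1 hur m; omega⟩
      have hn0pos : 0 < Nat.find hex := by
        rcases Nat.eq_zero_or_pos (Nat.find hex) with h | h
        · exfalso
          have h2 := Nat.find_spec hex
          rw [h, hu0] at h2; omega
        · exact h
      obtain ⟨n, hn⟩ : ∃ k, Nat.find hex = k + 1 := ⟨Nat.find hex - 1, by omega⟩
      have hlt : m < u (n + 1) := by rw [← hn]; exact Nat.find_spec hex
      have hle : u n ≤ m := by
        have := Nat.find_min hex (show n < Nat.find hex by omega)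
        omega
      have hupos := upos u hs ht hu0 hu1 hur n
      have hcval : m / u n * u n + m % u n = m := by
        rw [Nat.mul_comm]; exact Nat.div_add_mod m (u n)
      set c := m / u n with hc
      set m' := m % u n with hm'def
      have hm'lt : m' < u n := Nat.mod_lt _ hupos
      have hc1 : 1 ≤ c := (Nat.one_le_div_iff hupos).2 hle
      have hcr : c ≤ s + t - 1 := by
        have h1 : u (n + 1) ≤ (s + t) * u n := u_succ_le u hs ht hu0 hu1 hur n
        have h2 : c * u n < (s + t) * u n := by omega
        have h3 : c < s + t := lt_of_mul_lt_mul_right h2 (Nat.zero_le _)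
        omega
      have hm'm : m' < m := by omega
      obtain ⟨d', hd'V, hd'sup, hd'val⟩ := ih m' hm'm
      have hd'hi : ∀ i, n ≤ i → d' i = 0 := by
        intro i hi
        by_contra h
        have h1 := hd'sup i h
        have h2 : u n ≤ u i := umon_le u hs ht hu0 hu1 hur hi
        omega
      refine ⟨Function.update d' n c, ⟨?_, ?_⟩, ?_, ?_⟩
      · intro i
        by_cases hin : i = n
        · rw [hin, Function.update_self]; exact hcr
        · rw [Function.update_of_ne hin]; exact hd'V.1 i
      · intro i hr
        by_cases hin : i + 1 = n
        · -- top digit is r = s+t-1; show digit below is ≤ s-1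
          rw [hin, Function.update_self] at hr
          have hine : i ≠ n := by omega
          rw [Function.update_of_ne hine]
          by_cases hz : d' i = 0
          · rw [hz]; omega
          · -- m' < s * u i
            have hui : u (n + 1) = (s + t - 1) * u (i + 1) + s * u i := by
              rw [← hin]; exact hur i
            have hkey : m' < s * u i := by
              rw [hui] at hlt
              rw [← hr, hin] at hlt
              omega
            have hiub : u i ≤ m' := hd'sup i hz
            have hilb := ulb u hs ht hu0 hu1 hur i
            have hmem : i ∈ Finset.range (m' + 1) := by
              simp only [Finset.mem_range]; omega
            have hdig : d' i * u i ≤ m' := by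
              have := Finset.single_le_sum
                (f := fun j => d' j * u j)
                (fun j _ => Nat.zero_le _) hmem
              rw [← Val] at this
              rw [hd'val] at this
              exact this
            have : d' i < s := by
              by_contra hge
              push_neg at hge
              have : s * u i ≤ d' i * u i := Nat.mul_le_mul_right _ hge
              omega
            omega
        · by_cases hin2 : i = n
          · exfalso
            rw [hin2] at hr
            rw [Function.update_of_ne (by omega : n + 1 ≠ n)] at hr
            rw [hd'hi (n + 1) (by omega)] at hr
            omega
          · rw [Function.update_of_ne hin] at hr
            rw [Function.update_of_ne hin2]
            exact hd'V.2 i hr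
      · intro i hne
        by_cases hin : i = n
        · rw [hin]; exact hle
        · rw [Function.update_of_ne hin] at hne
          have := hd'sup i hne
          omega
      · have hnm : n < m + 1 := by
          have := ulb u hs ht hu0 hu1 hur n; omega
        have hsplit : ∀ x, Function.update d' n c x * u x
            = d' x * u x + (if x = n then c * u n else 0) := by
          intro x
          by_cases hx : x = n
          · subst hx
            rw [Function.update_self, hd'hi x (le_refl x)]
            simp
          · rw [Function.update_of_ne hx]
            simp [hx]
        have : Val u (Function.update d' n c) (m + 1)
            = Val u d' (m + 1) + c * u n := by
          unfold Val
          rw [Finset.sum_congr rfl (fun x _ => hsplit x), Finset.sum_add_distrib,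
            Finset.sum_ite_eq' (Finset.range (m + 1)) n (fun _ => c * u n)]
          simp [Finset.mem_range.2 hnm]
        rw [this]
        have hext : Val u d' (m + 1) = Val u d' (m' + 1) := by
          apply val_ext
          · omega
          · intro i hi
            by_contra h
            have h1 := hd'sup i h
            have h2 := ulb u hs ht hu0 hu1 hur i
            omega
        rw [hext, hd'val]
        omega

omit hs ht hu0 hu1 hur in
lemma lval_ext (d : ℕ → ℕ) {N N' : ℕ} (h : N ≤ N') (hz : ∀ i, N ≤ i → d i = 0) :
    ∑ i ∈ Finset.range N', d i * u (i + 1) = ∑ i ∈ Finset.range N, d i * u (i + 1) := by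
  rw [eq_comm]
  apply Finset.sum_subset (Finset.range_subset_range.2 h)
  intro x hx hx2
  simp only [Finset.mem_range] at hx hx2
  rw [hz x (by omega)]
  ring

noncomputable def Rep (m : ℕ) : ℕ → ℕ := (rep_exists u hs ht hu0 hu1 hur m).choose

lemma rep_VF (m : ℕ) : VF s t (Rep u hs ht hu0 hu1 hur m) :=
  (rep_exists u hs ht hu0 hu1 hur m).choose_spec.1

lemma rep_sup (m : ℕ) : ∀ i, Rep u hs ht hu0 hu1 hur m i ≠ 0 → u i ≤ m :=
  (rep_exists u hs ht hu0 hu1 hur m).choose_spec.2.1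

lemma rep_val (m : ℕ) : Val u (Rep u hs ht hu0 hu1 hur m) (m + 1) = m :=
  (rep_exists u hs ht hu0 hu1 hur m).choose_spec.2.2

lemma rep_hi (m : ℕ) : ∀ i, m ≤ i → Rep u hs ht hu0 hu1 hur m i = 0 := by
  intro i hi
  by_contra h
  have h1 := rep_sup u hs ht hu0 hu1 hur m i h
  have h2 := ulb u hs ht hu0 hu1 hur i
  omega

lemma rep_val' (m : ℕ) {N : ℕ} (h : m + 1 ≤ N) :
    Val u (Rep u hs ht hu0 hu1 hur m) N = m := by
  rw [val_ext u (Rep u hs ht hu0 hu1 hur m) h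
    (fun i hi => rep_hi u hs ht hu0 hu1 hur m i (by omega))]
  exact rep_val u hs ht hu0 hu1 hur m

lemma rep_eq (d : ℕ → ℕ) (hd : VF s t d) {N m : ℕ}
    (hz : ∀ i, N ≤ i → d i = 0) (hv : Val u d N = m) :
    ∀ i, d i = Rep u hs ht hu0 hu1 hur m i := by
  intro i
  have hN : N ≤ max N (m + 1) := le_max_left _ _
  have h1 : Val u d (max N (m + 1)) = m := by
    rw [val_ext u d hN hz]; exact hv
  have h2 : Val u (Rep u hs ht hu0 hu1 hur m) (max N (m + 1)) = m :=
    rep_val' u hs ht hu0 hu1 hur m (le_max_right _ _)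
  rcases Nat.lt_or_ge i (max N (m + 1)) with h | h
  · exact val_inj u hs ht hu0 hu1 hur d _ hd (rep_VF u hs ht hu0 hu1 hur m) _
      (h1.trans h2.symm) i h
  · rw [hz i (by omega), rep_hi u hs ht hu0 hu1 hur m i (by omega)]

lemma rep_zero : ∀ i, Rep u hs ht hu0 hu1 hur 0 i = 0 := by
  intro i
  exact rep_hi u hs ht hu0 hu1 hur 0 i (Nat.zero_le _)

/-- value of the left-shifted representation of `m` -/
noncomputable def L (m : ℕ) : ℕ :=
  ∑ i ∈ Finset.range (m + 1), Rep u hs ht hu0 hu1 hur m i * u (i + 1)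

lemma L_eq (m : ℕ) {N : ℕ} (h : m + 1 ≤ N) :
    ∑ i ∈ Finset.range N, Rep u hs ht hu0 hu1 hur m i * u (i + 1)
      = L u hs ht hu0 hu1 hur m :=
  lval_ext u _ h (fun i hi => rep_hi u hs ht hu0 hu1 hur m i (by omega))

lemma L_zero : L u hs ht hu0 hu1 hur 0 = 0 := by
  unfold L
  apply Finset.sum_eq_zero
  intro x _
  rw [rep_zero u hs ht hu0 hu1 hur x]
  ring

/-- bridge: any valid Finsupp representation agrees with `Rep` -/
lemma finsupp_rep (d : ℕ →₀ ℕ) (hd : ValidRep s t d) {m : ℕ} (hv : RepVal u d = m) :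
    ∀ i, d i = Rep u hs ht hu0 hu1 hur m i := by
  obtain ⟨N, hN⟩ : ∃ N, ∀ i, N ≤ i → d i = 0 := by
    refine ⟨(d.support.sup id) + 1, fun i hi => ?_⟩
    by_contra h
    have h1 : i ∈ d.support := Finsupp.mem_support_iff.2 h
    have h2 : id i ≤ d.support.sup id := Finset.le_sup h1
    simp only [id] at h2
    omega
  have hv' : Val u (⇑d) N = m := by
    rw [← hv]
    unfold Val RepVal
    rw [Finsupp.sum_of_support_subset d (s := Finset.range N) ?_ _ (by intros; ring)]
    intro x hx
    simp only [Finset.mem_range]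
    by_contra h
    exact (Finsupp.mem_support_iff.1 hx) (hN x (by omega))
  exact rep_eq u hs ht hu0 hu1 hur (⇑d) ⟨hd.1, hd.2⟩ hN hv'

lemma evil_iff (m : ℕ) : Evil s t u m ↔ m = 0 ∨
    ∃ j, Even j ∧ Rep u hs ht hu0 hu1 hur m j ≠ 0 ∧
      ∀ i, i < j → Rep u hs ht hu0 hu1 hur m i = 0 := by
  constructor
  · rintro (h | ⟨d, hd, hv, j, hje, hjnz, hjz⟩)
    · exact Or.inl h
    · right
      have hbr := finsupp_rep u hs ht hu0 hu1 hur d hd hv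
      exact ⟨j, hje, by rw [← hbr j]; exact hjnz, fun i hi => by rw [← hbr i]; exact hjz i hi⟩
  · rintro (h | ⟨j, hje, hjnz, hjz⟩)
    · exact Or.inl h
    · right
      refine ⟨Finsupp.onFinset (Finset.range (m + 1)) (Rep u hs ht hu0 hu1 hur m) ?_,
        ⟨?_, ?_⟩, ?_, j, hje, ?_, ?_⟩
      · intro a ha
        simp only [Finset.mem_range]
        by_contra h2
        exact ha (rep_hi u hs ht hu0 hu1 hur m a (by omega))
      · intro i
        simp only [Finsupp.onFinset_apply]
        exact (rep_VF u hs ht hu0 hu1 hur m).1 i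
      · intro i
        simp only [Finsupp.onFinset_apply]
        exact (rep_VF u hs ht hu0 hu1 hur m).2 i
      · unfold RepVal
        rw [Finsupp.onFinset_sum _ (fun a => by ring)]
        exact rep_val u hs ht hu0 hu1 hur m
      · simpa only [Finsupp.onFinset_apply] using hjnz
      · intro i hi
        simpa only [Finsupp.onFinset_apply] using hjz i hi

omit hs ht hu0 hu1 hur in
lemma pred_mul (a x : ℕ) (ha : 0 < a) : a * x = (a - 1) * x + x := by
  obtain ⟨k, rfl⟩ : ∃ k, a = k + 1 := ⟨a - 1, by omega⟩
  simp [Nat.succ_mul]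

/-- zero out digits below `p`, increment digit `p` -/
def Dmod (d : ℕ → ℕ) (p : ℕ) : ℕ → ℕ :=
  fun i => if i < p then 0 else if i = p then d i + 1 else d i

omit hs ht hu0 hu1 hur in
lemma dmod_sum (d : ℕ → ℕ) (p N : ℕ) (hpN : p < N) (w : ℕ → ℕ) :
    ∑ i ∈ Finset.range N, Dmod d p i * w i + ∑ i ∈ Finset.range p, d i * w i
      = ∑ i ∈ Finset.range N, d i * w i + w p := by
  have h1 : ∑ i ∈ Finset.range N, (if i < p then d i * w i else 0)
      = ∑ i ∈ Finset.range p, d i * w i := by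
    rw [← Finset.sum_filter]
    apply Finset.sum_congr
    · ext x
      simp only [Finset.mem_filter, Finset.mem_range]
      omega
    · intros; rfl
  have h2 : ∑ i ∈ Finset.range N, (if i = p then w p else 0) = w p := by
    rw [Finset.sum_ite_eq' (Finset.range N) p (fun _ => w p)]
    simp [Finset.mem_range.2 hpN]
  have h3 : ∀ i ∈ Finset.range N,
      Dmod d p i * w i + (if i < p then d i * w i else 0)
        = d i * w i + (if i = p then w p else 0) := by
    intro i _
    unfold Dmod
    by_cases h1 : i < p
    · rw [if_pos h1, if_pos h1, if_neg (by omega : ¬ i = p)]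
      omega
    · by_cases h2 : i = p
      · rw [if_neg h1, if_neg h1, if_pos h2, if_pos h2]
        subst h2
        rw [Nat.succ_mul]
        omega
      · rw [if_neg h1, if_neg h1, if_neg h2, if_neg h2]
  calc ∑ i ∈ Finset.range N, Dmod d p i * w i + ∑ i ∈ Finset.range p, d i * w i
      = ∑ i ∈ Finset.range N, (Dmod d p i * w i + (if i < p then d i * w i else 0)) := by
        rw [Finset.sum_add_distrib, h1]
    _ = ∑ i ∈ Finset.range N, (d i * w i + (if i = p then w p else 0)) :=
        Finset.sum_congr rfl h3
    _ = _ := by rw [Finset.sum_add_distrib, h2]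

lemma shift_step (m p : ℕ)
    (hVF : VF s t (Dmod (Rep u hs ht hu0 hu1 hur m) p))
    (hval : Val u (Rep u hs ht hu0 hu1 hur m) p + 1 = u p) :
    (∀ i, i < p → Rep u hs ht hu0 hu1 hur (m + 1) i = 0) ∧
    Rep u hs ht hu0 hu1 hur (m + 1) p = Rep u hs ht hu0 hu1 hur m p + 1 ∧
    (∀ i, p < i → Rep u hs ht hu0 hu1 hur (m + 1) i = Rep u hs ht hu0 hu1 hur m i) ∧
    L u hs ht hu0 hu1 hur (m + 1)
        + ∑ i ∈ Finset.range p, Rep u hs ht hu0 hu1 hur m i * u (i + 1)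
      = L u hs ht hu0 hu1 hur m + u (p + 1) := by
  set d := Rep u hs ht hu0 hu1 hur m with hd
  set N := m + p + 2 with hN
  have hpN : p < N := by omega
  have hze : ∀ i, N ≤ i → Dmod d p i = 0 := by
    intro i hi
    unfold Dmod
    rw [if_neg (by omega : ¬ i < p), if_neg (by omega : ¬ i = p)]
    exact rep_hi u hs ht hu0 hu1 hur m i (by omega)
  have key1 := dmod_sum d p N hpN u
  have hvdN : Val u d N = m := rep_val' u hs ht hu0 hu1 hur m (by omega)
  have hvale : Val u (Dmod d p) N = m + 1 := by
    have h1 : Val u (Dmod d p) N + Val u d p = Val u d N + u p := key1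
    rw [hvdN] at h1
    omega
  have hrep : ∀ i, Dmod d p i = Rep u hs ht hu0 hu1 hur (m + 1) i :=
    rep_eq u hs ht hu0 hu1 hur (Dmod d p) hVF hze hvale
  refine ⟨?_, ?_, ?_, ?_⟩
  · intro i hi
    rw [← hrep i]
    unfold Dmod
    rw [if_pos hi]
  · rw [← hrep p]
    unfold Dmod
    rw [if_neg (lt_irrefl p), if_pos rfl]
  · intro i hi
    rw [← hrep i]
    unfold Dmod
    rw [if_neg (by omega : ¬ i < p), if_neg (by omega : ¬ i = p)]
  · have key2 := dmod_sum d p N hpN (fun i => u (i + 1))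
    have e1 : ∑ i ∈ Finset.range N, Dmod d p i * u (i + 1)
        = L u hs ht hu0 hu1 hur (m + 1) := by
      rw [Finset.sum_congr rfl (fun i _ => by rw [hrep i])]
      exact L_eq u hs ht hu0 hu1 hur (m + 1) (by omega)
    have e2 : ∑ i ∈ Finset.range N, d i * u (i + 1) = L u hs ht hu0 hu1 hur m :=
      L_eq u hs ht hu0 hu1 hur m (by omega)
    rw [e1, e2] at key2
    exact key2

lemma chainB_val (d : ℕ → ℕ) (h0 : d 0 = s + t - 1) :
    ∀ l, (∀ i, i < l → d (2*i+1) = s - 1 ∧ d (2*i+2) = s + t - 1) →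
    Val u d (2*l+1) + 1 = u (2*l+1) := by
  intro l
  induction l with
  | zero =>
    intro _
    have : Val u d 1 = d 0 * u 0 := by simp [Val]
    rw [show 2*0+1 = 1 from by omega, this, h0, hu0, Nat.mul_one, hu1]
    omega
  | succ k ih =>
    intro hp
    have e1 := ih (fun i hi => hp i (by omega))
    have hd1 := (hp k (by omega)).1
    have hd2 := (hp k (by omega)).2
    have v1 : Val u d (2*k+2) = Val u d (2*k+1) + d (2*k+1) * u (2*k+1) := by
      unfold Val
      rw [show 2*k+2 = (2*k+1)+1 from by omega, Finset.sum_range_succ]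
    have v2 : Val u d (2*k+3) = Val u d (2*k+2) + d (2*k+2) * u (2*k+2) := by
      unfold Val
      rw [show 2*k+3 = (2*k+2)+1 from by omega, Finset.sum_range_succ]
    have hu3 : u (2*k+3) = (s+t-1) * u (2*k+2) + s * u (2*k+1) := by
      have h := hur (2*k+1)
      rw [show 2*k+1+2 = 2*k+3 from by omega, show 2*k+1+1 = 2*k+2 from by omega] at h
      exact h
    have hmul := pred_mul s (u (2*k+1)) hs
    rw [show 2*(k+1)+1 = 2*k+3 from by omega, v2, v1, hd1, hd2]
    omega

omit ht in
lemma chainB_L (d : ℕ → ℕ) (h0 : d 0 = s + t - 1) :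
    ∀ l, (∀ i, i < l → d (2*i+1) = s - 1 ∧ d (2*i+2) = s + t - 1) →
    (∑ i ∈ Finset.range (2*l+1), d i * u (i+1)) + s = u (2*l+2) := by
  intro l
  induction l with
  | zero =>
    intro _
    have h1 : ∑ i ∈ Finset.range (2*0+1), d i * u (i+1) = d 0 * u 1 := by
      rw [show 2*0+1 = 1 from by omega]; simp
    have h2 := hur 0
    rw [show (0:ℕ)+2 = 2 from by omega, show (0:ℕ)+1 = 1 from by omega, hu0, Nat.mul_one] at h2
    rw [h1, h0, show 2*0+2 = 2 from by omega, h2]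
  | succ k ih =>
    intro hp
    have e1 := ih (fun i hi => hp i (by omega))
    have hd1 := (hp k (by omega)).1
    have hd2 := (hp k (by omega)).2
    have v1 : ∑ i ∈ Finset.range (2*k+2), d i * u (i+1)
        = ∑ i ∈ Finset.range (2*k+1), d i * u (i+1) + d (2*k+1) * u (2*k+2) := by
      rw [show 2*k+2 = (2*k+1)+1 from by omega, Finset.sum_range_succ]
    have v2 : ∑ i ∈ Finset.range (2*k+3), d i * u (i+1)
        = ∑ i ∈ Finset.range (2*k+2), d i * u (i+1) + d (2*k+2) * u (2*k+3) := by
      rw [show 2*k+3 = (2*k+2)+1 from by omega, Finset.sum_range_succ]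
    have hu4 : u (2*k+4) = (s+t-1) * u (2*k+3) + s * u (2*k+2) := by
      have h := hur (2*k+2)
      rw [show 2*k+2+2 = 2*k+4 from by omega, show 2*k+2+1 = 2*k+3 from by omega] at h
      exact h
    have hmul := pred_mul s (u (2*k+2)) hs
    rw [show 2*(k+1)+1 = 2*k+3 from by omega, show 2*(k+1)+2 = 2*k+4 from by omega,
      v2, v1, hd1, hd2]
    omega

lemma chainC_val (d : ℕ → ℕ) :
    ∀ l, (∀ i, i ≤ l → d (2*i) = s - 1 ∧ d (2*i+1) = s + t - 1) →
    Val u d (2*l+2) + 1 = u (2*l+2) := by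
  intro l
  induction l with
  | zero =>
    intro hp
    have hd0 : d 0 = s - 1 := by simpa using (hp 0 (le_refl 0)).1
    have hd1 : d 1 = s + t - 1 := by simpa using (hp 0 (le_refl 0)).2
    have h1 : Val u d 2 = d 0 * u 0 + d 1 * u 1 := by
      simp [Val, Finset.sum_range_succ]
    have h2 := hur 0
    rw [show (0:ℕ)+2 = 2 from by omega, show (0:ℕ)+1 = 1 from by omega, hu0, Nat.mul_one] at h2
    rw [show 2*0+2 = 2 from by omega, h1, hd0, hd1, hu0, Nat.mul_one, h2]
    omega
  | succ k ih =>
    intro hp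
    have e1 := ih (fun i hi => hp i (by omega))
    have hd1 : d (2*k+2) = s - 1 := by
      rw [show 2*k+2 = 2*(k+1) from by omega]; exact (hp (k+1) (le_refl _)).1
    have hd2 : d (2*k+3) = s + t - 1 := by
      rw [show 2*k+3 = 2*(k+1)+1 from by omega]; exact (hp (k+1) (le_refl _)).2
    have v1 : Val u d (2*k+3) = Val u d (2*k+2) + d (2*k+2) * u (2*k+2) := by
      unfold Val
      rw [show 2*k+3 = (2*k+2)+1 from by omega, Finset.sum_range_succ]
    have v2 : Val u d (2*k+4) = Val u d (2*k+3) + d (2*k+3) * u (2*k+3) := by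
      unfold Val
      rw [show 2*k+4 = (2*k+3)+1 from by omega, Finset.sum_range_succ]
    have hu4 : u (2*k+4) = (s+t-1) * u (2*k+3) + s * u (2*k+2) := by
      have h := hur (2*k+2)
      rw [show 2*k+2+2 = 2*k+4 from by omega, show 2*k+2+1 = 2*k+3 from by omega] at h
      exact h
    have hmul := pred_mul s (u (2*k+2)) hs
    rw [show 2*(k+1)+2 = 2*k+4 from by omega, v2, v1, hd1, hd2]
    omega

omit ht hu0 in
lemma chainC_L (d : ℕ → ℕ) :
    ∀ l, (∀ i, i ≤ l → d (2*i) = s - 1 ∧ d (2*i+1) = s + t - 1) →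
    (∑ i ∈ Finset.range (2*l+2), d i * u (i+1)) + (s + t) = u (2*l+3) := by
  intro l
  induction l with
  | zero =>
    intro hp
    have hd0 : d 0 = s - 1 := by simpa using (hp 0 (le_refl 0)).1
    have hd1 : d 1 = s + t - 1 := by simpa using (hp 0 (le_refl 0)).2
    have h1 : ∑ i ∈ Finset.range 2, d i * u (i+1) = d 0 * u 1 + d 1 * u 2 := by
      simp [Finset.sum_range_succ]
    have h3 := hur 1
    rw [show (1:ℕ)+2 = 3 from by omega, show (1:ℕ)+1 = 2 from by omega] at h3
    have hmul := pred_mul s (u 1) hs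
    rw [show 2*0+2 = 2 from by omega, show 2*0+3 = 3 from by omega, h1, hd0, hd1, h3, ← hu1]
    omega
  | succ k ih =>
    intro hp
    have e1 := ih (fun i hi => hp i (by omega))
    have hd1 : d (2*k+2) = s - 1 := by
      rw [show 2*k+2 = 2*(k+1) from by omega]; exact (hp (k+1) (le_refl _)).1
    have hd2 : d (2*k+3) = s + t - 1 := by
      rw [show 2*k+3 = 2*(k+1)+1 from by omega]; exact (hp (k+1) (le_refl _)).2
    have v1 : ∑ i ∈ Finset.range (2*k+3), d i * u (i+1)
        = ∑ i ∈ Finset.range (2*k+2), d i * u (i+1) + d (2*k+2) * u (2*k+3) := by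
      rw [show 2*k+3 = (2*k+2)+1 from by omega, Finset.sum_range_succ]
    have v2 : ∑ i ∈ Finset.range (2*k+4), d i * u (i+1)
        = ∑ i ∈ Finset.range (2*k+3), d i * u (i+1) + d (2*k+3) * u (2*k+4) := by
      rw [show 2*k+4 = (2*k+3)+1 from by omega, Finset.sum_range_succ]
    have hu5 : u (2*k+5) = (s+t-1) * u (2*k+4) + s * u (2*k+3) := by
      have h := hur (2*k+3)
      rw [show 2*k+3+2 = 2*k+5 from by omega, show 2*k+3+1 = 2*k+4 from by omega] at h
      exact h
    have hmul := pred_mul s (u (2*k+3)) hs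
    rw [show 2*(k+1)+2 = 2*k+4 from by omega, show 2*(k+1)+3 = 2*k+5 from by omega,
      v2, v1, hd1, hd2]
    omega

lemma inc (m : ℕ) : ∃ p,
    (∀ i, i < p → Rep u hs ht hu0 hu1 hur (m + 1) i = 0) ∧
    Rep u hs ht hu0 hu1 hur (m + 1) p = Rep u hs ht hu0 hu1 hur m p + 1 ∧
    (∀ i, p < i → Rep u hs ht hu0 hu1 hur (m + 1) i = Rep u hs ht hu0 hu1 hur m i) ∧
    (Even p → L u hs ht hu0 hu1 hur (m + 1) = L u hs ht hu0 hu1 hur m + (s + t)) ∧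
    (¬ Even p → L u hs ht hu0 hu1 hur (m + 1) = L u hs ht hu0 hu1 hur m + s) ∧
    (Rep u hs ht hu0 hu1 hur m 0 = 0 → Even p) := by
  set d := Rep u hs ht hu0 hu1 hur m with hdd
  have hVFd : VF s t d := rep_VF u hs ht hu0 hu1 hur m
  have hhi : ∀ i, m ≤ i → d i = 0 := rep_hi u hs ht hu0 hu1 hur m
  by_cases hB : d 0 = s + t - 1
  · -- carry chain starting with digit r at position 0; p = 2l+1 odd
    have hex : ∃ n, ¬(d (2*n+1) = s - 1 ∧ d (2*n+2) = s + t - 1) := by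
      refine ⟨m, ?_⟩
      have hz : d (2*m+2) = 0 := hhi _ (by omega)
      rintro ⟨_, h2⟩
      omega
    obtain ⟨l, hbreak, hpairs⟩ : ∃ l, ¬(d (2*l+1) = s - 1 ∧ d (2*l+2) = s + t - 1) ∧
        ∀ i, i < l → (d (2*i+1) = s - 1 ∧ d (2*i+2) = s + t - 1) := by
      refine ⟨Nat.find hex, Nat.find_spec hex, fun i hi => ?_⟩
      exact not_not.mp (Nat.find_min hex hi)
    have htop : d (2*l) = s + t - 1 := by
      rcases Nat.eq_zero_or_pos l with h | h
      · rw [show 2*l = 0 from by omega]; exact hB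
      · obtain ⟨k, hk⟩ : ∃ k, l = k + 1 := ⟨l-1, by omega⟩
        rw [show 2*l = 2*k+2 from by omega]
        exact (hpairs k (by omega)).2
    have hne : d (2*l+1) ≠ s + t - 1 := by
      intro h
      have := hVFd.2 (2*l) h
      omega
    have hdp1 : d (2*l+1) + 1 ≤ s + t - 1 := by
      have := hVFd.1 (2*l+1)
      omega
    have hVFe : VF s t (Dmod d (2*l+1)) := by
      constructor
      · intro i
        unfold Dmod
        by_cases h1 : i < 2*l+1
        · rw [if_pos h1]; omega
        · by_cases h2 : i = 2*l+1
          · rw [if_neg h1, if_pos h2, h2]; exact hdp1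
          · rw [if_neg h1, if_neg h2]; exact hVFd.1 i
      · intro i hcond
        unfold Dmod at hcond ⊢
        by_cases c1 : i + 1 < 2*l+1
        · rw [if_pos c1] at hcond
          exact absurd hcond (by omega)
        · by_cases c2 : i + 1 = 2*l+1
          · rw [if_pos (by omega : i < 2*l+1)]
            omega
          · -- i + 1 > 2*l+1
            rw [if_neg c1, if_neg c2] at hcond
            by_cases c3 : i = 2*l+1
            · rw [if_neg (by omega : ¬ i < 2*l+1), if_pos c3]
              rw [c3, show 2*l+1+1 = 2*l+2 from by omega] at hcond
              have h4 := hVFd.2 (2*l+1)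
              rw [show 2*l+1+1 = 2*l+2 from by omega] at h4
              have h5 := h4 hcond
              have h6 : d (2*l+1) ≠ s - 1 := fun h => hbreak ⟨h, hcond⟩
              rw [c3]
              omega
            · rw [if_neg (by omega : ¬ i < 2*l+1), if_neg c3]
              exact hVFd.2 i hcond
    have hval : Val u d (2*l+1) + 1 = u (2*l+1) :=
      chainB_val u hs ht hu0 hu1 hur d hB l hpairs
    obtain ⟨c1, c2, c3, c4⟩ := shift_step u hs ht hu0 hu1 hur m (2*l+1) hVFe hval
    have hLc := chainB_L u hs hu0 hu1 hur d hB l hpairs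
    rw [show 2*l+1+1 = 2*l+2 from by omega, ← hdd] at c4
    refine ⟨2*l+1, c1, c2, c3, ?_, ?_, ?_⟩
    · intro hev
      rw [Nat.even_iff] at hev
      omega
    · intro _
      omega
    · intro h0
      omega
  · by_cases hC : d 0 = s - 1 ∧ d 1 = s + t - 1
    · -- carry chain starting with (q, r) at positions (0,1); p = 2l+2 even
      have hex : ∃ n, ¬(d (2*n+2) = s - 1 ∧ d (2*n+3) = s + t - 1) := by
        refine ⟨m, ?_⟩
        have hz : d (2*m+3) = 0 := hhi _ (by omega)
        rintro ⟨_, h2⟩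
        omega
      obtain ⟨l, hbreak, hpairs⟩ : ∃ l, ¬(d (2*l+2) = s - 1 ∧ d (2*l+3) = s + t - 1) ∧
          ∀ i, i < l → (d (2*i+2) = s - 1 ∧ d (2*i+3) = s + t - 1) := by
        refine ⟨Nat.find hex, Nat.find_spec hex, fun i hi => ?_⟩
        exact not_not.mp (Nat.find_min hex hi)
      have hpa : ∀ i, i ≤ l → d (2*i) = s - 1 ∧ d (2*i+1) = s + t - 1 := by
        intro i hi
        match i with
        | 0 => exact ⟨by rw [show 2*0 = 0 from by omega]; exact hC.1,
                 by rw [show 2*0+1 = 1 from by omega]; exact hC.2⟩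
        | (j+1) =>
          constructor
          · rw [show 2*(j+1) = 2*j+2 from by omega]
            exact (hpairs j (by omega)).1
          · rw [show 2*(j+1)+1 = 2*j+3 from by omega]
            exact (hpairs j (by omega)).2
      have htop : d (2*l+1) = s + t - 1 := (hpa l (le_refl l)).2
      have hne : d (2*l+2) ≠ s + t - 1 := by
        intro h
        have h2 := hVFd.2 (2*l+1)
        rw [show 2*l+1+1 = 2*l+2 from by omega] at h2
        have := h2 h
        omega
      have hdp1 : d (2*l+2) + 1 ≤ s + t - 1 := by
        have := hVFd.1 (2*l+2)
        omega
      have hVFe : VF s t (Dmod d (2*l+2)) := by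
        constructor
        · intro i
          unfold Dmod
          by_cases h1 : i < 2*l+2
          · rw [if_pos h1]; omega
          · by_cases h2 : i = 2*l+2
            · rw [if_neg h1, if_pos h2, h2]; exact hdp1
            · rw [if_neg h1, if_neg h2]; exact hVFd.1 i
        · intro i hcond
          unfold Dmod at hcond ⊢
          by_cases c1 : i + 1 < 2*l+2
          · rw [if_pos c1] at hcond
            exact absurd hcond (by omega)
          · by_cases c2 : i + 1 = 2*l+2
            · rw [if_pos (by omega : i < 2*l+2)]
              omega
            · rw [if_neg c1, if_neg c2] at hcond
              by_cases c3 : i = 2*l+2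
              · rw [if_neg (by omega : ¬ i < 2*l+2), if_pos c3]
                rw [c3, show 2*l+2+1 = 2*l+3 from by omega] at hcond
                have h4 := hVFd.2 (2*l+2)
                rw [show 2*l+2+1 = 2*l+3 from by omega] at h4
                have h5 := h4 hcond
                have h6 : d (2*l+2) ≠ s - 1 := fun h => hbreak ⟨h, hcond⟩
                rw [c3]
                omega
              · rw [if_neg (by omega : ¬ i < 2*l+2), if_neg c3]
                exact hVFd.2 i hcond
      have hval : Val u d (2*l+2) + 1 = u (2*l+2) :=
        chainC_val u hs ht hu0 hu1 hur d l hpa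
      obtain ⟨c1, c2, c3, c4⟩ := shift_step u hs ht hu0 hu1 hur m (2*l+2) hVFe hval
      have hLc := chainC_L u hs hu1 hur d l hpa
      rw [show 2*l+2+1 = 2*l+3 from by omega, ← hdd] at c4
      refine ⟨2*l+2, c1, c2, c3, ?_, ?_, ?_⟩
      · intro _
        omega
      · intro hodd
        exfalso
        apply hodd
        exact ⟨l+1, by omega⟩
      · intro _
        exact ⟨l+1, by omega⟩
    · -- no carry: p = 0
      have hb0 := hVFd.1 0
      have hVFe : VF s t (Dmod d 0) := by
        constructor
        · intro i
          unfold Dmod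
          by_cases h2 : i = 0
          · rw [if_neg (by omega), if_pos h2, h2]
            omega
          · rw [if_neg (by omega), if_neg h2]
            exact hVFd.1 i
        · intro i hcond
          unfold Dmod at hcond ⊢
          rw [if_neg (by omega : ¬ i + 1 < 0), if_neg (by omega : ¬ i + 1 = 0)] at hcond
          by_cases h2 : i = 0
          · rw [if_neg (by omega), if_pos h2, h2]
            rw [h2] at hcond
            have h3 := hVFd.2 0 hcond
            have h4 : d 0 ≠ s - 1 := fun h => hC ⟨h, hcond⟩
            omega
          · rw [if_neg (by omega), if_neg h2]
            exact hVFd.2 i hcond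
      have hval : Val u d 0 + 1 = u 0 := by
        simp [Val, hu0]
      obtain ⟨c1, c2, c3, c4⟩ := shift_step u hs ht hu0 hu1 hur m 0 hVFe hval
      rw [show (0:ℕ)+1 = 1 from rfl, hu1] at c4
      simp only [Finset.range_zero, Finset.sum_empty] at c4
      refine ⟨0, c1, c2, c3, ?_, ?_, ?_⟩
      · intro _
        omega
      · intro hodd
        exact absurd (Even.zero) hodd
      · intro _
        exact Even.zero

lemma exists_least (x : ℕ) (hx : x ≠ 0) :
    ∃ j, Rep u hs ht hu0 hu1 hur x j ≠ 0 ∧ ∀ i, i < j → Rep u hs ht hu0 hu1 hur x i = 0 := by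
  have hex : ∃ j, Rep u hs ht hu0 hu1 hur x j ≠ 0 := by
    by_contra h
    push_neg at h
    have h2 : Val u (Rep u hs ht hu0 hu1 hur x) (x + 1) = 0 :=
      Finset.sum_eq_zero (fun i _ => by rw [h i]; ring)
    rw [rep_val] at h2
    exact hx h2
  exact ⟨Nat.find hex, Nat.find_spec hex, fun i hi => not_not.mp (Nat.find_min hex hi)⟩

lemma rep_L (m : ℕ) :
    Rep u hs ht hu0 hu1 hur (L u hs ht hu0 hu1 hur m) 0 = 0 ∧
    ∀ i, Rep u hs ht hu0 hu1 hur (L u hs ht hu0 hu1 hur m) (i + 1)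
      = Rep u hs ht hu0 hu1 hur m i := by
  set d := Rep u hs ht hu0 hu1 hur m with hdd
  have hVFd : VF s t d := rep_VF u hs ht hu0 hu1 hur m
  set e : ℕ → ℕ := fun i => if i = 0 then 0 else d (i - 1) with hee
  have he0 : e 0 = 0 := rfl
  have heS : ∀ i, e (i + 1) = d i := by
    intro i
    show (if i + 1 = 0 then 0 else d (i + 1 - 1)) = d i
    rw [if_neg (by omega : ¬ i + 1 = 0), Nat.add_sub_cancel]
  have hVFe : VF s t e := by
    constructor
    · intro i
      match i with
      | 0 => rw [he0]; omega
      | (j+1) => rw [heS j]; exact hVFd.1 j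
    · intro i hcond
      rw [heS i] at hcond
      match i with
      | 0 => rw [he0]; omega
      | (j+1) =>
        rw [heS j]
        exact hVFd.2 j hcond
  have hz : ∀ i, m + 2 ≤ i → e i = 0 := by
    intro i hi
    match i, hi with
    | (j+1), hi =>
      rw [heS j]
      exact rep_hi u hs ht hu0 hu1 hur m j (by omega)
  have hv : Val u e (m + 2) = L u hs ht hu0 hu1 hur m := by
    unfold Val
    rw [show m + 2 = (m+1) + 1 from by omega,
      Finset.sum_range_succ' (fun i => e i * u i) (m+1)]
    rw [he0]
    simp only [Nat.zero_mul, Nat.add_zero, Nat.mul_zero, zero_mul, add_zero]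
    unfold L
    apply Finset.sum_congr rfl
    intro i _
    rw [heS i]
  have hrep := rep_eq u hs ht hu0 hu1 hur e hVFe hz hv
  exact ⟨by rw [← hrep 0, he0], fun i => by rw [← hrep (i+1), heS i]⟩

lemma unshift (x : ℕ) (h0 : Rep u hs ht hu0 hu1 hur x 0 = 0) :
    ∃ y, L u hs ht hu0 hu1 hur y = x ∧
      ∀ i, Rep u hs ht hu0 hu1 hur y i = Rep u hs ht hu0 hu1 hur x (i + 1) := by
  set d := Rep u hs ht hu0 hu1 hur x with hdd
  have hVFd : VF s t d := rep_VF u hs ht hu0 hu1 hur x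
  set e : ℕ → ℕ := fun i => d (i + 1) with hee
  have hVFe : VF s t e := by
    constructor
    · intro i
      exact hVFd.1 (i + 1)
    · intro i hcond
      exact hVFd.2 (i + 1) hcond
  have hz : ∀ i, x + 1 ≤ i → e i = 0 := by
    intro i hi
    exact rep_hi u hs ht hu0 hu1 hur x (i + 1) (by omega)
  set y := Val u e (x + 1) with hy
  have hrep : ∀ i, e i = Rep u hs ht hu0 hu1 hur y i :=
    rep_eq u hs ht hu0 hu1 hur e hVFe hz rfl
  refine ⟨y, ?_, fun i => (hrep i).symm⟩
  have hK : ∑ i ∈ Finset.range (x + y + 1), Rep u hs ht hu0 hu1 hur y i * u (i + 1)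
      = L u hs ht hu0 hu1 hur y := L_eq u hs ht hu0 hu1 hur y (by omega)
  rw [← hK]
  have hcg : ∑ i ∈ Finset.range (x + y + 1), Rep u hs ht hu0 hu1 hur y i * u (i + 1)
      = ∑ i ∈ Finset.range (x + y + 1), d (i + 1) * u (i + 1) :=
    Finset.sum_congr rfl (fun i _ => by rw [← hrep i])
  rw [hcg]
  have hsp := Finset.sum_range_succ' (fun i => d i * u i) (x + y + 1)
  have hvv : Val u d (x + y + 2) = x := rep_val' u hs ht hu0 hu1 hur x (by omega)
  unfold Val at hvv
  rw [show x + y + 2 = (x + y + 1) + 1 from by omega, hsp, h0] at hvv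
  simpa using hvv

lemma evil_step (m : ℕ) : ∃ m', m < m' ∧ Evil s t u m' ∧
    (∀ x, m < x → x < m' → ¬ Evil s t u x) ∧
    L u hs ht hu0 hu1 hur m' + s * m = L u hs ht hu0 hu1 hur m + s * m' + t := by
  obtain ⟨p, c1, c2, c3, cev, cod, c0⟩ := inc u hs ht hu0 hu1 hur m
  by_cases hp : Even p
  · refine ⟨m + 1, by omega, ?_, fun x h1 h2 => absurd h1 (by omega), ?_⟩
    · rw [evil_iff u hs ht hu0 hu1 hur]
      exact Or.inr ⟨p, hp, by rw [c2]; omega, c1⟩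
    · have hms : s * (m + 1) = s * m + s := Nat.mul_succ s m
      have := cev hp
      omega
  · have hp1 : 0 < p := by
      rcases Nat.eq_zero_or_pos p with h | h
      · exact absurd (h ▸ Even.zero) hp
      · exact h
    obtain ⟨p2, d1, d2, d3, dev, dod, d0⟩ := inc u hs ht hu0 hu1 hur (m + 1)
    have hp2 : Even p2 := d0 (c1 0 hp1)
    have hm1odd : ¬ Evil s t u (m + 1) := by
      rw [evil_iff u hs ht hu0 hu1 hur]
      rintro (h | ⟨j, hje, hjnz, hjz⟩)
      · omega
      · have hjp : j = p := by
          rcases Nat.lt_trichotomy j p with h | h | h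
          · exact absurd (c1 j h) hjnz
          · exact h
          · exfalso
            have := hjz p h
            omega
        rw [hjp] at hje
        exact hp hje
    refine ⟨m + 2, by omega, ?_, ?_, ?_⟩
    · rw [evil_iff u hs ht hu0 hu1 hur]
      refine Or.inr ⟨p2, hp2, by rw [show m+2 = m+1+1 from rfl, d2]; omega,
        by rw [show m+2 = m+1+1 from rfl]; exact d1⟩
    · intro x h1 h2
      have : x = m + 1 := by omega
      rw [this]
      exact hm1odd
    · have e1 := cod hp
      have e2 := dev hp2
      rw [show m+2 = m+1+1 from rfl]
      have a1 : s * (m+1+1) = s * (m+1) + s := Nat.mul_succ _ _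
      have a2 : s * (m+1) = s * m + s := Nat.mul_succ _ _
      omega

end
end S16

/-- with `V n` the `n`-th evil number and `W n` obtained from `V n` by
left-shifting its representation, `(V n, W n) = (A n, B n)` for all `n`, where
`A n = mex {A i, B i : i < n}` and `B n = s * A n + t * n`. -/
theorem stmt_16 (s t : ℕ) (hs : 0 < s) (ht : 0 < t) (u : ℕ → ℕ)
    (hu0 : u 0 = 1) (hu1 : u 1 = s + t)
    (hur : ∀ n, u (n + 2) = (s + t - 1) * u (n + 1) + s * u n)
    (V W : ℕ → ℕ) (hVmono : StrictMono V) (hV0 : V 0 = 0)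
    (hVrange : ∀ m, Evil s t u m ↔ ∃ k, V k = m)
    (hW : ∀ k, ∃ d : ℕ →₀ ℕ, ValidRep s t d ∧ RepVal u d = V k ∧
      W k = d.sum fun i c => c * u (i + 1))
    (A B : ℕ → ℕ)
    (hA : ∀ n, A n = sInf {x : ℕ | ∀ i, i < n → x ≠ A i ∧ x ≠ B i})
    (hB : ∀ n, B n = s * A n + t * n) :
    ∀ n, V n = A n ∧ W n = B n := by
  classical
  -- W k is the value of the left shift of the representation of V k
  have hWL : ∀ k, W k = S16.L u hs ht hu0 hu1 hur (V k) := by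
    intro k
    obtain ⟨d, hd, hv, hWk⟩ := hW k
    have hbr := S16.finsupp_rep u hs ht hu0 hu1 hur d hd hv
    obtain ⟨N0, hN0⟩ : ∃ N0, ∀ i, N0 ≤ i → d i = 0 := by
      refine ⟨(d.support.sup id) + 1, fun i hi => ?_⟩
      by_contra h
      have h1 : i ∈ d.support := Finsupp.mem_support_iff.2 h
      have h2 : id i ≤ d.support.sup id := Finset.le_sup h1
      simp only [id] at h2
      omega
    have h1 : d.sum (fun i c => c * u (i + 1))
        = ∑ i ∈ Finset.range (N0 + V k + 1), d i * u (i + 1) := by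
      apply Finsupp.sum_of_support_subset d ?_ _ (fun i _ => by ring)
      intro x hx
      simp only [Finset.mem_range]
      by_contra h
      exact (Finsupp.mem_support_iff.1 hx) (hN0 x (by omega))
    rw [hWk, h1, Finset.sum_congr rfl (fun i _ => by rw [hbr i])]
    exact S16.L_eq u hs ht hu0 hu1 hur (V k) (by omega)
  -- main identity: W k = s * V k + t * k
  have hL1 : ∀ k, W k = s * V k + t * k := by
    intro k
    induction k with
    | zero =>
      rw [hWL 0, hV0, S16.L_zero u hs ht hu0 hu1 hur]
      simp
    | succ k ih =>
      obtain ⟨m', h1, h3, h4, h5⟩ := S16.evil_step u hs ht hu0 hu1 hur (V k)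
      have hvk1 : V (k + 1) = m' := by
        obtain ⟨j, hj⟩ := (hVrange m').1 h3
        have hjk : k < j := by
          by_contra hcon
          push_neg at hcon
          have : V j ≤ V k := hVmono.le_iff_le.2 hcon
          omega
        have h6 : V (k + 1) ≤ V j := hVmono.le_iff_le.2 hjk
        have h7 : V k < V (k + 1) := hVmono (by omega)
        by_contra hne
        refine h4 (V (k + 1)) h7 ?_ ((hVrange (V (k + 1))).2 ⟨k + 1, rfl⟩)
        omega
      rw [← hvk1] at h5
      rw [hWL (k + 1)]
      rw [hWL k] at ih
      have e1 : t * (k + 1) = t * k + t := Nat.mul_succ t k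
      omega
  -- W i is never evil for i ≥ 1
  have hWodd : ∀ i, 1 ≤ i → ¬ Evil s t u (W i) := by
    intro i hi hevil
    have hVi0 : V i ≠ 0 := by
      have h2 : V 0 < V i := hVmono (by omega)
      omega
    have hVievil : Evil s t u (V i) := (hVrange (V i)).2 ⟨i, rfl⟩
    rw [S16.evil_iff u hs ht hu0 hu1 hur] at hVievil
    rcases hVievil with h | ⟨j, hje, hjnz, hjz⟩
    · exact hVi0 h
    have hWi0 : W i ≠ 0 := by
      have := hL1 i
      have h2 : 1 * 1 ≤ t * i := Nat.mul_le_mul ht hi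
      omega
    rw [S16.evil_iff u hs ht hu0 hu1 hur, hWL i] at hevil
    obtain ⟨hsh0, hshS⟩ := S16.rep_L u hs ht hu0 hu1 hur (V i)
    rcases hevil with h | ⟨j', hj'e, hj'nz, hj'z⟩
    · exact hWi0 (by rw [hWL i]; exact h)
    · have hj' : j' = j + 1 := by
        rcases Nat.lt_trichotomy j' (j + 1) with h | h | h
        · exfalso
          rcases j' with _ | jj
          · exact hj'nz hsh0
          · exact hj'nz ((hshS jj).trans (hjz jj (by omega)))
        · exact h
        · exfalso
          exact hjnz (by rw [← hshS j]; exact hj'z (j + 1) h)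
      rw [hj'] at hj'e
      rw [Nat.even_iff] at hje hj'e
      omega
  intro n
  induction n using Nat.strong_induction_on with
  | _ n ih =>
    have hVA : V n = A n := by
      rw [hA n]
      rcases Nat.eq_zero_or_pos n with hn0 | hn0
      · subst hn0
        rw [hV0]
        symm
        apply Nat.sInf_eq_zero.2
        left
        simp only [Set.mem_setOf_eq]
        intro i hi
        exact absurd hi (by omega)
      · have hmem : V n ∈ {x : ℕ | ∀ i, i < n → x ≠ A i ∧ x ≠ B i} := by
          simp only [Set.mem_setOf_eq]
          intro i hi
          obtain ⟨hVi, hWi⟩ := ih i hi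
          constructor
          · rw [← hVi]
            intro hcon
            have := hVmono hi
            omega
          · rw [hB i, ← hVi, ← hL1 i]
            rcases Nat.eq_zero_or_pos i with hi0 | hi0
            · subst hi0
              have h1 : W 0 = 0 := by rw [hL1 0, hV0]; simp
              have h2 : V 0 < V n := hVmono hn0
              rw [h1]
              rw [hV0] at h2
              omega
            · intro hcon
              apply hWodd i hi0
              rw [← hcon]
              exact (hVrange (V n)).2 ⟨n, rfl⟩
        have hleast : ∀ x, x < V n →
            x ∉ {x : ℕ | ∀ i, i < n → x ≠ A i ∧ x ≠ B i} := by
          intro x hx hmem2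
          simp only [Set.mem_setOf_eq] at hmem2
          by_cases hxe : Evil s t u x
          · obtain ⟨k, hk⟩ := (hVrange x).1 hxe
            have hkn : k < n := by
              by_contra hcon
              push_neg at hcon
              have : V n ≤ V k := hVmono.le_iff_le.2 hcon
              omega
            exact (hmem2 k hkn).1 (by rw [← (ih k hkn).1, hk])
          · have hx0 : x ≠ 0 := fun h => hxe (Or.inl h)
            have hx00 : S16.Rep u hs ht hu0 hu1 hur x 0 = 0 := by
              by_contra h
              apply hxe
              rw [S16.evil_iff u hs ht hu0 hu1 hur]
              exact Or.inr ⟨0, Even.zero, h, fun i hi => absurd hi (by omega)⟩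
            obtain ⟨y, hy, hyrep⟩ := S16.unshift u hs ht hu0 hu1 hur x hx00
            obtain ⟨j, hjnz, hjz⟩ := S16.exists_least u hs ht hu0 hu1 hur x hx0
            have hj1 : j ≠ 0 := fun h => hjnz (h ▸ hx00)
            have hjodd : ¬ Even j := by
              intro h
              apply hxe
              rw [S16.evil_iff u hs ht hu0 hu1 hur]
              exact Or.inr ⟨j, h, hjnz, hjz⟩
            have hyevil : Evil s t u y := by
              rw [S16.evil_iff u hs ht hu0 hu1 hur]
              right
              obtain ⟨j0, hj0⟩ : ∃ j0, j = j0 + 1 := ⟨j - 1, by omega⟩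
              refine ⟨j0, ?_, ?_, ?_⟩
              · by_contra h
                exact hjodd (hj0 ▸ Nat.even_add_one.2 h)
              · rw [hyrep j0, ← hj0]
                exact hjnz
              · intro i hi
                rw [hyrep i]
                exact hjz (i + 1) (by omega)
            obtain ⟨k, hk⟩ := (hVrange y).1 hyevil
            have hWk : W k = x := by rw [hWL k, hk, hy]
            have hkn : k < n := by
              by_contra hcon
              push_neg at hcon
              have h1 : V n ≤ V k := hVmono.le_iff_le.2 hcon
              have h2 := hL1 k
              have h3 : V k ≤ s * V k := Nat.le_mul_of_pos_left _ hs
              omega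
            exact (hmem2 k hkn).2
              (by rw [hB k, ← (ih k hkn).1, ← hL1 k, hWk])
        have hne : {x : ℕ | ∀ i, i < n → x ≠ A i ∧ x ≠ B i}.Nonempty := ⟨V n, hmem⟩
        have h1 : sInf {x : ℕ | ∀ i, i < n → x ≠ A i ∧ x ≠ B i} ≤ V n :=
          Nat.sInf_le hmem
        have h2 := Nat.sInf_mem hne
        rcases Nat.lt_or_ge (sInf {x : ℕ | ∀ i, i < n → x ≠ A i ∧ x ≠ B i}) (V n) with h | h
        · exact absurd h2 (hleast _ h)
        · omega
    refine ⟨hVA, ?_⟩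
    rw [hB n, ← hVA, ← hL1 n]
end

section
/- Consider the sequence Q defined for parameters s, t ∈ ℤ⁺ by: Q_n = Q_m if n = t·Q_m + s·m and the value Q_m has occurred exactly once among Q_0, ..., Q_{n−1}; otherwise Q_n = mex{Q_m : 0 ≤ m < n}. If i < j are positions of two consecutive 'second occurrences' (i.e., Q_i is the second/last occurrence of value r' and Q_j is the second/last occurrence of value r'+1), then j − i ≥ s + t ≥ 2. -/
/-- for the sequence `Q` (with `Q n = Q m` if `n = t * Q m + s * m` and the
value `Q m` has occurred exactly once among `Q 0, …, Q (n-1)`; else `Q n = mex {Q m : m < n}`),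
if `i` is the position of the second (last) occurrence of a value `r'` and `j` is the
position of the second (last) occurrence of `r' + 1`, then `j - i ≥ s + t ≥ 2`. -/
theorem stmt_18 (s t : ℕ) (hs : 0 < s) (ht : 0 < t) (Q : ℕ → ℕ)
    (hQrep : ∀ n m, m < n → n = t * Q m + s * m → (∃! j, j < n ∧ Q j = Q m) → Q n = Q m)
    (hQmex : ∀ n, (¬ ∃ m, m < n ∧ n = t * Q m + s * m ∧ (∃! j, j < n ∧ Q j = Q m)) →
      Q n = sInf {x : ℕ | ∀ m, m < n → Q m ≠ x}) :
    ∀ i j r' : ℕ,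
      Q i = r' → (∃ i', i' < i ∧ Q i' = r') →
      Q j = r' + 1 → (∃ j', j' < j ∧ Q j' = r' + 1) →
      i + (s + t) ≤ j ∧ 2 ≤ s + t := by
  intro i j r' hQi hi' hQj hj'
  obtain ⟨i', hi'lt, hQi'⟩ := hi'
  obtain ⟨j', hj'lt, hQj'⟩ := hj'
  -- the mex set is always nonempty, so the mex value differs from all earlier values
  have hmem : ∀ n : ℕ, ∀ k, k < n → Q k ≠ sInf {x : ℕ | ∀ m, m < n → Q m ≠ x} := by
    intro n
    have hne : ((Finset.range n).sup Q + 1) ∈ {x : ℕ | ∀ m, m < n → Q m ≠ x} := by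
      intro m hm heq
      have : Q m ≤ (Finset.range n).sup Q := Finset.le_sup (Finset.mem_range.mpr hm)
      omega
    exact Nat.sInf_mem (⟨_, hne⟩ : Set.Nonempty _)
  -- at i the repeat rule must have applied
  have hi : ∃ m, m < i ∧ i = t * Q m + s * m ∧ (∃! k, k < i ∧ Q k = Q m) := by
    by_contra h
    have hm := hQmex i h
    exact hmem i i' hi'lt (by rw [hQi', ← hQi, hm])
  obtain ⟨m, hmi, hieq, hiun⟩ := hi
  have hQm : Q m = r' := by rw [← hQi]; exact (hQrep i m hmi hieq hiun).symm
  -- at j the repeat rule must have applied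
  have hj : ∃ m, m < j ∧ j = t * Q m + s * m ∧ (∃! k, k < j ∧ Q k = Q m) := by
    by_contra h
    have hm := hQmex j h
    exact hmem j j' hj'lt (by rw [hQj', ← hQj, hm])
  obtain ⟨m₂, hm₂j, hjeq, hjun⟩ := hj
  have hQm₂ : Q m₂ = r' + 1 := by rw [← hQj]; exact (hQrep j m₂ hm₂j hjeq hjun).symm
  -- uniqueness of occurrence of r' below i
  have huniq : ∀ a b, a < i → Q a = r' → b < i → Q b = r' → a = b := by
    intro a b ha hqa hb hqb
    obtain ⟨u, _, hu⟩ := hiun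
    have h1 := hu a ⟨ha, by rw [hqa, hQm]⟩
    have h2 := hu b ⟨hb, by rw [hqb, hQm]⟩
    omega
  -- the repeat rule cannot have applied at m₂ (would duplicate r'+1 below j)
  have hm₂mex : Q m₂ = sInf {x : ℕ | ∀ k, k < m₂ → Q k ≠ x} := by
    apply hQmex
    rintro ⟨k, hkm, hmeq, hkun⟩
    have hk := hQrep m₂ k hkm hmeq hkun
    obtain ⟨u, _, hu⟩ := hjun
    have h1 := hu k ⟨hkm.trans hm₂j, hk.symm⟩
    have h2 := hu m₂ ⟨hm₂j, rfl⟩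
    omega
  -- minimality of the mex at m₂ : r' occurs before m₂
  have hrlt : r' < sInf {x : ℕ | ∀ k, k < m₂ → Q k ≠ x} := by
    rw [← hm₂mex, hQm₂]; omega
  have hnotmem := Nat.notMem_of_lt_sInf hrlt
  simp only [Set.mem_setOf_eq, not_forall] at hnotmem
  obtain ⟨k, hkm₂, hQk⟩ := hnotmem
  push_neg at hQk
  -- hence m < m₂
  have hmm₂ : m < m₂ := by
    rcases lt_trichotomy m m₂ with h | h | h
    · exact h
    · exfalso; rw [← h, hQm] at hQm₂; omega
    · exfalso
      have := huniq k m (lt_trans (hkm₂.trans h) hmi) hQk hmi hQm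
      omega
  -- conclude
  constructor
  · have hsle : s * (m + 1) ≤ s * m₂ := Nat.mul_le_mul_left s hmm₂
    have : j = t * (r' + 1) + s * m₂ := by rw [hjeq, hQm₂]
    have hieq' : i = t * r' + s * m := by rw [hieq, hQm]
    nlinarith [this, hieq']
  · omega
end

section
/- Define Q as above, A'_n = the smallest k with Q_k = n, and B'_n = the largest k with Q_k = n. Then A'_n = A_n and B'_n = B_n for all n ≥ 1, where A_n = mex{A_i, B_i : i < n} and B_n = s·A_n + t·n. -/
/-- with `Q` as in the second class of sequences, `A' n` the smallest
index `k` with `Q k = n` and `B' n` the largest such index, one has `A' n = A n` and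
`B' n = B n` for all `n ≥ 1`, where `A n = mex {A i, B i : i < n}` and
`B n = s * A n + t * n`. -/
theorem stmt_19 (s t : ℕ) (hs : 0 < s) (ht : 0 < t) (Q : ℕ → ℕ)
    (hQrep : ∀ n m, m < n → n = t * Q m + s * m → (∃! j, j < n ∧ Q j = Q m) → Q n = Q m)
    (hQmex : ∀ n, (¬ ∃ m, m < n ∧ n = t * Q m + s * m ∧ (∃! j, j < n ∧ Q j = Q m)) →
      Q n = sInf {x : ℕ | ∀ m, m < n → Q m ≠ x})
    (A' B' : ℕ → ℕ)
    (hA' : ∀ n, Q (A' n) = n ∧ ∀ k, Q k = n → A' n ≤ k)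
    (hB' : ∀ n, Q (B' n) = n ∧ ∀ k, Q k = n → k ≤ B' n)
    (A B : ℕ → ℕ)
    (hA : ∀ n, A n = sInf {x : ℕ | ∀ i, i < n → x ≠ A i ∧ x ≠ B i})
    (hB : ∀ n, B n = s * A n + t * n) :
    ∀ n, 1 ≤ n → A' n = A n ∧ B' n = B n := by
  -- the defining sets for A are nonempty
  have hSne : ∀ n, {x : ℕ | ∀ i, i < n → x ≠ A i ∧ x ≠ B i}.Nonempty := by
    intro n
    refine ⟨(Finset.range n).sup (fun i => max (A i) (B i)) + 1, ?_⟩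
    intro i hi
    have h1 : max (A i) (B i) ≤ (Finset.range n).sup (fun i => max (A i) (B i)) :=
      Finset.le_sup (f := fun i => max (A i) (B i)) (Finset.mem_range.2 hi)
    have h2 : A i ≤ (Finset.range n).sup (fun i => max (A i) (B i)) :=
      le_trans (le_max_left _ _) h1
    have h3 : B i ≤ (Finset.range n).sup (fun i => max (A i) (B i)) :=
      le_trans (le_max_right _ _) h1
    omega
  have hAmem : ∀ n, ∀ i, i < n → A n ≠ A i ∧ A n ≠ B i := by
    intro n
    have := Nat.sInf_mem (hSne n)
    rw [← hA n] at this
    exact this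
  have hAle : ∀ n x, (∀ i, i < n → x ≠ A i ∧ x ≠ B i) → A n ≤ x := by
    intro n x hx
    rw [hA n]
    exact Nat.sInf_le hx
  have hA0 : A 0 = 0 :=
    le_antisymm (hAle 0 0 (fun i hi => absurd hi (Nat.not_lt_zero i))) (Nat.zero_le _)
  have hB0 : B 0 = 0 := by rw [hB, hA0]; ring
  have hAmono : ∀ m n, m < n → A m < A n := by
    intro m n h
    have h1 : A m ≤ A n := hAle m (A n) (fun i hi => hAmem n i (hi.trans h))
    have h2 := (hAmem n m h).1
    omega
  have hAn_ge : ∀ n, n ≤ A n := by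
    intro n
    induction n with
    | zero => omega
    | succ n ih => have := hAmono n (n + 1) (by omega); omega
  have hAB : ∀ n, A n ≤ B n := by
    intro n
    have h1 : A n ≤ s * A n := Nat.le_mul_of_pos_left _ hs
    rw [hB]
    omega
  have hALB : ∀ n, 1 ≤ n → A n < B n := by
    intro n hn
    have h1 : A n ≤ s * A n := Nat.le_mul_of_pos_left _ hs
    have h2 : 1 ≤ t * n := Nat.mul_pos ht hn
    rw [hB]
    omega
  have hA_ne_B : ∀ n j, 1 ≤ j → A n ≠ B j := by
    intro n j hj
    rcases Nat.lt_or_ge j n with h | h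
    · exact (hAmem n j h).2
    · have h1 : A n ≤ A j := by
        rcases Nat.eq_or_lt_of_le h with h' | h'
        · rw [h']
        · exact (hAmono n j h').le
      have h2 := hALB j hj
      omega
  have cover : ∀ k, ∃ j, k = A j ∨ k = B j := by
    intro k
    by_contra h
    push_neg at h
    have h1 : A (k + 1) ≤ k := hAle (k + 1) k (fun i _ => h i)
    have := hAn_ge (k + 1)
    omega
  -- main claim: Q k = j whenever k = A j or k = B j
  have main : ∀ k j, (k = A j ∨ k = B j) → Q k = j := by
    intro k
    induction k using Nat.strong_induction_on with
    | _ k IH =>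
    have hval : ∀ m, m < k → ∀ x, Q m = x → (m = A x ∨ m = B x) := by
      intro m hm x hx
      obtain ⟨j, hj⟩ := cover m
      have h1 : Q m = j := IH m hm j hj
      have h2 : x = j := by omega
      rw [h2]; exact hj
    intro j hj
    rcases hj with hj | hj
    · -- k = A j : the mex rule applies
      have hno : ¬ ∃ m, m < k ∧ k = t * Q m + s * m ∧ (∃! i, i < k ∧ Q i = Q m) := by
        rintro ⟨m, hm, hk, huniq⟩
        obtain ⟨i0, hi0⟩ := cover m
        have hQm : Q m = i0 := IH m hm i0 hi0
        have hAi0_le : A i0 ≤ m := by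
          rcases hi0 with h | h
          · omega
          · have := hAB i0; omega
        have hAi0k : A i0 < k := lt_of_le_of_lt hAi0_le hm
        have hQA : Q (A i0) = i0 := IH (A i0) hAi0k i0 (Or.inl rfl)
        have hm_eq : m = A i0 := by
          obtain ⟨w, hw, huni⟩ := huniq
          have h1 := huni m ⟨hm, rfl⟩
          have h2 := huni (A i0) ⟨hAi0k, by rw [hQA, hQm]⟩
          omega
        have hkB : k = B i0 := by
          rw [hB, hk, hQm, hm_eq]; ring
        rcases Nat.eq_zero_or_pos i0 with h0 | h0
        · rw [h0, hB0] at hkB; omega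
        · exact hA_ne_B j i0 h0 (by rw [← hj, ← hkB])
      have hmex := hQmex k hno
      have hjmem : ∀ m, m < k → Q m ≠ j := by
        intro m hm hQm
        rcases hval m hm j hQm with h | h
        · omega
        · have := hAB j; omega
      have hlt : ∀ x, x < j → ∃ m, m < k ∧ Q m = x := by
        intro x hx
        have hAx : A x < k := by rw [hj]; exact hAmono x j hx
        exact ⟨A x, hAx, IH (A x) hAx x (Or.inl rfl)⟩
      rw [hmex]
      have h1 : j ∈ {x : ℕ | ∀ m, m < k → Q m ≠ x} := hjmem
      refine le_antisymm (Nat.sInf_le h1) (le_csInf ⟨j, h1⟩ ?_)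
      intro x hx
      by_contra hc
      push_neg at hc
      obtain ⟨m, hm, hQm⟩ := hlt x hc
      exact hx m hm hQm
    · -- k = B j
      rcases Nat.eq_zero_or_pos j with h0 | h0
      · rw [h0, hB0] at hj
        rw [h0]
        have hmex := hQmex k (by rintro ⟨m, hm, _⟩; omega)
        rw [hmex]
        have hmem : (0 : ℕ) ∈ {x : ℕ | ∀ m, m < k → Q m ≠ x} := by
          intro m hm; omega
        exact le_antisymm (Nat.sInf_le hmem) (Nat.zero_le _)
      · have hAk : A j < k := by rw [hj]; exact hALB j h0
        have hQA : Q (A j) = j := IH (A j) hAk j (Or.inl rfl)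
        have heq : k = t * Q (A j) + s * (A j) := by
          rw [hQA, hj, hB]; ring
        have huniq : ∃! i, i < k ∧ Q i = Q (A j) := by
          refine ⟨A j, ⟨hAk, rfl⟩, ?_⟩
          rintro i ⟨hik, hQi⟩
          rcases hval i hik j (by rw [hQi, hQA]) with h | h
          · exact h
          · omega
        have := hQrep k (A j) hAk heq huniq
        rw [this, hQA]
  -- conclude
  intro n hn
  have hQAn : Q (A n) = n := main (A n) n (Or.inl rfl)
  have hQBn : Q (B n) = n := main (B n) n (Or.inr rfl)
  have hlt := hALB n hn
  constructor
  · have h1 : A' n ≤ A n := (hA' n).2 (A n) hQAn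
    obtain ⟨j, hj⟩ := cover (A' n)
    have h2 : Q (A' n) = n := (hA' n).1
    have h3 : Q (A' n) = j := main (A' n) j hj
    have hjn : j = n := by omega
    rw [hjn] at hj
    rcases hj with h | h
    · exact h
    · omega
  · have h1 : B n ≤ B' n := (hB' n).2 (B n) hQBn
    obtain ⟨j, hj⟩ := cover (B' n)
    have h2 : Q (B' n) = n := (hB' n).1
    have h3 : Q (B' n) = j := main (B' n) j hj
    have hjn : j = n := by omega
    rw [hjn] at hj
    rcases hj with h | h
    · omega
    · exact h
end
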